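/- arXiv:2501.15170 — 12 statements merged into one kernel-verified Lean document; each statement's English description precedes it below -/
import Mathlib

section
/- There does not exist an integer n > 1 together with a choice of residues a_d (one for each divisor d > 1 of n) such that the congruence set {a_d mod d : d | n, d > 1} is simultaneously a covering system (every integer satisfies at least one of the congruences) and coprime disjoint (whenever some integer satisfies both a_d mod d and a_{d'} mod d' for distinct divisors d ≠ d', we have gcd(d, d') = 1). -/
set_option maxHeartbeats 2000000

private lemma overlap_exists {d e : ℕ} {b1 b2 : ℤ}
    (h : b1 ≡ b2 [ZMOD (Nat.gcd d e : ℤ)]) :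
    ∃ x : ℤ, x ≡ b1 [ZMOD (d : ℤ)] ∧ x ≡ b2 [ZMOD (e : ℤ)] := by
  obtain ⟨t, ht⟩ := Int.modEq_iff_dvd.mp h
  have hg : (Nat.gcd d e : ℤ) = d * Int.gcdA d e + e * Int.gcdB d e := by
    rw [← Int.gcd_natCast_natCast]; exact Int.gcd_eq_gcd_ab d e
  refine ⟨b1 + (d : ℤ) * Int.gcdA d e * t, ?_, ?_⟩
  · exact Int.modEq_iff_dvd.mpr ⟨-(Int.gcdA d e * t), by ring⟩
  · refine Int.modEq_iff_dvd.mpr ⟨Int.gcdB d e * t, ?_⟩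
    have : b2 - b1 = (d * Int.gcdA d e + e * Int.gcdB d e) * t := by rw [← hg]; exact ht
    linarith [this]

private lemma crt_combine {d e : ℕ} (h : Nat.Coprime d e) (b1 b2 : ℤ) :
    ∃ c : ℤ, ∀ x : ℤ,
      ((x ≡ b1 [ZMOD (d : ℤ)]) ∧ (x ≡ b2 [ZMOD (e : ℤ)])) ↔ x ≡ c [ZMOD ((d * e : ℕ) : ℤ)] := by
  obtain ⟨c, hc1, hc2⟩ := overlap_exists (d := d) (e := e) (b1 := b1) (b2 := b2)
    (by rw [h]; exact_mod_cast Int.modEq_one)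
  have hcop : IsCoprime (d : ℤ) (e : ℤ) := by
    rw [Int.isCoprime_iff_gcd_eq_one, Int.gcd_natCast_natCast]; exact h
  refine ⟨c, fun x => ⟨fun ⟨h1, h2⟩ => ?_, fun hx => ?_⟩⟩
  · have hd : (d : ℤ) ∣ c - x := Int.modEq_iff_dvd.mp (h1.trans hc1.symm)
    have he : (e : ℤ) ∣ c - x := Int.modEq_iff_dvd.mp (h2.trans hc2.symm)
    have := hcop.mul_dvd hd he
    push_cast
    exact Int.modEq_iff_dvd.mpr this
  · have hx' : x ≡ c [ZMOD ((d : ℤ) * e)] := by push_cast at hx; exact hx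
    exact ⟨(hx'.of_dvd (dvd_mul_right _ _)).trans hc1,
           (hx'.of_dvd (dvd_mul_left _ _)).trans hc2⟩

private lemma count_ap {n t : ℕ} (ht : t ∣ n) (ht0 : 0 < t) (c : ℤ) :
    ((Finset.Ico (0:ℤ) (n:ℤ)).filter (fun x => x ≡ c [ZMOD (t:ℤ)])).card = n / t := by
  have htZ : (0:ℤ) < t := by exact_mod_cast ht0
  have htne : (t:ℤ) ≠ 0 := ne_of_gt htZ
  have hnt : (t : ℤ) * ((n / t : ℕ) : ℤ) = (n : ℤ) := by
    exact_mod_cast Nat.mul_div_cancel' ht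
  set r : ℤ := c % t with hr
  have hr0 : 0 ≤ r := Int.emod_nonneg c htne
  have hrt : r < t := Int.emod_lt_of_pos c htZ
  have key : ((Finset.Ico (0:ℤ) (n:ℤ)).filter (fun x => x ≡ c [ZMOD (t:ℤ)])).card
      = (Finset.Ico (0:ℤ) ((n / t : ℕ) : ℤ)).card := by
    apply Finset.card_nbij' (fun x => x / (t:ℤ)) (fun y : ℤ => r + (t:ℤ) * y)
    · intro x hx
      simp only [Finset.mem_coe, Finset.mem_filter, Finset.mem_Ico] at hx
      obtain ⟨⟨hx0, hxn⟩, hxc⟩ := hx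
      simp only [Finset.mem_coe, Finset.mem_Ico]
      constructor
      · exact Int.ediv_nonneg hx0 (le_of_lt htZ)
      · rw [Int.ediv_lt_iff_lt_mul htZ]
        calc x < (n:ℤ) := hxn
        _ = ((n / t : ℕ) : ℤ) * t := by rw [mul_comm] at hnt; exact hnt.symm
    · intro y hy
      simp only [Finset.mem_coe, Finset.mem_Ico] at hy
      obtain ⟨hy0, hyn⟩ := hy
      simp only [Finset.mem_coe, Finset.mem_filter, Finset.mem_Ico]
      refine ⟨⟨by positivity, ?_⟩, ?_⟩
      · calc r + t * y < t + t * y := by linarith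
        _ = t * (y + 1) := by ring
        _ ≤ t * ((n / t : ℕ) : ℤ) := by
            apply mul_le_mul_of_nonneg_left _ (le_of_lt htZ); omega
        _ = (n : ℤ) := hnt
      · show (r + t * y) % t = c % t
        rw [Int.add_mul_emod_self_left, hr, Int.emod_emod_of_dvd c dvd_rfl]
    · intro x hx
      simp only [Finset.mem_coe, Finset.mem_filter, Finset.mem_Ico] at hx
      obtain ⟨⟨hx0, hxn⟩, hxc⟩ := hx
      have hxr : x % (t:ℤ) = r := by rw [hr]; exact hxc
      calc r + (t:ℤ) * (x / (t:ℤ)) = x % (t:ℤ) + (t:ℤ) * (x / (t:ℤ)) := by rw [hxr]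
      _ = x := by rw [add_comm]; exact Int.mul_ediv_add_emod x t
    · intro y hy
      dsimp only
      rw [Int.add_mul_ediv_left _ _ htne, Int.ediv_eq_zero_of_lt hr0 hrt]
      ring
  rw [key, Int.card_Ico, sub_zero, Int.toNat_natCast]

private lemma mygeom_eq {p : ℕ} (hp : 2 ≤ p) (k : ℕ) :
    ((p:ℚ) - 1) * ∑ j ∈ Finset.Icc 1 k, ((1:ℚ)/(p:ℚ)^j) = 1 - 1/(p:ℚ)^k := by
  have hp0 : (p:ℚ) ≠ 0 := by positivity
  induction k with
  | zero => simp
  | succ k ih =>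
    rw [Finset.sum_Icc_succ_top (by omega), mul_add, ih]
    have hpk : (p:ℚ)^k ≠ 0 := by positivity
    field_simp
    ring

private lemma geom_sum_nonneg {p : ℕ} (k : ℕ) :
    0 ≤ ∑ j ∈ Finset.Icc 1 k, ((1:ℚ)/(p:ℚ)^j) := by
  apply Finset.sum_nonneg; intro i _; positivity

private lemma my_geom_sum_lt {p : ℕ} (hp : 2 ≤ p) (k : ℕ) :
    ∑ j ∈ Finset.Icc 1 k, ((1:ℚ)/(p:ℚ)^j) < 1/((p:ℚ) - 1) := by
  have h1 : (0:ℚ) < (p:ℚ) - 1 := by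
    have : (2:ℚ) ≤ p := by exact_mod_cast hp
    linarith
  rw [lt_div_iff₀ h1, mul_comm, mygeom_eq hp]
  have : 0 < 1/(p:ℚ)^k := by positivity
  linarith

private lemma SQ_eq_sigma {t : ℕ} (ht : t ≠ 0) :
    ∑ d ∈ t.divisors, (1:ℚ)/d = ((ArithmeticFunction.sigma 1) t : ℚ) / t := by
  have h1 : ∑ d ∈ t.divisors, (1:ℚ)/d = ∑ d ∈ t.divisors, (1:ℚ)/((t/d : ℕ) : ℚ) :=
    (Nat.sum_div_divisors t (fun d => (1:ℚ)/d)).symm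
  rw [h1, ArithmeticFunction.sigma_apply]
  push_cast
  rw [Finset.sum_div]
  apply Finset.sum_congr rfl
  intro d hd
  have hdvd : d ∣ t := (Nat.mem_divisors.mp hd).1
  have : ((t/d : ℕ) : ℚ) = (t:ℚ)/(d:ℚ) := by
    rw [Nat.cast_div_charZero hdvd]
  rw [this, pow_one, one_div_div]

private lemma SQ_pos {t : ℕ} (ht : t ≠ 0) : (1:ℚ) ≤ ∑ d ∈ t.divisors, (1:ℚ)/d := by
  have h1 : (1:ℕ) ∈ t.divisors := Nat.one_mem_divisors.mpr ht
  have h2 := Finset.single_le_sum (f := fun d : ℕ => (1:ℚ)/(d:ℚ))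
    (fun i _ => by positivity) h1
  simpa using h2

private lemma SQ_mul {u v : ℕ} (h : Nat.Coprime u v) (hu : u ≠ 0) (hv : v ≠ 0) :
    ∑ d ∈ (u*v).divisors, (1:ℚ)/d
      = (∑ d ∈ u.divisors, (1:ℚ)/d) * (∑ d ∈ v.divisors, (1:ℚ)/d) := by
  rw [SQ_eq_sigma (Nat.mul_ne_zero hu hv), SQ_eq_sigma hu, SQ_eq_sigma hv,
    ArithmeticFunction.isMultiplicative_sigma.map_mul_of_coprime h]
  push_cast
  exact (div_mul_div_comm _ _ _ _).symm

private lemma SQ_prime_pow {q : ℕ} (hq : q.Prime) (b : ℕ) :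
    ∑ d ∈ (q^b).divisors, (1:ℚ)/d = 1 + ∑ j ∈ Finset.Icc 1 b, (1:ℚ)/(q:ℚ)^j := by
  rw [Nat.divisors_prime_pow hq, Finset.sum_map]
  have hrange : Finset.range (b+1) = insert 0 (Finset.Icc 1 b) := by
    ext x; simp [Finset.mem_range, Finset.mem_Icc]; omega
  simp only [Function.Embedding.coeFn_mk]
  rw [hrange, Finset.sum_insert (by simp)]
  push_cast
  norm_num

private lemma SQ_prime_pow_lt {q : ℕ} (hq : q.Prime) (b : ℕ) :
    ∑ d ∈ (q^b).divisors, (1:ℚ)/d < (q:ℚ)/((q:ℚ)-1) := by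
  rw [SQ_prime_pow hq b]
  have h2 : 2 ≤ q := hq.two_le
  have h1 : (0:ℚ) < (q:ℚ) - 1 := by
    have : (2:ℚ) ≤ q := by exact_mod_cast h2
    linarith
  have h3 := my_geom_sum_lt h2 b
  have hq1 : (q:ℚ)/((q:ℚ)-1) = 1 + 1/((q:ℚ)-1) := by
    field_simp
    ring
  rw [hq1]
  linarith

private lemma SQ_factorization {m : ℕ} (hm : m ≠ 0) :
    ∑ d ∈ m.divisors, (1:ℚ)/d
      = ∏ q ∈ m.primeFactors, ∑ d ∈ (q ^ m.factorization q).divisors, (1:ℚ)/d := by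
  have hσ := ArithmeticFunction.isMultiplicative_sigma (k := 1)
    |>.multiplicative_factorization _ hm
  have hmeq : (∏ q ∈ m.primeFactors, q ^ m.factorization q : ℕ) = m := by
    rw [← Nat.support_factorization, ← Finsupp.prod]
    exact Nat.factorization_prod_pow_eq_self hm
  rw [SQ_eq_sigma hm, hσ, Finsupp.prod, Nat.support_factorization]
  have hden : (m:ℚ) = ∏ q ∈ m.primeFactors, ((q:ℚ)^(m.factorization q)) := by
    conv_lhs => rw [← hmeq]
    push_cast; rfl
  rw [hden]
  push_cast
  rw [← Finset.prod_div_distrib]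
  apply Finset.prod_congr rfl
  intro q hq
  have hqp : q.Prime := Nat.prime_of_mem_primeFactors hq
  have hne : (q ^ m.factorization q : ℕ) ≠ 0 := pow_ne_zero _ hqp.pos.ne'
  rw [SQ_eq_sigma hne]
  push_cast
  rfl

private lemma ratio_mono {q t : ℕ} (ht : 2 ≤ t) (h : t ≤ q) :
    (q:ℚ)/((q:ℚ)-1) ≤ (t:ℚ)/((t:ℚ)-1) := by
  have htQ : (2:ℚ) ≤ (t:ℚ) := by exact_mod_cast ht
  have hqQ : (t:ℚ) ≤ (q:ℚ) := by exact_mod_cast h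
  have h1 : (0:ℚ) < (t:ℚ) - 1 := by linarith
  have h2 : (0:ℚ) < (q:ℚ) - 1 := by linarith
  rw [div_le_div_iff₀ h2 h1]
  nlinarith

private lemma ratio_pos {q : ℕ} (hq : 2 ≤ q) : 0 < (q:ℚ)/((q:ℚ)-1) := by
  have : (2:ℚ) ≤ (q:ℚ) := by exact_mod_cast hq
  have h1 : (0:ℚ) < (q:ℚ) - 1 := by linarith
  positivity

/-- s distinct odd numbers, all ≥ c+2 : ∏ (q/(q-1))² ≤ (c+2s)/c -/
private lemma odd_prod_sq : ∀ (s : ℕ) (c : ℕ) (S : Finset ℕ), S.card = s → 1 ≤ c →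
    (∀ q ∈ S, Odd q ∧ c + 2 ≤ q) →
    ∏ q ∈ S, ((q:ℚ)/((q:ℚ)-1))^2 ≤ ((c:ℚ) + 2*s)/c := by
  intro s
  induction s with
  | zero =>
    intro c S hcard hc hS
    rw [Finset.card_eq_zero.mp hcard]
    simp
    rw [div_self (by positivity)]
  | succ s ih =>
    intro c S hcard hc hS
    have hne : S.Nonempty := Finset.card_pos.mp (by omega)
    obtain ⟨q0, hq0S, hq0min⟩ : ∃ q0 ∈ S, ∀ q ∈ S, q0 ≤ q :=
      ⟨S.min' hne, S.min'_mem hne, fun q hq => S.min'_le q hq⟩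
    obtain ⟨hq0odd, hq0ge⟩ := hS q0 hq0S
    have hq02 : 2 ≤ q0 := by omega
    have hrest : ∀ q ∈ S.erase q0, Odd q ∧ (c + 2) + 2 ≤ q := by
      intro q hqe
      have hqS : q ∈ S := Finset.mem_of_mem_erase hqe
      obtain ⟨hodd, _⟩ := hS q hqS
      have hne' : q ≠ q0 := Finset.ne_of_mem_erase hqe
      have hge : q0 ≤ q := hq0min q hqS
      refine ⟨hodd, ?_⟩
      rcases hq0odd with ⟨i, hi⟩
      rcases hodd with ⟨j, hj⟩
      omega
    have hcard' : (S.erase q0).card = s := by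
      rw [Finset.card_erase_of_mem hq0S, hcard]
      omega
    have ihr := ih (c + 2) (S.erase q0) hcard' (by omega) hrest
    push_cast at ihr
    rw [← Finset.prod_erase_mul S _ hq0S]
    have hc1 : (1:ℚ) ≤ (c:ℚ) := by exact_mod_cast hc
    have hfac : ((q0:ℚ)/((q0:ℚ)-1))^2 ≤ ((c:ℚ)+2)/c := by
      have hq0Q : (c:ℚ) + 2 ≤ (q0:ℚ) := by exact_mod_cast hq0ge
      have h1 : (0:ℚ) < (q0:ℚ) - 1 := by linarith
      have step1 : (q0:ℚ)/((q0:ℚ)-1) ≤ ((c:ℚ)+2)/((c:ℚ)+1) := by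
        have h := ratio_mono (q := q0) (t := c + 2) (by omega) hq0ge
        convert h using 2 <;> push_cast <;> ring
      have step2 : (((c:ℚ)+2)/((c:ℚ)+1))^2 ≤ ((c:ℚ)+2)/c := by
        rw [div_pow, div_le_div_iff₀ (by positivity) (by positivity)]
        nlinarith
      calc ((q0:ℚ)/((q0:ℚ)-1))^2 ≤ (((c:ℚ)+2)/((c:ℚ)+1))^2 := by
            apply pow_le_pow_left₀ (by positivity) step1
      _ ≤ ((c:ℚ)+2)/c := step2
    have hprod_nonneg : 0 ≤ ∏ q ∈ S.erase q0, ((q:ℚ)/((q:ℚ)-1))^2 :=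
      Finset.prod_nonneg (fun q hqe => by positivity)
    have hfac_nonneg : (0:ℚ) ≤ ((q0:ℚ)/((q0:ℚ)-1))^2 := by positivity
    calc (∏ q ∈ S.erase q0, ((q:ℚ)/((q:ℚ)-1))^2) * ((q0:ℚ)/((q0:ℚ)-1))^2
        ≤ (((c:ℚ)+2+2*s)/((c:ℚ)+2)) * (((c:ℚ)+2)/c) := by
          apply mul_le_mul ihr hfac hfac_nonneg (by positivity)
    _ = ((c:ℚ) + 2*((s:ℚ)+1))/c := by
          have h2 : ((c:ℚ)+2) ≠ 0 := by positivity
          have h0 : (c:ℚ) ≠ 0 := by positivity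
          field_simp
          ring
    _ = ((c:ℚ) + 2*((s+1 : ℕ) : ℚ))/c := by push_cast; ring


/-- **No CD covering `n` exists.** There is no integer `n > 1` together with residues
`a d` (one for each divisor `d > 1` of `n`) such that the congruence set
`{a d mod d : d ∣ n, d > 1}` is both a covering system (every integer satisfies one
of the congruences) and coprime disjoint (whenever some integer satisfies both
`a d mod d` and `a d' mod d'` for distinct divisors `d ≠ d'`, we have `gcd(d, d') = 1`). -/
theorem no_CD_covering :
    ¬ ∃ (n : ℕ) (a : ℕ → ℤ), 1 < n ∧
      (∀ x : ℤ, ∃ d : ℕ, d ∣ n ∧ 1 < d ∧ x ≡ a d [ZMOD (d : ℤ)]) ∧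
      (∀ d d' : ℕ, d ∣ n → d' ∣ n → 1 < d → 1 < d' → d ≠ d' →
        (∃ x : ℤ, x ≡ a d [ZMOD (d : ℤ)] ∧ x ≡ a d' [ZMOD (d' : ℤ)]) →
        Nat.gcd d d' = 1) := by
  rintro ⟨n, a, hn, hcov, hcd⟩
  have hn0 : n ≠ 0 := by omega
  set p := n.minFac with hpdef
  have hp : p.Prime := Nat.minFac_prime (by omega)
  have hpdvd : p ∣ n := Nat.minFac_dvd n
  set k := n.factorization p with hkdef
  have hk1 : 1 ≤ k := hp.factorization_pos_of_dvd hn0 hpdvd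
  set m := n / p ^ k with hmdef
  have hpkm : p ^ k * m = n := Nat.ordProj_mul_ordCompl_eq_self n p
  have hcop : Nat.Coprime p m := Nat.coprime_ordCompl hp hn0
  have hm0 : m ≠ 0 := by
    intro h; rw [h, mul_zero] at hpkm; exact hn0 hpkm.symm
  have hmdvd : m ∣ n := Nat.ordCompl_dvd n p
  have hppos : 2 ≤ p := hp.two_le
  -- key: no two distinct non-coprime divisors can agree mod their gcd
  have key : ∀ d d' : ℕ, d ∣ n → d' ∣ n → 1 < d → 1 < d' → d ≠ d' → Nat.gcd d d' ≠ 1 →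
      ¬ (a d ≡ a d' [ZMOD (Nat.gcd d d' : ℤ)]) := by
    intro d d' hd hd' hd1 hd1' hne hg hcong
    exact hg (hcd d d' hd hd' hd1 hd1' hne (overlap_exists hcong))
  -- prime factors of m
  have hpfm : m.primeFactors = n.primeFactors.erase p := by
    ext q
    simp only [Finset.mem_erase, Nat.mem_primeFactors]
    constructor
    · rintro ⟨hq, hqm, -⟩
      refine ⟨?_, hq, dvd_trans hqm hmdvd, hn0⟩
      rintro rfl
      have h1 : p ∣ Nat.gcd p m := Nat.dvd_gcd dvd_rfl hqm
      rw [hcop] at h1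
      exact hp.one_lt.ne' (Nat.dvd_one.mp h1)
    · rintro ⟨hqp, hq, hqn, -⟩
      refine ⟨hq, ?_, hm0⟩
      have hcop' : Nat.Coprime q (p ^ k) :=
        (Nat.coprime_primes hq hp |>.mpr hqp).pow_right k
      exact hcop'.dvd_of_dvd_mul_left (hpkm ▸ hqn)
  -- ====== Clique lemma 1 : number of distinct primes is at most p ======
  haveI : NeZero p := ⟨hp.pos.ne'⟩
  have homega : n.primeFactors.card ≤ p := by
    by_contra hlt
    push_neg at hlt
    have hpmem : p ∈ n.primeFactors := Nat.mem_primeFactors.mpr ⟨hp, hpdvd, hn0⟩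
    have hcardge : p ≤ (n.primeFactors.erase p).card := by
      rw [Finset.card_erase_of_mem hpmem]; omega
    obtain ⟨Q, hQsub, hQcard⟩ := Finset.exists_subset_card_eq hcardge
    have hqfacts : ∀ q ∈ Q, q.Prime ∧ q ∣ n ∧ q ≠ p := by
      intro q hq
      have h2 := hQsub hq
      exact ⟨Nat.prime_of_mem_primeFactors (Finset.mem_of_mem_erase h2),
             Nat.dvd_of_mem_primeFactors (Finset.mem_of_mem_erase h2),
             Finset.ne_of_mem_erase h2⟩
    set C : Finset ℕ := insert p (Q.image (fun q => p * q)) with hC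
    have hmemC : ∀ d ∈ C, d ∣ n ∧ 1 < d := by
      intro d hd
      rw [hC, Finset.mem_insert] at hd
      rcases hd with rfl | hd
      · exact ⟨hpdvd, hp.one_lt⟩
      · obtain ⟨q, hq, rfl⟩ := Finset.mem_image.mp hd
        obtain ⟨hq1, hq2, hq3⟩ := hqfacts q hq
        refine ⟨?_, ?_⟩
        · exact Nat.Coprime.mul_dvd_of_dvd_of_dvd
            ((Nat.coprime_primes hp hq1).mpr (Ne.symm hq3)) hpdvd hq2
        · have := hq1.two_le; nlinarith [hp.two_le]
    have hgcdC : ∀ d ∈ C, ∀ d' ∈ C, d ≠ d' → Nat.gcd d d' = p := by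
      intro d hd d' hd' hne
      rw [hC, Finset.mem_insert] at hd hd'
      rcases hd with rfl | hd <;> rcases hd' with rfl | hd'
      · exact absurd rfl hne
      · obtain ⟨q, hq, rfl⟩ := Finset.mem_image.mp hd'
        exact Nat.gcd_eq_left (dvd_mul_right p q)
      · obtain ⟨q, hq, rfl⟩ := Finset.mem_image.mp hd
        rw [Nat.gcd_comm]
        exact Nat.gcd_eq_left (dvd_mul_right p q)
      · obtain ⟨q, hq, rfl⟩ := Finset.mem_image.mp hd
        obtain ⟨q', hq', rfl⟩ := Finset.mem_image.mp hd'
        have hqq' : q ≠ q' := by rintro rfl; exact hne rfl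
        rw [Nat.gcd_mul_left]
        rw [(Nat.coprime_primes (hqfacts q hq).1 (hqfacts q' hq').1).mpr hqq']
        exact mul_one p
    have hinj : Set.InjOn (fun d => ((a d : ℤ) : ZMod p)) ↑C := by
      intro d hd d' hd' heq
      by_contra hne
      have hcong : a d ≡ a d' [ZMOD ((p:ℕ) : ℤ)] :=
        (ZMod.intCast_eq_intCast_iff _ _ _).mp heq
      have hg := hgcdC d (Finset.mem_coe.mp hd) d' (Finset.mem_coe.mp hd') hne
      refine key d d' (hmemC d (Finset.mem_coe.mp hd)).1 (hmemC d' (Finset.mem_coe.mp hd')).1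
        (hmemC d (Finset.mem_coe.mp hd)).2 (hmemC d' (Finset.mem_coe.mp hd')).2 hne
        (by rw [hg]; exact hp.one_lt.ne') ?_
      rw [hg]
      exact hcong
    have hcardC : C.card = p + 1 := by
      rw [hC, Finset.card_insert_of_notMem, Finset.card_image_of_injective _
        (fun x y hxy => Nat.eq_of_mul_eq_mul_left hp.pos hxy), hQcard]
      intro hmem
      obtain ⟨q, hq, hpq⟩ := Finset.mem_image.mp hmem
      have := (hqfacts q hq).1.two_le
      nlinarith [hp.two_le]
    have hle := Finset.card_le_card_of_injOn _ (fun d _ => Finset.mem_univ _) hinj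
    rw [hcardC, Finset.card_univ, ZMod.card] at hle
    omega
  -- ====== Clique lemma 2 : if p = 2 and n has ≥ 2 primes then k = 1 ======
  have hk2 : p = 2 → 2 ≤ n.primeFactors.card → k = 1 := by
    intro hp2 hcard2
    by_contra hk
    have hk2' : 2 ≤ k := by omega
    have h4 : (4:ℕ) ∣ n := by
      have : (2:ℕ)^2 ∣ p^k := by rw [hp2]; exact pow_dvd_pow 2 hk2'
      exact dvd_trans (by norm_num at this ⊢; exact this) (Dvd.intro m hpkm)
    have hpmem : p ∈ n.primeFactors := Nat.mem_primeFactors.mpr ⟨hp, hpdvd, hn0⟩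
    have : (n.primeFactors.erase p).Nonempty := by
      rw [← Finset.card_pos, Finset.card_erase_of_mem hpmem]; omega
    obtain ⟨q, hq⟩ := this
    have hqp : q.Prime := Nat.prime_of_mem_primeFactors (Finset.mem_of_mem_erase hq)
    have hqn : q ∣ n := Nat.dvd_of_mem_primeFactors (Finset.mem_of_mem_erase hq)
    have hqne : q ≠ p := Finset.ne_of_mem_erase hq
    have hq2 : q ≠ 2 := by rw [← hp2]; exact hqne
    have hq3 : 3 ≤ q := by
      have := hqp.two_le; omega
    have hcq : Nat.Coprime 2 q := (Nat.coprime_primes Nat.prime_two hqp).mpr (fun h => hq2 h.symm)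
    have h2q : (2 * q) ∣ n := hcq.mul_dvd_of_dvd_of_dvd (hp2 ▸ hpdvd) hqn
    -- the three divisors 2, 4, 2q have pairwise gcd 2
    have key2 : ∀ d d' : ℕ, d ∣ n → d' ∣ n → 1 < d → 1 < d' → d ≠ d' → Nat.gcd d d' = 2 →
        ¬ ((a d : ZMod 2) = (a d' : ZMod 2)) := by
      intro d d' h1 h2 h3 h4 h5 h6 heq
      refine key d d' h1 h2 h3 h4 h5 (by rw [h6]; norm_num) ?_
      rw [h6]
      exact_mod_cast (ZMod.intCast_eq_intCast_iff _ _ _).mp heq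
    have g24 : Nat.gcd 2 4 = 2 := by norm_num
    have g2q : Nat.gcd 2 (2*q) = 2 := Nat.gcd_eq_left (dvd_mul_right 2 q)
    have g4q : Nat.gcd 4 (2*q) = 2 := by
      have : (4:ℕ) = 2 * 2 := by norm_num
      rw [this, Nat.gcd_mul_left, hcq, mul_one]
    have hd24 : (2:ℕ) ≠ 4 := by norm_num
    have hd2q : (2:ℕ) ≠ 2*q := by omega
    have hd4q : (4:ℕ) ≠ 2*q := by omega
    have h2n : (2:ℕ) ∣ n := hp2 ▸ hpdvd
    have e1 := key2 2 4 h2n h4 (by norm_num) (by norm_num) hd24 g24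
    have e2 := key2 2 (2*q) h2n h2q (by norm_num) (by omega) hd2q g2q
    have e3 := key2 4 (2*q) h4 h2q (by norm_num) (by omega) hd4q g4q
    revert e1 e2 e3
    generalize ((a 2 : ℤ) : ZMod 2) = v1
    generalize ((a 4 : ℤ) : ZMod 2) = v2
    generalize ((a (2*q) : ℤ) : ZMod 2) = v3
    revert v1 v2 v3
    decide
  -- ====== Counting setup ======
  classical
  set X := Finset.Ico (0:ℤ) (n:ℤ) with hX
  set D := n.divisors.erase 1 with hD
  set E := m.divisors.erase 1 with hE
  set J := Finset.Icc 1 k with hJ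
  have hDmem : ∀ d ∈ D, d ∣ n ∧ 1 < d := by
    intro d hd
    have h1 := Finset.mem_of_mem_erase hd
    have h2 := Finset.ne_of_mem_erase hd
    have h3 := (Nat.mem_divisors.mp h1).1
    have h4 : d ≠ 0 := by rintro rfl; exact hn0 (Nat.eq_zero_of_zero_dvd h3)
    exact ⟨h3, by omega⟩
  have hEsubD : ∀ e ∈ E, e ∈ D := by
    intro e he
    have h1 := Finset.mem_of_mem_erase he
    have h2 := Finset.ne_of_mem_erase he
    exact Finset.mem_erase.mpr ⟨h2, Nat.mem_divisors.mpr
      ⟨dvd_trans (Nat.mem_divisors.mp h1).1 hmdvd, hn0⟩⟩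
  have hpj_mem : ∀ j ∈ J, (p^j) ∣ n ∧ 1 < p^j := by
    intro j hj
    obtain ⟨hj1, hj2⟩ := Finset.mem_Icc.mp hj
    exact ⟨dvd_trans (pow_dvd_pow p hj2) (Dvd.intro m hpkm),
      Nat.one_lt_pow (by omega) hp.one_lt⟩
  -- ====== pointwise bound ======
  have hpoint : ∀ x : ℤ,
      1 + ((J.filter (fun j : ℕ => x ≡ a (p^j) [ZMOD ((p^j : ℕ) : ℤ)])).card)
          * ((E.filter (fun e : ℕ => x ≡ a e [ZMOD (e : ℤ)])).card)
      ≤ (D.filter (fun d : ℕ => x ≡ a d [ZMOD (d : ℤ)])).card := by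
    intro x
    set PF := J.filter (fun j : ℕ => x ≡ a (p^j) [ZMOD ((p^j : ℕ) : ℤ)]) with hPF
    set EF := E.filter (fun e : ℕ => x ≡ a e [ZMOD (e : ℤ)]) with hEF
    set DF := D.filter (fun d : ℕ => x ≡ a d [ZMOD (d : ℤ)]) with hDF
    have hPF1 : PF.card ≤ 1 := by
      by_contra hc
      push_neg at hc
      obtain ⟨j, hj, j', hj', hjj⟩ := Finset.one_lt_card.mp hc
      rw [hPF, Finset.mem_filter] at hj hj'
      have h1 := hpj_mem j hj.1
      have h2 := hpj_mem j' hj'.1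
      have hne : p^j ≠ p^j' := fun h => hjj (Nat.pow_right_injective hp.two_le h)
      have hg := hcd (p^j) (p^j') h1.1 h2.1 h1.2 h2.2 hne ⟨x, hj.2, hj'.2⟩
      have hj1 : 1 ≤ j := (Finset.mem_Icc.mp hj.1).1
      have hj1' : 1 ≤ j' := (Finset.mem_Icc.mp hj'.1).1
      have hpd : p ∣ Nat.gcd (p^j) (p^j') :=
        Nat.dvd_gcd (dvd_pow_self p (by omega)) (dvd_pow_self p (by omega))
      rw [hg] at hpd
      have := Nat.dvd_one.mp hpd
      omega
    have hEFsub : EF ⊆ DF := by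
      intro e he
      rw [hEF, Finset.mem_filter] at he
      rw [hDF, Finset.mem_filter]
      exact ⟨hEsubD e he.1, he.2⟩
    rcases Nat.eq_zero_or_pos PF.card with h0 | h1
    · rw [h0, zero_mul]
      obtain ⟨d, hdn, hd1, hdc⟩ := hcov x
      have hdDF : d ∈ DF := by
        rw [hDF, Finset.mem_filter]
        exact ⟨Finset.mem_erase.mpr ⟨by omega, Nat.mem_divisors.mpr ⟨hdn, hn0⟩⟩, hdc⟩
      have := Finset.card_pos.mpr ⟨d, hdDF⟩
      omega
    · have hcard1 : PF.card = 1 := by omega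
      obtain ⟨j, hjeq⟩ := Finset.card_eq_one.mp hcard1
      have hjPF : j ∈ PF := by rw [hjeq]; exact Finset.mem_singleton_self j
      rw [hPF, Finset.mem_filter] at hjPF
      have hj1 : 1 ≤ j := (Finset.mem_Icc.mp hjPF.1).1
      have hpjD : p ^ j ∈ DF := by
        rw [hDF, Finset.mem_filter]
        refine ⟨Finset.mem_erase.mpr ⟨?_, Nat.mem_divisors.mpr
          ⟨(hpj_mem j hjPF.1).1, hn0⟩⟩, hjPF.2⟩
        have := (hpj_mem j hjPF.1).2; omega
      have hpjEF : p ^ j ∉ EF := by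
        intro hmem
        rw [hEF, Finset.mem_filter] at hmem
        have h1 := Finset.mem_of_mem_erase hmem.1
        have hdvd := (Nat.mem_divisors.mp h1).1
        have hpm : p ∣ m := dvd_trans (dvd_pow_self p (by omega)) hdvd
        have h2 : p ∣ Nat.gcd p m := Nat.dvd_gcd dvd_rfl hpm
        rw [hcop] at h2
        have := Nat.dvd_one.mp h2
        omega
      have hsub : insert (p^j) EF ⊆ DF := by
        intro d hd
        rcases Finset.mem_insert.mp hd with rfl | hd
        · exact hpjD
        · exact hEFsub hd
      have hcard2 : EF.card + 1 ≤ DF.card := by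
        have hle := Finset.card_le_card hsub
        rw [Finset.card_insert_of_notMem hpjEF] at hle
        omega
      rw [hcard1, one_mul]
      omega
  -- ====== counting each congruence class ======
  have hcount1 : ∀ d ∈ D, (X.filter (fun x : ℤ => x ≡ a d [ZMOD (d:ℤ)])).card = n / d := by
    intro d hd
    have h := hDmem d hd
    exact count_ap h.1 (by omega) (a d)
  have hcount2 : ∀ j ∈ J, ∀ e ∈ E,
      (X.filter (fun x : ℤ => (x ≡ a (p^j) [ZMOD ((p^j:ℕ):ℤ)])
        ∧ (x ≡ a e [ZMOD (e:ℤ)]))).card = n / (p^j * e) := by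
    intro j hj e he
    have hj2 := Finset.mem_Icc.mp hj
    have heD := hEsubD e he
    have hedvd_m : e ∣ m := (Nat.mem_divisors.mp (Finset.mem_of_mem_erase he)).1
    have hcopje : Nat.Coprime (p^j) e := (hcop.coprime_dvd_right hedvd_m).pow_left j
    obtain ⟨c, hc⟩ := crt_combine hcopje (a (p^j)) (a e)
    have hdvdn : (p^j * e) ∣ n := by
      rw [← hpkm]
      exact mul_dvd_mul (pow_dvd_pow p hj2.2) hedvd_m
    have hpos : 0 < p^j * e := by
      have h1 := (hDmem e heD).2
      have h2 := hp.pos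
      positivity
    rw [Finset.filter_congr (fun x _ => hc x)]
    exact count_ap hdvdn hpos c
  -- ====== main counting inequality ======
  have hXcard : X.card = n := by
    rw [hX, Int.card_Ico, sub_zero, Int.toNat_natCast]
  have hitemul : ∀ (P Q : Prop) [Decidable P] [Decidable Q],
      (if P then (1:ℕ) else 0) * (if Q then 1 else 0) = if P ∧ Q then 1 else 0 := by
    intro P Q _ _
    by_cases hP : P <;> by_cases hQ : Q <;> simp [hP, hQ]
  have hmain : n + ∑ j ∈ J, ∑ e ∈ E, n / (p^j * e) ≤ ∑ d ∈ D, n / d := by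
    have hsum := Finset.sum_le_sum (s := X)
      (f := fun x : ℤ => 1 + ((J.filter (fun j : ℕ => x ≡ a (p^j) [ZMOD ((p^j : ℕ) : ℤ)])).card)
          * ((E.filter (fun e : ℕ => x ≡ a e [ZMOD (e : ℤ)])).card))
      (g := fun x : ℤ => (D.filter (fun d : ℕ => x ≡ a d [ZMOD (d : ℤ)])).card)
      (fun x _ => hpoint x)
    rw [Finset.sum_add_distrib, Finset.sum_const, smul_eq_mul, mul_one, hXcard] at hsum
    have swap2 : ∑ x ∈ X, ((J.filter (fun j : ℕ => x ≡ a (p^j) [ZMOD ((p^j : ℕ) : ℤ)])).card)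
          * ((E.filter (fun e : ℕ => x ≡ a e [ZMOD (e : ℤ)])).card)
        = ∑ j ∈ J, ∑ e ∈ E, n / (p^j * e) := by
      have h1 : ∀ x ∈ X, ((J.filter (fun j : ℕ => x ≡ a (p^j) [ZMOD ((p^j : ℕ) : ℤ)])).card)
          * ((E.filter (fun e : ℕ => x ≡ a e [ZMOD (e : ℤ)])).card)
          = ∑ j ∈ J, ∑ e ∈ E, (if (x ≡ a (p^j) [ZMOD ((p^j : ℕ) : ℤ)])
              ∧ (x ≡ a e [ZMOD (e : ℤ)]) then 1 else 0) := by
        intro x _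
        rw [Finset.card_filter, Finset.card_filter, Finset.sum_mul_sum]
        apply Finset.sum_congr rfl
        intro j _
        apply Finset.sum_congr rfl
        intro e _
        exact hitemul _ _
      rw [Finset.sum_congr rfl h1]
      rw [Finset.sum_comm]
      apply Finset.sum_congr rfl
      intro j hj
      rw [Finset.sum_comm]
      apply Finset.sum_congr rfl
      intro e he
      rw [← Finset.card_filter]
      exact hcount2 j hj e he
    have swap1 : ∑ x ∈ X, (D.filter (fun d : ℕ => x ≡ a d [ZMOD (d : ℤ)])).card
        = ∑ d ∈ D, n / d := by
      have h1 : ∀ x ∈ X, (D.filter (fun d : ℕ => x ≡ a d [ZMOD (d : ℤ)])).card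
          = ∑ d ∈ D, if x ≡ a d [ZMOD (d : ℤ)] then 1 else 0 :=
        fun x _ => Finset.card_filter _ _
      rw [Finset.sum_congr rfl h1, Finset.sum_comm]
      apply Finset.sum_congr rfl
      intro d hd
      rw [← Finset.card_filter]
      exact hcount1 d hd
    rw [swap2, swap1] at hsum
    exact hsum
  -- ====== pass to rationals ======
  have hnQ : (0:ℚ) < n := by exact_mod_cast Nat.pos_of_ne_zero hn0
  set A : ℚ := ∑ j ∈ J, (1:ℚ)/(p:ℚ)^j with hA
  set B : ℚ := ∑ e ∈ E, (1:ℚ)/(e:ℚ) with hB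
  have hterm2 : ∀ j ∈ J, ∀ e ∈ E,
      ((n / (p^j * e) : ℕ) : ℚ) = (n:ℚ) * ((1:ℚ)/(p:ℚ)^j * ((1:ℚ)/(e:ℚ))) := by
    intro j hj e he
    have hj2 := Finset.mem_Icc.mp hj
    have hedvd_m : e ∣ m := (Nat.mem_divisors.mp (Finset.mem_of_mem_erase he)).1
    have hdvdn : (p^j * e) ∣ n := by
      rw [← hpkm]
      exact mul_dvd_mul (pow_dvd_pow p hj2.2) hedvd_m
    have he0 : e ≠ 0 := by
      rintro rfl
      exact hm0 (Nat.eq_zero_of_zero_dvd hedvd_m)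
    have hne : ((p^j * e : ℕ) : ℚ) ≠ 0 := by
      have := hp.pos
      positivity
    rw [Nat.cast_div_charZero hdvdn]
    push_cast
    field_simp
  have hcast2 : ((∑ j ∈ J, ∑ e ∈ E, n / (p^j * e) : ℕ) : ℚ) = n * (A * B) := by
    push_cast
    rw [Finset.sum_congr rfl (fun j hj => Finset.sum_congr rfl (fun e he => hterm2 j hj e he))]
    have h1 : ∀ j ∈ J, ∑ e ∈ E, (n:ℚ) * ((1:ℚ)/(p:ℚ)^j * ((1:ℚ)/(e:ℚ)))
        = (n:ℚ) * ((1:ℚ)/(p:ℚ)^j) * B := by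
      intro j hj
      rw [hB, Finset.mul_sum]
      apply Finset.sum_congr rfl
      intro e he
      ring
    rw [Finset.sum_congr rfl h1, ← Finset.sum_mul, ← Finset.mul_sum, ← hA, mul_assoc]
  have hterm1 : ∀ d ∈ D, ((n / d : ℕ) : ℚ) = (n:ℚ) * ((1:ℚ)/(d:ℚ)) := by
    intro d hd
    obtain ⟨hdvd, hd1⟩ := hDmem d hd
    rw [Nat.cast_div_charZero hdvd]
    have : (d:ℚ) ≠ 0 := by
      have : 0 < d := by omega
      positivity
    field_simp
  have hcast1 : ((∑ d ∈ D, n / d : ℕ) : ℚ) = n * ((∑ d ∈ n.divisors, (1:ℚ)/d) - 1) := by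
    push_cast
    rw [Finset.sum_congr rfl hterm1, ← Finset.mul_sum]
    congr 1
    rw [hD, Finset.sum_erase_eq_sub (Nat.one_mem_divisors.mpr hn0)]
    norm_num
  have hQle : (n:ℚ) + n * (A * B) ≤ n * ((∑ d ∈ n.divisors, (1:ℚ)/d) - 1) := by
    have hcast := Nat.cast_le (α := ℚ) |>.mpr hmain
    push_cast at hcast
    rw [← hcast1, ← hcast2]
    push_cast
    exact hcast
  -- multiplicativity of the divisor-reciprocal sum
  have hSQn : ∑ d ∈ n.divisors, (1:ℚ)/d = (1 + A) * (1 + B) := by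
    have h1 : ∑ d ∈ n.divisors, (1:ℚ)/d = ∑ d ∈ ((p^k)*m).divisors, (1:ℚ)/d := by rw [hpkm]
    rw [h1, SQ_mul (hcop.pow_left k) (pow_ne_zero k hp.pos.ne') hm0]
    congr 1
    · rw [SQ_prime_pow hp k]
    · have h2 := Finset.sum_erase_eq_sub (s := m.divisors)
        (f := fun e : ℕ => (1:ℚ)/(e:ℚ)) (Nat.one_mem_divisors.mpr hm0)
      rw [hB, hE, h2]
      norm_num
  have hAB1 : 1 ≤ A + B := by
    rw [hSQn] at hQle
    nlinarith [hnQ]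
  -- ====== final case analysis : A + B < 1 ======
  have hA0 : 0 ≤ A := geom_sum_nonneg k
  have hAlt : A < 1/((p:ℚ)-1) := my_geom_sum_lt hppos k
  have hpQ : (2:ℚ) ≤ (p:ℚ) := by exact_mod_cast hppos
  have hBSQ : B = (∑ d ∈ m.divisors, (1:ℚ)/d) - 1 := by
    rw [hB, hE, Finset.sum_erase_eq_sub (Nat.one_mem_divisors.mpr hm0)]
    norm_num
  have hncard : n.primeFactors.card = m.primeFactors.card + 1 := by
    have hpmem : p ∈ n.primeFactors := Nat.mem_primeFactors.mpr ⟨hp, hpdvd, hn0⟩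
    rw [hpfm, Finset.card_erase_of_mem hpmem]
    have : 1 ≤ n.primeFactors.card := Finset.card_pos.mpr ⟨p, hpmem⟩
    omega
  rcases Nat.eq_zero_or_pos m.primeFactors.card with hc0 | hc1
  · -- m = 1
    have hm1 : m = 1 := by
      rcases Nat.primeFactors_eq_empty.mp (Finset.card_eq_zero.mp hc0) with h | h
      · exact absurd h hm0
      · exact h
    have hBz : B = 0 := by
      rw [hBSQ, hm1]
      norm_num [Nat.divisors_one]
    rw [hBz, add_zero] at hAB1
    have h1 : 1/((p:ℚ)-1) ≤ 1 := by
      rw [div_le_one (by linarith)]; linarith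
    linarith
  · -- m > 1 : facts about its primes
    have hqfact : ∀ q ∈ m.primeFactors, q.Prime ∧ p < q := by
      intro q hq
      have h1 : q.Prime := Nat.prime_of_mem_primeFactors hq
      have h2 : q ∣ n := dvd_trans (Nat.dvd_of_mem_primeFactors hq) hmdvd
      have h3 : q ≠ p := by rw [hpfm] at hq; exact Finset.ne_of_mem_erase hq
      have h4 : p ≤ q := hpdef ▸ Nat.minFac_le_of_dvd h1.two_le h2
      exact ⟨h1, by omega⟩
    have hSQm : (∑ d ∈ m.divisors, (1:ℚ)/d) < ∏ q ∈ m.primeFactors, (q:ℚ)/((q:ℚ)-1) := by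
      rw [SQ_factorization hm0]
      obtain ⟨q0, hq0⟩ := Finset.card_pos.mp hc1
      apply Finset.prod_lt_prod
      · intro q hq
        have := SQ_pos (t := q ^ m.factorization q)
          (pow_ne_zero _ (hqfact q hq).1.pos.ne')
        linarith
      · intro q hq
        exact le_of_lt (SQ_prime_pow_lt (hqfact q hq).1 _)
      · exact ⟨q0, hq0, SQ_prime_pow_lt (hqfact q0 hq0).1 _⟩
    rcases Nat.lt_or_ge m.primeFactors.card 3 with hclt | hcge
    · rcases Nat.lt_or_ge m.primeFactors.card 2 with hclt1 | hc2
      · -- exactly one prime q in m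
        have hc1' : m.primeFactors.card = 1 := by omega
        obtain ⟨q, hqone⟩ := Finset.card_eq_one.mp hc1'
        have hqm : q ∈ m.primeFactors := by rw [hqone]; exact Finset.mem_singleton_self q
        obtain ⟨hqp, hqgt⟩ := hqfact q hqm
        have hprodq : (∏ q' ∈ m.primeFactors, (q':ℚ)/((q':ℚ)-1)) = (q:ℚ)/((q:ℚ)-1) := by
          rw [hqone, Finset.prod_singleton]
        rw [hprodq] at hSQm
        have hq3 : (3:ℕ) ≤ q := by have := hp.two_le; omega
        have hq3Q : (3:ℚ) ≤ (q:ℚ) := by exact_mod_cast hq3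
        have hBlt : B < 1/((q:ℚ)-1) := by
          have hqne : ((q:ℚ)-1) ≠ 0 := by linarith
          have heq1 : (q:ℚ)/((q:ℚ)-1) = 1 + 1/((q:ℚ)-1) := by field_simp; ring
          rw [hBSQ]
          linarith [hSQm, heq1]
        rcases Nat.lt_or_ge p 3 with hp2 | hp3
        · -- p = 2, so k = 1 and A = 1/2 ; q ≥ 3 gives B < 1/2
          have hp2' : p = 2 := by have := hp.two_le; omega
          have hk1' : k = 1 := hk2 hp2' (by omega)
          have hAhalf : A = 1/2 := by
            rw [hA, hJ, hk1']
            rw [Finset.Icc_self, Finset.sum_singleton, hp2']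
            norm_num
          have : B < 1/2 := by
            have h2 : 1/((q:ℚ)-1) ≤ 1/2 := by
              rw [div_le_div_iff₀ (by linarith) (by norm_num)]
              linarith
            linarith
          rw [hAhalf] at hAB1
          linarith
        · -- p ≥ 3 : A < 1/2, and q ≥ 5 gives B < 1/4
          have hpQ3 : (3:ℚ) ≤ (p:ℚ) := by exact_mod_cast hp3
          have hAlt2 : A < 1/2 := by
            have h2 : 1/((p:ℚ)-1) ≤ 1/2 := by
              rw [div_le_div_iff₀ (by linarith) (by norm_num)]
              linarith
            linarith
          have hq5 : (5:ℕ) ≤ q := by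
            have hq4 : 4 ≤ q := by omega
            have : q ≠ 4 := by
              rintro rfl
              norm_num at hqp
            omega
          have hq5Q : (5:ℚ) ≤ (q:ℚ) := by exact_mod_cast hq5
          have hBlt2 : B < 1/4 := by
            have h2 : 1/((q:ℚ)-1) ≤ 1/4 := by
              rw [div_le_div_iff₀ (by linarith) (by norm_num)]
              linarith
            rw [hBSQ]
            linarith [hSQm]
          linarith
      · -- exactly two primes in m ; p ≥ 3
        have hc2' : m.primeFactors.card = 2 := by omega
        have hp3 : 3 ≤ p := by
          have := homega
          rw [hncard, hc2'] at this
          omega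
        have hpQ3 : (3:ℚ) ≤ (p:ℚ) := by exact_mod_cast hp3
        have hAlt2 : A < 1/2 := by
          have h2 : 1/((p:ℚ)-1) ≤ 1/2 := by
            rw [div_le_div_iff₀ (by linarith) (by norm_num)]
            linarith
          linarith
        obtain ⟨q1, q2, hq12, hSeq⟩ := Finset.card_eq_two.mp hc2'
        have hq1m : q1 ∈ m.primeFactors := by rw [hSeq]; simp
        have hq2m : q2 ∈ m.primeFactors := by rw [hSeq]; simp
        obtain ⟨hq1p, hq1gt⟩ := hqfact q1 hq1m
        obtain ⟨hq2p, hq2gt⟩ := hqfact q2 hq2m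
        have hq15 : 5 ≤ q1 := by
          have h4 : 4 ≤ q1 := by omega
          have : q1 ≠ 4 := by rintro rfl; norm_num at hq1p
          omega
        have hq25 : 5 ≤ q2 := by
          have h4 : 4 ≤ q2 := by omega
          have : q2 ≠ 4 := by rintro rfl; norm_num at hq2p
          omega
        have hprod2 : (∏ q ∈ m.primeFactors, (q:ℚ)/((q:ℚ)-1))
            = ((q1:ℚ)/((q1:ℚ)-1)) * ((q2:ℚ)/((q2:ℚ)-1)) := by
          rw [hSeq, Finset.prod_pair hq12]
        have hbound : ((q1:ℚ)/((q1:ℚ)-1)) * ((q2:ℚ)/((q2:ℚ)-1)) ≤ (5/4) * (7/6) := by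
          have hr1 : ∀ t : ℕ, 5 ≤ t → (t:ℚ)/((t:ℚ)-1) ≤ 5/4 := by
            intro t ht
            have := ratio_mono (t := 5) (q := t) (by norm_num) ht
            norm_num at this ⊢
            convert this using 2 <;> norm_num
          have hr2 : ∀ t : ℕ, 7 ≤ t → (t:ℚ)/((t:ℚ)-1) ≤ 7/6 := by
            intro t ht
            have := ratio_mono (t := 7) (q := t) (by norm_num) ht
            norm_num at this ⊢
            convert this using 2 <;> norm_num
          have hpos1 : 0 < (q1:ℚ)/((q1:ℚ)-1) := ratio_pos (by omega)
          have hpos2 : 0 < (q2:ℚ)/((q2:ℚ)-1) := ratio_pos (by omega)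
          rcases Nat.lt_or_ge q1 q2 with hlt | hge
          · have hq27 : 7 ≤ q2 := by
              have h6 : 6 ≤ q2 := by omega
              have : q2 ≠ 6 := by rintro rfl; norm_num at hq2p
              omega
            have b1 := hr1 q1 hq15
            have b2 := hr2 q2 hq27
            nlinarith
          · have hq1gt2 : q2 < q1 := by omega
            have hq17 : 7 ≤ q1 := by
              have h6 : 6 ≤ q1 := by omega
              have : q1 ≠ 6 := by rintro rfl; norm_num at hq1p
              omega
            have b1 := hr2 q1 hq17
            have b2 := hr1 q2 hq25
            nlinarith
        have hBlt : B < 35/24 - 1 := by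
          rw [hBSQ]
          rw [hprod2] at hSQm
          have h35 : ((5:ℚ)/4) * (7/6) = 35/24 := by norm_num
          linarith [hbound, hSQm]
        linarith
    · -- at least three primes in m : p ≥ 5 and the √3 bound
      set s := m.primeFactors.card with hs
      have hps : s + 1 ≤ p := by
        have := homega
        rw [hncard] at this
        omega
      have hp5 : 5 ≤ p := by
        have h4 : 4 ≤ p := by omega
        have : p ≠ 4 := by rintro h; rw [h] at hp; norm_num at hp
        omega
      have hpQ5 : (5:ℚ) ≤ (p:ℚ) := by exact_mod_cast hp5
      have hAlt4 : A < 1/4 := by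
        have h2 : 1/((p:ℚ)-1) ≤ 1/4 := by
          rw [div_le_div_iff₀ (by linarith) (by norm_num)]
          linarith
        linarith
      have hodd : ∀ q ∈ m.primeFactors, Odd q ∧ s + 2 ≤ q := by
        intro q hq
        obtain ⟨hqp, hqgt⟩ := hqfact q hq
        refine ⟨hqp.odd_of_ne_two (by omega), by omega⟩
      have hsq := odd_prod_sq s s m.primeFactors rfl (by omega) hodd
      have hsQ : (0:ℚ) < (s:ℚ) := by
        have : 0 < s := by omega
        exact_mod_cast this
      have h3 : ((s:ℚ) + 2*(s:ℚ))/(s:ℚ) = 3 := by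
        field_simp
        ring
      rw [h3] at hsq
      set P : ℚ := ∏ q ∈ m.primeFactors, (q:ℚ)/((q:ℚ)-1) with hP
      have hPsq : P^2 ≤ 3 := by
        rw [hP, ← Finset.prod_pow]
        exact hsq
      have hP0 : 0 ≤ P := by
        rw [hP]
        apply Finset.prod_nonneg
        intro q hq
        exact le_of_lt (ratio_pos (hqfact q hq).1.two_le)
      have hPlt : P < 7/4 := by nlinarith
      have hBlt : B < 3/4 := by
        rw [hBSQ]
        linarith [hSQm, hPlt]
      linarith
end

section
/- Let n > 1 be non-intersecting, and let p be the smallest prime dividing n. Then n/p has fewer than p distinct prime divisors. -/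
/-!
Let `p` be a prime factor of `n` and `q₁, …, q_k` the distinct primes dividing `n / p`.
The `k + 1` divisors `p, p q₁, …, p q_k` of `n` pairwise have gcd exactly `p`. By the Chinese
remainder theorem two congruences whose residues agree modulo the gcd of their moduli overlap,
so coprime disjointness forces the `k + 1` residues to be pairwise distinct modulo `p`,
whence `k + 1 ≤ p`.
-/

theorem Int.exists_modEq_and_modEq_of_gcd_dvd_sub {m n a b : ℤ} (h : (m.gcd n : ℤ) ∣ b - a) :
    ∃ x, x ≡ a [ZMOD m] ∧ x ≡ b [ZMOD n] := by
  obtain ⟨t, ht⟩ := h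
  refine ⟨a + t * m * m.gcdA n, (Int.modEq_iff_dvd.mpr ⟨t * m.gcdA n, by ring⟩).symm,
    (Int.modEq_iff_dvd.mpr ⟨-(t * m.gcdB n), ?_⟩).symm⟩
  have hb : b = a + m.gcd n * t := by linarith
  rw [hb, Int.gcd_eq_gcd_ab]
  ring

def CoprimeDisjointOnDivisors (n : ℕ) (a : ℕ → ℤ) : Prop :=
  ∀ d d' : ℕ, d ∣ n → d' ∣ n → 1 < d → 1 < d' → d ≠ d' →
    (∃ x : ℤ, x ≡ a d [ZMOD (d : ℤ)] ∧ x ≡ a d' [ZMOD (d' : ℤ)]) → Nat.gcd d d' = 1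

theorem Nat.pairwise_coprime_insert_one_primeFactors (m : ℕ) :
    ((insert 1 m.primeFactors : Finset ℕ) : Set ℕ).Pairwise Nat.Coprime := by
  rw [Finset.coe_insert]
  refine Set.Pairwise.insert (fun q hq q' hq' hne ↦ ?_) fun q _ _ ↦
    ⟨coprime_one_left q, coprime_one_right q⟩
  exact (coprime_primes (prime_of_mem_primeFactors hq) (prime_of_mem_primeFactors hq')).mpr hne

namespace CoprimeDisjointOnDivisors

variable {n : ℕ} {a : ℕ → ℤ}

theorem not_modEq_gcd (hCD : CoprimeDisjointOnDivisors n a) {d d' : ℕ} (hd : d ∣ n)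
    (hd' : d' ∣ n) (h1d : 1 < d) (h1d' : 1 < d') (hne : d ≠ d') (hgcd : Nat.gcd d d' ≠ 1) :
    ¬ a d ≡ a d' [ZMOD (Nat.gcd d d' : ℤ)] := by
  intro hmod
  refine hgcd (hCD d d' hd hd' h1d h1d' hne (Int.exists_modEq_and_modEq_of_gcd_dvd_sub ?_))
  rw [Int.gcd_natCast_natCast]
  exact hmod.dvd

/-- The divisors `p * q` (`q ∈ s`) pairwise have gcd exactly `p`. -/
theorem injOn_residue_mul {p : ℕ} (hCD : CoprimeDisjointOnDivisors n a) (hp : 1 < p)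
    {s : Finset ℕ} (hs : (s : Set ℕ).Pairwise Nat.Coprime) (hdvd : ∀ q ∈ s, p * q ∣ n)
    (hpos : ∀ q ∈ s, 0 < q) :
    Set.InjOn (fun q ↦ (a (p * q) : ZMod p)) s := by
  intro q hq q' hq' heq
  by_contra hne
  have hgcd : Nat.gcd (p * q) (p * q') = p := by
    rw [Nat.gcd_mul_left, hs hq hq' hne, mul_one]
  have hp0 : 0 < p := by omega
  refine hCD.not_modEq_gcd (hdvd q hq) (hdvd q' hq') ?_ ?_
    (fun h ↦ hne (Nat.eq_of_mul_eq_mul_left hp0 h)) (by omega) ?_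
  · nlinarith [hpos q hq]
  · nlinarith [hpos q' hq']
  · rwa [hgcd, ← ZMod.intCast_eq_intCast_iff]

theorem card_primeFactors_div_lt (hCD : CoprimeDisjointOnDivisors n a) {p : ℕ} (hp : p.Prime)
    (hpn : p ∣ n) : (n / p).primeFactors.card < p := by
  have : NeZero p := ⟨hp.ne_zero⟩
  set s := insert 1 (n / p).primeFactors
  have hdvd : ∀ q ∈ s, p * q ∣ n := by
    intro q hq
    rw [← Nat.mul_div_cancel' hpn]
    refine mul_dvd_mul_left p ((Finset.mem_insert.mp hq).elim (· ▸ one_dvd _) ?_)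
    exact Nat.dvd_of_mem_primeFactors
  have hpos : ∀ q ∈ s, 0 < q :=
    fun q hq ↦ (Finset.mem_insert.mp hq).elim (· ▸ one_pos) Nat.pos_of_mem_primeFactors
  have hinj := hCD.injOn_residue_mul hp.one_lt
    (Nat.pairwise_coprime_insert_one_primeFactors _) hdvd hpos
  have hcard : s.card ≤ p := by
    simpa using Finset.card_le_card_of_injOn _ (fun _ _ ↦ Finset.mem_univ _) hinj
  rwa [Finset.card_insert_of_notMem fun h ↦ Nat.not_prime_one (Nat.prime_of_mem_primeFactors h),
    Nat.add_one_le_iff] at hcard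

end CoprimeDisjointOnDivisors

/-- If `n > 1` is non-intersecting (there are residues `a d` for each divisor `d > 1` of `n`
such that the congruence set `{a d mod d : d ∣ n, d > 1}` is coprime disjoint), and `p` is
the smallest prime dividing `n`, then `n / p` has fewer than `p` distinct prime divisors. -/
theorem minFac_quotient_primeFactors_lt (n : ℕ) (hn : 1 < n) (a : ℕ → ℤ)
    (hCD : ∀ d d' : ℕ, d ∣ n → d' ∣ n → 1 < d → 1 < d' → d ≠ d' →
      (∃ x : ℤ, x ≡ a d [ZMOD (d : ℤ)] ∧ x ≡ a d' [ZMOD (d' : ℤ)]) →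
      Nat.gcd d d' = 1) :
    (n / n.minFac).primeFactors.card < n.minFac :=
  CoprimeDisjointOnDivisors.card_primeFactors_div_lt hCD (Nat.minFac_prime hn.ne') n.minFac_dvd
end

section
/- Let A = {a_1 mod d_1, ..., a_t mod d_t} be a CD congruence set and let D = lcm(d_1, ..., d_t). Then the number of residue classes modulo D that are covered by A (i.e., classes r mod D such that r ≡ a_i mod d_i for some i) equals the alternating sum over all nonempty subsets S of {1, ..., t} whose moduli {d_i : i ∈ S} are pairwise coprime of (-1)^{|S|+1} · D / (∏_{i ∈ S} d_i). -/
open Finset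

private lemma mem_inf'_finset {ι α : Type*} [DecidableEq α] {S : Finset ι} (h : S.Nonempty)
    (f : ι → Finset α) (x : α) : x ∈ S.inf' h f ↔ ∀ i ∈ S, x ∈ f i := by
  induction h using Finset.Nonempty.cons_induction with
  | singleton i => simp
  | cons i S hi hS ih => simp [Finset.inf'_cons, ih]

private lemma modEq_prod_of_pairwise {ι : Type*} [DecidableEq ι] {d : ι → ℕ} {x y : ℕ}
    (S : Finset ι) (hp : (S : Set ι).Pairwise (fun i j => Nat.Coprime (d i) (d j)))
    (hall : ∀ i ∈ S, x ≡ y [MOD d i]) : x ≡ y [MOD ∏ i ∈ S, d i] := by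
  induction S using Finset.induction with
  | empty => simp [Nat.modEq_one]
  | @insert i S hi ih =>
    rw [Finset.prod_insert hi]
    have hcop : Nat.Coprime (d i) (∏ j ∈ S, d j) :=
      Nat.Coprime.prod_right fun j hj =>
        hp (by simp) (by simp [hj]) (by rintro rfl; exact hi hj)
    refine (Nat.modEq_and_modEq_iff_modEq_mul hcop).mp
      ⟨hall i (mem_insert_self _ _), ih (hp.mono (by simp)) fun j hj =>
        hall j (mem_insert_of_mem hj)⟩

/-- **Inclusion–exclusion density formula for CD congruence sets.**
Let `{a i mod d i : i < t}` be a CD congruence set (distinct moduli `d i > 1`, and any two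
distinct overlapping congruences have coprime moduli) and let `D = lcm(d 1, …, d t)`.
Then the number of residue classes mod `D` covered by the set equals the alternating sum,
over all nonempty subsets `S` of indices whose moduli are pairwise coprime, of
`(-1)^(|S|+1) * D / ∏_{i ∈ S} d i`. -/
theorem CD_density_formula (t : ℕ) (d : Fin t → ℕ) (a : Fin t → ℤ)
    (hd : ∀ i, 1 < d i) (hinj : Function.Injective d)
    (hCD : ∀ i j : Fin t, i ≠ j →
      (∃ x : ℤ, x ≡ a i [ZMOD (d i : ℤ)] ∧ x ≡ a j [ZMOD (d j : ℤ)]) →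
      Nat.gcd (d i) (d j) = 1) :
    (((Finset.range (Finset.univ.lcm d)).filter
        (fun r : ℕ => ∃ i, (r : ℤ) ≡ a i [ZMOD (d i : ℤ)])).card : ℤ) =
      ∑ S ∈ Finset.univ.powerset.filter
          (fun S : Finset (Fin t) => S.Nonempty ∧
            (S : Set (Fin t)).Pairwise (fun i j => Nat.Coprime (d i) (d j))),
        (-1 : ℤ) ^ (S.card + 1) * ((Finset.univ.lcm d / ∏ i ∈ S, d i : ℕ) : ℤ) := by
  classical
  set D := Finset.univ.lcm d with hD
  have hdpos : ∀ i, 0 < d i := fun i => lt_trans Nat.zero_lt_one (hd i)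
  have hdvdD : ∀ i, d i ∣ D := fun i => Finset.dvd_lcm (mem_univ i)
  -- natural residues
  set a' : Fin t → ℕ := fun i => (a i % (d i : ℤ)).toNat with ha'def
  have ha' : ∀ i, ((a' i : ℤ)) % (d i : ℤ) = a i % (d i : ℤ) := by
    intro i
    have h0 : (0:ℤ) < (d i : ℤ) := by exact_mod_cast hdpos i
    rw [ha'def]
    simp only []
    rw [Int.toNat_of_nonneg (Int.emod_nonneg _ h0.ne'), Int.emod_emod_of_dvd _ dvd_rfl]
  have hmod : ∀ (i : Fin t) (r : ℕ), ((r : ℤ) ≡ a i [ZMOD (d i : ℤ)]) ↔ r ≡ a' i [MOD d i] := by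
    intro i r
    rw [← Int.natCast_modEq_iff]
    unfold Int.ModEq
    rw [ha' i]
  set A : Fin t → Finset ℕ := fun i => (range D).filter (fun r => r ≡ a' i [MOD d i]) with hA
  -- LHS as a biUnion
  have hLHS : (range D).filter (fun r : ℕ => ∃ i, (r : ℤ) ≡ a i [ZMOD (d i : ℤ)])
      = Finset.univ.biUnion A := by
    ext r
    simp only [mem_filter, mem_biUnion, mem_univ, true_and, hA, mem_range, hmod]
    tauto
  -- intersections
  have hstep : ∀ (S : Finset (Fin t)) (hS : S.Nonempty), S.inf' hS A
      = (range D).filter (fun r => ∀ i ∈ S, r ≡ a' i [MOD d i]) := by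
    intro S hS
    ext x
    rw [mem_inf'_finset]
    simp only [hA, mem_filter, mem_range]
    constructor
    · intro hx
      obtain ⟨i, hi⟩ := hS
      exact ⟨(hx i hi).1, fun j hj => (hx j hj).2⟩
    · rintro ⟨h1, h2⟩ i hi
      exact ⟨h1, h2 i hi⟩
  -- vanishing for non-coprime subsets
  have hzero : ∀ S : Finset (Fin t), S.Nonempty →
      ¬ (S : Set (Fin t)).Pairwise (fun i j => Nat.Coprime (d i) (d j)) →
      ((range D).filter (fun r => ∀ i ∈ S, r ≡ a' i [MOD d i])).card = 0 := by
    intro S _ hnp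
    rw [Finset.card_eq_zero, Finset.filter_eq_empty_iff]
    intro r _ hall
    apply hnp
    intro i hi j hj hij
    exact hCD i j hij ⟨(r : ℤ), (hmod i r).mpr (hall i hi), (hmod j r).mpr (hall j hj)⟩
  -- value for coprime subsets
  have hval : ∀ S : Finset (Fin t), S.Nonempty →
      (S : Set (Fin t)).Pairwise (fun i j => Nat.Coprime (d i) (d j)) →
      ((range D).filter (fun r => ∀ i ∈ S, r ≡ a' i [MOD d i])).card
        = D / ∏ i ∈ S, d i := by
    intro S _ hp
    have hpp : Set.Pairwise (S : Set (Fin t)) (Function.onFun Nat.Coprime d) := hp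
    obtain ⟨b, hb⟩ := Nat.chineseRemainderOfFinset a' d S (fun i _ => (hdpos i).ne') hpp
    have hPpos : 0 < ∏ i ∈ S, d i := Finset.prod_pos fun i _ => hdpos i
    have hPdvd : (∏ i ∈ S, d i) ∣ D := by
      have h0 : D ≡ 0 [MOD ∏ i ∈ S, d i] :=
        modEq_prod_of_pairwise S hp fun i _ =>
          (Nat.modEq_zero_iff_dvd).mpr (hdvdD i)
      exact (Nat.modEq_zero_iff_dvd).mp h0
    have hiff : ∀ r : ℕ, (∀ i ∈ S, r ≡ a' i [MOD d i]) ↔ r ≡ b [MOD ∏ i ∈ S, d i] := by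
      intro r
      constructor
      · intro h
        exact modEq_prod_of_pairwise S hp fun i hi => (h i hi).trans (hb i hi).symm
      · intro h i hi
        exact (Nat.ModEq.of_dvd (Finset.dvd_prod_of_mem d hi) h).trans (hb i hi)
    rw [Finset.filter_congr fun r _ => by rw [hiff r]]
    rw [← Nat.count_eq_card_filter_range, Nat.count_modEq_card D hPpos b]
    have hm0 : D % (∏ i ∈ S, d i) = 0 := (Nat.dvd_iff_mod_eq_zero).mp hPdvd
    rw [hm0]
    simp
  -- inclusion-exclusion
  rw [hLHS, Finset.inclusion_exclusion_card_biUnion Finset.univ A]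
  have hattach : ∀ x : (Finset.univ.powerset.filter
        (fun S : Finset (Fin t) => S.Nonempty)), (-1 : ℤ) ^ (x.1.card + 1)
        * ((x.1.inf' (mem_filter.1 x.2).2 A).card : ℤ)
      = (-1 : ℤ) ^ (x.1.card + 1)
        * (((range D).filter (fun r => ∀ i ∈ x.1, r ≡ a' i [MOD d i])).card : ℤ) := by
    intro x
    rw [hstep x.1 (mem_filter.1 x.2).2]
  rw [Finset.sum_congr rfl (fun x _ => hattach x), Finset.sum_coe_sort
      (Finset.univ.powerset.filter (fun S : Finset (Fin t) => S.Nonempty))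
      (fun S => (-1 : ℤ) ^ (S.card + 1)
        * (((range D).filter (fun r => ∀ i ∈ S, r ≡ a' i [MOD d i])).card : ℤ))]
  have hsplit : Finset.univ.powerset.filter
      (fun S : Finset (Fin t) => S.Nonempty ∧
        (S : Set (Fin t)).Pairwise (fun i j => Nat.Coprime (d i) (d j)))
      = (Finset.univ.powerset.filter (fun S : Finset (Fin t) => S.Nonempty)).filter
        (fun S : Finset (Fin t) => (S : Set (Fin t)).Pairwise (fun i j => Nat.Coprime (d i) (d j))) := by
    rw [Finset.filter_filter]
  rw [hsplit]
  have hrestrict : ∑ S ∈ Finset.univ.powerset.filter (fun S : Finset (Fin t) => S.Nonempty),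
        (-1 : ℤ) ^ (S.card + 1)
          * (((range D).filter (fun r => ∀ i ∈ S, r ≡ a' i [MOD d i])).card : ℤ)
      = ∑ S ∈ (Finset.univ.powerset.filter (fun S : Finset (Fin t) => S.Nonempty)).filter
          (fun S : Finset (Fin t) =>
            (S : Set (Fin t)).Pairwise (fun i j => Nat.Coprime (d i) (d j))),
        (-1 : ℤ) ^ (S.card + 1)
          * (((range D).filter (fun r => ∀ i ∈ S, r ≡ a' i [MOD d i])).card : ℤ) := by
    refine (Finset.sum_filter_of_ne fun S hS hne => ?_).symm
    rw [Finset.mem_filter] at hS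
    by_contra hnp
    exact hne (by rw [hzero S hS.2 hnp]; simp)
  rw [hrestrict]
  refine Finset.sum_congr rfl fun S hS => ?_
  rw [Finset.mem_filter, Finset.mem_filter] at hS
  rw [hval S hS.1.2 hS.2]
end

section
/- Let p be a prime and k ≥ 1, and let n = p^k. For every CD congruence set A = {a_d mod d : d | n, d > 1} whose moduli are exactly the divisors of n greater than 1, the number of residue classes modulo p^k covered by A equals (p^k − 1)/(p − 1); equivalently, the natural density of integers covered by A is (p^k − 1)/(p^k (p − 1)). -/
/-- counting a periodic predicate over a multiple of the period -/
private lemma card_filter_range_mul (P : ℕ → Prop) [DecidablePred P] (m : ℕ)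
    (hper : Function.Periodic P m) (q : ℕ) :
    ((Finset.range (m * q)).filter P).card = q * ((Finset.range m).filter P).card := by
  induction q with
  | zero => simp
  | succ q ih =>
    have hsplit : Finset.range (m * (q + 1)) =
        Finset.range (m * q) ∪ Finset.Ico (m * q) (m * q + m) := by
      simp only [Finset.range_eq_Ico]
      rw [Finset.Ico_union_Ico_eq_Ico (Nat.zero_le _) (Nat.le_add_right _ _), Nat.mul_succ]
    rw [hsplit, Finset.filter_union, Finset.card_union_of_disjoint
        (Finset.disjoint_filter_filter (by
          rw [Finset.range_eq_Ico]
          exact Finset.Ico_disjoint_Ico_consecutive 0 (m * q) (m * q + m))),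
      ih, Nat.filter_Ico_card_eq_of_periodic _ _ _ hper, Nat.count_eq_card_filter_range]
    ring

private lemma ncard_lt_and (P : ℕ → Prop) [DecidablePred P] (N : ℕ) :
    {r : ℕ | r < N ∧ P r}.ncard = ((Finset.range N).filter P).card := by
  rw [← Set.ncard_coe_finset]
  congr 1
  ext r
  simp [and_comm]

/-- Let `p` be prime, `k ≥ 1`, `n = p^k`. For every CD congruence set
`{a d mod d : d ∣ n, d > 1}` with moduli the divisors of `n` greater than `1`,
the number of residue classes mod `p^k` covered equals `(p^k - 1)/(p - 1)`;
equivalently, the natural density of covered integers is `(p^k - 1)/(p^k (p - 1))`. -/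
theorem prime_pow_CD_density (p k : ℕ) (hp : p.Prime) (hk : 1 ≤ k) (a : ℕ → ℤ)
    (hCD : ∀ d d' : ℕ, d ∣ p ^ k → d' ∣ p ^ k → 1 < d → 1 < d' → d ≠ d' →
      (∃ x : ℤ, x ≡ a d [ZMOD (d : ℤ)] ∧ x ≡ a d' [ZMOD (d' : ℤ)]) →
      Nat.gcd d d' = 1) :
    {r : ℕ | r < p ^ k ∧ ∃ d : ℕ, d ∣ p ^ k ∧ 1 < d ∧ (r : ℤ) ≡ a d [ZMOD (d : ℤ)]}.ncard
      = (p ^ k - 1) / (p - 1) ∧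
    Filter.Tendsto
      (fun N : ℕ =>
        ({r : ℕ | r < N ∧ ∃ d : ℕ, d ∣ p ^ k ∧ 1 < d ∧ (r : ℤ) ≡ a d [ZMOD (d : ℤ)]}.ncard : ℝ) / N)
      Filter.atTop
      (nhds (((p : ℝ) ^ k - 1) / ((p : ℝ) ^ k * ((p : ℝ) - 1)))) := by
  classical
  have hp2 : 2 ≤ p := hp.two_le
  set M := p ^ k with hM
  have hM0 : 0 < M := Nat.pow_pos (n := k) (by omega)
  set P : ℕ → Prop := fun r => ∃ d : ℕ, d ∣ p ^ k ∧ 1 < d ∧ (r : ℤ) ≡ a d [ZMOD (d : ℤ)]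
    with hPdef
  -- periodicity of a single congruence
  have key : ∀ (d : ℕ) (r : ℕ), d ∣ p ^ k → ((r + M : ℕ) : ℤ) ≡ (r : ℤ) [ZMOD (d : ℤ)] := by
    intro d r hd
    have hdM : (d : ℤ) ∣ (M : ℤ) := Int.natCast_dvd_natCast.mpr hd
    have : (d : ℤ) ∣ (r : ℤ) - ((r : ℤ) + (M : ℤ)) := by
      simpa using hdM.neg_right
    have h := (Int.modEq_iff_dvd.mpr this : ((r : ℤ) + (M : ℤ)) ≡ (r : ℤ) [ZMOD (d : ℤ)])
    push_cast
    exact h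
  have hper : Function.Periodic P M := by
    intro r
    simp only [hPdef, eq_iff_iff]
    constructor
    · rintro ⟨d, hd, hd1, hm⟩
      exact ⟨d, hd, hd1, ((key d r hd).symm.trans hm : _)⟩
    · rintro ⟨d, hd, hd1, hm⟩
      exact ⟨d, hd, hd1, ((key d r hd).trans hm : _)⟩
  -- the per-modulus sets
  set Q : ℕ → ℕ → Prop := fun i r => (r : ℤ) ≡ a (p ^ i) [ZMOD ((p ^ i : ℕ) : ℤ)] with hQdef
  have hQcard : ∀ i ∈ Finset.Icc 1 k,
      ((Finset.range M).filter (Q i)).card = p ^ (k - i) := by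
    intro i hi
    obtain ⟨hi1, hik⟩ := Finset.mem_Icc.mp hi
    have hm0 : 0 < p ^ i := Nat.pow_pos (n := i) (by omega)
    have hperQ : Function.Periodic (Q i) (p ^ i) := by
      intro r
      simp only [hQdef, eq_iff_iff]
      have hkey : ((r + p ^ i : ℕ) : ℤ) ≡ (r : ℤ) [ZMOD ((p ^ i : ℕ) : ℤ)] := by
        have : ((p ^ i : ℕ) : ℤ) ∣ (r : ℤ) - ((r : ℤ) + ((p ^ i : ℕ) : ℤ)) := by
          simpa using (dvd_refl ((p ^ i : ℕ) : ℤ)).neg_right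
        have h := Int.modEq_iff_dvd.mpr this
        push_cast at h ⊢
        exact h
      exact ⟨fun h => hkey.symm.trans h, fun h => hkey.trans h⟩
    have hMeq : M = p ^ i * p ^ (k - i) := by
      rw [hM, ← pow_add]
      congr 1
      omega
    rw [hMeq, card_filter_range_mul _ _ hperQ]
    -- the single-period count is 1
    set b : ℕ := ((a (p ^ i)) % ((p ^ i : ℕ) : ℤ)).toNat with hb
    have hble : (b : ℤ) = (a (p ^ i)) % ((p ^ i : ℕ) : ℤ) := by
      rw [hb]
      exact Int.toNat_of_nonneg (Int.emod_nonneg _ (by exact_mod_cast hm0.ne'))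
    have hblt : b < p ^ i := by
      have : (a (p ^ i)) % ((p ^ i : ℕ) : ℤ) < ((p ^ i : ℕ) : ℤ) :=
        Int.emod_lt_of_pos _ (by exact_mod_cast hm0)
      omega
    have hsingle : (Finset.range (p ^ i)).filter (Q i) = {b} := by
      ext r
      simp only [Finset.mem_filter, Finset.mem_range, Finset.mem_singleton, hQdef]
      constructor
      · rintro ⟨hr, hmod⟩
        have h1 : (r : ℤ) % ((p ^ i : ℕ) : ℤ) = (a (p ^ i)) % ((p ^ i : ℕ) : ℤ) := hmod
        have h2 : (r : ℤ) % ((p ^ i : ℕ) : ℤ) = (r : ℤ) :=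
          Int.emod_eq_of_lt (by positivity) (by exact_mod_cast hr)
        omega
      · rintro rfl
        refine ⟨hblt, ?_⟩
        show (b : ℤ) % ((p ^ i : ℕ) : ℤ) = (a (p ^ i)) % ((p ^ i : ℕ) : ℤ)
        rw [hble, Int.emod_emod_of_dvd _ dvd_rfl]
    rw [hsingle]
    simp
  -- decomposition of P as a disjoint union over i ∈ Icc 1 k
  have hfilter : ∀ N : ℕ, (Finset.range N).filter P =
      (Finset.Icc 1 k).biUnion (fun i => (Finset.range N).filter (Q i)) := by
    intro N
    ext r
    simp only [Finset.mem_filter, Finset.mem_biUnion, Finset.mem_range, hPdef, hQdef]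
    constructor
    · rintro ⟨hr, d, hd, hd1, hm⟩
      obtain ⟨i, hik, rfl⟩ := (Nat.dvd_prime_pow hp).mp hd
      have hi1 : 1 ≤ i := by
        rcases Nat.eq_zero_or_pos i with h | h
        · subst h; simp at hd1
        · exact h
      exact ⟨i, Finset.mem_Icc.mpr ⟨hi1, hik⟩, hr, by exact_mod_cast hm⟩
    · rintro ⟨i, hi, hr, hm⟩
      obtain ⟨hi1, hik⟩ := Finset.mem_Icc.mp hi
      exact ⟨hr, p ^ i, pow_dvd_pow p hik,
        Nat.one_lt_pow (by omega) (by omega), by exact_mod_cast hm⟩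
  have hdisj : ∀ N : ℕ, ∀ i ∈ Finset.Icc 1 k, ∀ j ∈ Finset.Icc 1 k, i ≠ j →
      Disjoint ((Finset.range N).filter (Q i)) ((Finset.range N).filter (Q j)) := by
    intro N i hi j hj hij
    obtain ⟨hi1, hik⟩ := Finset.mem_Icc.mp hi
    obtain ⟨hj1, hjk⟩ := Finset.mem_Icc.mp hj
    rw [Finset.disjoint_left]
    rintro r hri hrj
    simp only [Finset.mem_filter, Finset.mem_range, hQdef] at hri hrj
    have hgcd := hCD (p ^ i) (p ^ j) (pow_dvd_pow p hik) (pow_dvd_pow p hjk)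
      (Nat.one_lt_pow (by omega) (by omega)) (Nat.one_lt_pow (by omega) (by omega))
      (fun h => hij (Nat.pow_right_injective hp2 h))
      ⟨(r : ℤ), hri.2, hrj.2⟩
    have hpdvd : p ∣ Nat.gcd (p ^ i) (p ^ j) :=
      Nat.dvd_gcd (dvd_pow_self p (by omega)) (dvd_pow_self p (by omega))
    rw [hgcd] at hpdvd
    have := Nat.le_of_dvd one_pos hpdvd
    omega
  -- the count over one period
  set c : ℕ := ((Finset.range M).filter P).card with hc
  have hcsum : c = ∑ i ∈ Finset.Icc 1 k, p ^ (k - i) := by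
    rw [hc, hfilter M, Finset.card_biUnion (hdisj M)]
    exact Finset.sum_congr rfl hQcard
  have hsum2 : ∑ i ∈ Finset.Icc 1 k, p ^ (k - i) = ∑ j ∈ Finset.range k, p ^ j := by
    refine Finset.sum_nbij' (fun i => k - i) (fun j => k - j) ?_ ?_ ?_ ?_ ?_
    · intro i hi
      obtain ⟨h1, h2⟩ := Finset.mem_Icc.mp hi
      beta_reduce
      exact Finset.mem_range.mpr (by omega)
    · intro j hj
      have := Finset.mem_range.mp hj
      beta_reduce
      exact Finset.mem_Icc.mpr ⟨by omega, by omega⟩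
    · intro i hi
      obtain ⟨h1, h2⟩ := Finset.mem_Icc.mp hi
      show k - (k - i) = i
      omega
    · intro j hj
      have := Finset.mem_range.mp hj
      show k - (k - j) = j
      omega
    · intro i hi
      obtain ⟨h1, h2⟩ := Finset.mem_Icc.mp hi
      show p ^ (k - i) = p ^ (k - i)
      rfl
  have hcval : c = (p ^ k - 1) / (p - 1) := by
    rw [hcsum, hsum2, Nat.geomSum_eq hp2 k]
  -- relate ncard sets to filter cards
  have hncard : ∀ N : ℕ,
      {r : ℕ | r < N ∧ ∃ d : ℕ, d ∣ p ^ k ∧ 1 < d ∧ (r : ℤ) ≡ a d [ZMOD (d : ℤ)]}.ncard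
        = ((Finset.range N).filter P).card := by
    intro N
    exact ncard_lt_and P N
  constructor
  · rw [hncard M, ← hc, hcval]
  -- density
  · set F : ℕ → ℕ := fun N => ((Finset.range N).filter P).card with hF
    have hFmul : ∀ q : ℕ, F (M * q) = q * c := fun q => card_filter_range_mul P M hper q
    have hFmono : Monotone F := fun N₁ N₂ h =>
      Finset.card_le_card (Finset.filter_subset_filter _ (Finset.range_subset_range.mpr h))
    have hlow : ∀ N, c * (N / M) ≤ F N := by
      intro N
      calc c * (N / M) = F (M * (N / M)) := by rw [hFmul]; ring
        _ ≤ F N := hFmono (Nat.mul_div_le N M)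
    have hup : ∀ N, F N ≤ c * (N / M) + c := by
      intro N
      calc F N ≤ F (M * (N / M + 1)) := hFmono (le_of_lt (Nat.lt_mul_div_succ N hM0))
        _ = (N / M + 1) * c := hFmul _
        _ = c * (N / M) + c := by ring
    -- the limit value is c / M
    have hdvd : (p - 1) ∣ (p ^ k - 1) := by simpa using Nat.sub_dvd_pow_sub_pow p 1 k
    have hmulc : c * (p - 1) = p ^ k - 1 := by rw [hcval]; exact Nat.div_mul_cancel hdvd
    have hcast : (c : ℝ) * ((p : ℝ) - 1) = (p : ℝ) ^ k - 1 := by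
      have h1 : (1 : ℕ) ≤ p := by omega
      have h2 : (1 : ℕ) ≤ p ^ k := Nat.one_le_pow _ _ (by omega)
      have := congrArg (fun n : ℕ => (n : ℝ)) hmulc
      push_cast [Nat.cast_sub h1, Nat.cast_sub h2] at this
      exact this
    have hMR : (0 : ℝ) < (M : ℝ) := by exact_mod_cast hM0
    have hval : ((p : ℝ) ^ k - 1) / ((p : ℝ) ^ k * ((p : ℝ) - 1)) = (c : ℝ) / (M : ℝ) := by
      have hpR : (1 : ℝ) < (p : ℝ) := by exact_mod_cast (by omega : 1 < p)
      have hMcast : (M : ℝ) = (p : ℝ) ^ k := by rw [hM]; push_cast; ring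
      rw [hMcast]
      have hp1 : (p : ℝ) - 1 ≠ 0 := by linarith
      have hpk : (p : ℝ) ^ k ≠ 0 := by positivity
      rw [div_eq_div_iff (by positivity) (by positivity)]
      linear_combination (-((p : ℝ) ^ k)) * hcast
    rw [hval]
    have hgoal : Filter.Tendsto (fun N : ℕ => (F N : ℝ) / N - (c : ℝ) / M)
        Filter.atTop (nhds 0) := by
      refine squeeze_zero_norm' (a := fun N : ℕ => (2 * c : ℝ) / N) ?_ ?_
      · filter_upwards [Filter.eventually_gt_atTop 0] with N hN
        have hNR : (0 : ℝ) < (N : ℝ) := by exact_mod_cast hN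
        have hq1 : ((M : ℝ)) * ((N / M : ℕ) : ℝ) ≤ (N : ℝ) := by
          exact_mod_cast Nat.mul_div_le N M
        have hq2 : (N : ℝ) < (M : ℝ) * (((N / M : ℕ) : ℝ) + 1) := by
          exact_mod_cast Nat.lt_mul_div_succ N hM0
        have hf1 : (c : ℝ) * ((N / M : ℕ) : ℝ) ≤ (F N : ℝ) := by
          exact_mod_cast hlow N
        have hf2 : (F N : ℝ) ≤ (c : ℝ) * ((N / M : ℕ) : ℝ) + c := by
          exact_mod_cast hup N
        have hC : (0 : ℝ) ≤ (c : ℝ) := Nat.cast_nonneg c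
        rw [Real.norm_eq_abs, abs_le]
        have hA : (c : ℝ) * N ≤ (F N : ℝ) * M + c * M := by
          linarith [mul_le_mul_of_nonneg_left hq2.le hC,
            mul_le_mul_of_nonneg_right hf1 hMR.le]
        have hB : (F N : ℝ) * M ≤ (c : ℝ) * N + c * M := by
          linarith [mul_le_mul_of_nonneg_left hq1 hC,
            mul_le_mul_of_nonneg_right hf2 hMR.le]
        have hcMN : (0:ℝ) ≤ c * M * N := by positivity
        constructor
        · have h1 : (c : ℝ) / M - (F N : ℝ) / N ≤ 2 * c / N := by
            rw [div_sub_div _ _ hMR.ne' hNR.ne', div_le_div_iff₀ (mul_pos hMR hNR) hNR]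
            linarith [mul_le_mul_of_nonneg_right (show (c:ℝ)*N - (F N : ℝ)*M ≤ c*M by linarith) hNR.le, hcMN]
          linarith
        · have h2 : (F N : ℝ) / N - (c : ℝ) / M ≤ 2 * c / N := by
            rw [div_sub_div _ _ hNR.ne' hMR.ne', div_le_div_iff₀ (mul_pos hNR hMR) hNR]
            linarith [mul_le_mul_of_nonneg_right (show (F N : ℝ)*M - (c:ℝ)*N ≤ c*M by linarith) hNR.le, hcMN]
          linarith
      · simpa using tendsto_const_div_atTop_nhds_zero_nat (2 * c : ℝ)
    have := tendsto_sub_nhds_zero_iff.mp hgoal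
    refine this.congr ?_
    intro N
    rw [hncard N]
end

section
/- Let p and q be distinct primes and let k ≥ 1. The integer n = q·p^k is non-intersecting if and only if k = 1 or p > 2. -/
/-!
Two congruences `a mod d` and `a' mod d'` overlap exactly when `gcd d d' ∣ a - a'`.

If `p = 2` and `k ≥ 2`, the divisors `2`, `4`, `2q` of `n` have pairwise gcd `2`, so their
residues would need pairwise different parities, which is impossible.

Otherwise give `q` the residue `0` and `q ^ e * p ^ (i + 1)` (with `e ≤ 1`) the residue
`(2 - e) * p ^ i`. Two such divisors at levels `i ≤ j` share the factor `p ^ (i + 1)`, while the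
difference of their residues is `p ^ i` times `(2 - e') * p ^ (j - i) - (2 - e)`, which is
`≡ -(2 - e)` mod `p` when `i < j` (a unit, since levels can only differ when `k ≥ 2`, and then
`p` is odd) and `e - e' = ±1` when `i = j`. Against `q`, the only divisors sharing a factor
are the `q * p ^ (j + 1)`, with residue `p ^ j` prime to `q`.
-/

theorem Int.exists_modEq_and_modEq_iff {a b m n : ℤ} :
    (∃ x, x ≡ a [ZMOD m] ∧ x ≡ b [ZMOD n]) ↔ (m.gcd n : ℤ) ∣ b - a := by
  rw [Int.coe_gcd, gcd_dvd_iff_exists]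
  constructor
  · rintro ⟨x, hxa, hxb⟩
    obtain ⟨u, hu⟩ := hxa.dvd
    obtain ⟨v, hv⟩ := hxb.dvd
    exact ⟨-u, v, by linear_combination hv - hu⟩
  · rintro ⟨u, v, h⟩
    exact ⟨a + m * u, Int.modEq_iff_dvd.mpr ⟨-u, by ring⟩,
      Int.modEq_iff_dvd.mpr ⟨v, by linear_combination h⟩⟩

theorem Int.not_pow_succ_dvd_sub {p c c' : ℤ} (hp : p ≠ 0) {i j : ℕ} (hij : i ≤ j)
    (h : ¬ p ∣ c' * p ^ (j - i) - c) : ¬ p ^ (i + 1) ∣ c' * p ^ j - c * p ^ i := by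
  rwa [show c' * p ^ j - c * p ^ i = p ^ i * (c' * p ^ (j - i) - c) by
      rw [mul_sub, ← mul_assoc, mul_comm (p ^ i), mul_assoc, ← pow_add, Nat.add_sub_cancel' hij]
      ring,
    pow_succ, mul_dvd_mul_iff_left (pow_ne_zero i hp)]

theorem exists_eq_pow_mul_pow_of_dvd {p q l k d : ℕ} (hp : p.Prime) (hq : q.Prime)
    (hd : d ∣ q ^ l * p ^ k) : ∃ e ≤ l, ∃ i ≤ k, d = q ^ e * p ^ i := by
  obtain ⟨d₁, d₂, h₁, h₂, rfl⟩ := Nat.dvd_mul.mp hd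
  obtain ⟨e, he, rfl⟩ := (Nat.dvd_prime_pow hq).mp h₁
  obtain ⟨i, hi, rfl⟩ := (Nat.dvd_prime_pow hp).mp h₂
  exact ⟨e, he, i, hi, rfl⟩

def IsCDResidues (n : ℕ) (a : ℕ → ℤ) : Prop :=
  ∀ d d' : ℕ, d ∣ n → d' ∣ n → 1 < d → 1 < d' → d ≠ d' →
    (∃ x : ℤ, x ≡ a d [ZMOD (d : ℤ)] ∧ x ≡ a d' [ZMOD (d' : ℤ)]) → Nat.gcd d d' = 1

theorem isCDResidues_iff {n : ℕ} {a : ℕ → ℤ} :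
    IsCDResidues n a ↔ ∀ d d' : ℕ, d ∣ n → d' ∣ n → 1 < d → 1 < d' → d ≠ d' →
      (Nat.gcd d d' : ℤ) ∣ a d' - a d → Nat.gcd d d' = 1 := by
  simp only [IsCDResidues, Int.exists_modEq_and_modEq_iff, Int.gcd_natCast_natCast]

theorem not_isCDResidues_of_dvd {n q : ℕ} (hq : Odd q) (hq₁ : q ≠ 1) (h₄ : 4 ∣ n)
    (h₂q : 2 * q ∣ n) (a : ℕ → ℤ) : ¬ IsCDResidues n a := by
  rw [isCDResidues_iff]
  intro ha
  have h₂ : 2 ∣ n := (by norm_num : 2 ∣ 4).trans h₄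
  have hq₃ : 3 ≤ q := by obtain ⟨r, rfl⟩ := hq; omega
  have parity : ∀ d d', d ∣ n → d' ∣ n → 1 < d → 1 < d' → d ≠ d' →
      Nat.gcd d d' = 2 → ¬ (2 : ℤ) ∣ a d' - a d := by
    intro d d' hd hd' h₁ h₁' hne hg h₂
    have := ha d d' hd hd' h₁ h₁' hne (by rw [hg]; exact_mod_cast h₂)
    omega
  have h₄₂q : Nat.gcd 4 (2 * q) = 2 := by
    rw [show 4 = 2 * 2 by rfl, Nat.gcd_mul_left, (Nat.coprime_two_left.mpr hq).gcd_eq_one]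
  have := parity 2 4 h₂ h₄ (by norm_num) (by norm_num) (by norm_num) rfl
  have := parity 2 (2 * q) h₂ h₂q (by norm_num) (by omega) (by omega)
    (Nat.gcd_eq_left (dvd_mul_right 2 q))
  have := parity 4 (2 * q) h₄ h₂q (by norm_num) (by omega) (by omega) h₄₂q
  omega

-- `q` gets the residue `0` and `q ^ e * p ^ (i + 1)` gets `(2 - e) * p ^ i`.
def cdResidue (p q d : ℕ) : ℤ :=
  if p ∣ d then (2 - padicValNat q d : ℤ) * p ^ (padicValNat p d - 1) else 0

section

variable {p q : ℕ} (hp : p.Prime) (hq : q.Prime) (hpq : p ≠ q)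
include hp hq hpq

theorem cdResidue_pow (e : ℕ) : cdResidue p q (q ^ e) = 0 :=
  if_neg fun h => hpq ((Nat.prime_dvd_prime_iff_eq hp hq).mp (hp.dvd_of_dvd_pow h))

theorem cdResidue_pow_mul_pow_succ (e i : ℕ) :
    cdResidue p q (q ^ e * p ^ (i + 1)) = (2 - e) * p ^ i := by
  have := Fact.mk hp
  have := Fact.mk hq
  have hqp : ¬ q ∣ p ^ (i + 1) := fun h =>
    hpq ((Nat.prime_dvd_prime_iff_eq hq hp).mp (hq.dvd_of_dvd_pow h)).symm
  have hpq' : ¬ p ∣ q ^ e := fun h =>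
    hpq ((Nat.prime_dvd_prime_iff_eq hp hq).mp (hp.dvd_of_dvd_pow h))
  rw [cdResidue, if_pos (dvd_mul_of_dvd_right (dvd_pow_self p i.succ_ne_zero) _),
    padicValNat.mul (pow_ne_zero _ hq.ne_zero) (pow_ne_zero _ hp.ne_zero),
    padicValNat.mul (pow_ne_zero _ hq.ne_zero) (pow_ne_zero _ hp.ne_zero),
    padicValNat.prime_pow, padicValNat.prime_pow, padicValNat.eq_zero_of_not_dvd hqp,
    padicValNat.eq_zero_of_not_dvd hpq']
  simp

end

theorem not_prime_pow_succ_dvd_two_sub_mul_pow_sub {p e e' i j : ℕ} (hp : p.Prime)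
    (he : e ≤ 1) (he' : e' ≤ 1) (hij : i ≤ j) (hlt : i < j → p ≠ 2)
    (heq : i = j → e ≠ e') :
    ¬ (p : ℤ) ^ (i + 1) ∣ (2 - e') * p ^ j - (2 - e) * p ^ i := by
  refine Int.not_pow_succ_dvd_sub (by exact_mod_cast hp.ne_zero) hij fun h => ?_
  rcases hij.lt_or_eq with hij | rfl
  · have h₂ : (p : ℤ) ∣ 2 - e := by
      have := (dvd_pow_self (p : ℤ) (by omega : j - i ≠ 0)).mul_left (2 - (e' : ℤ))
      simpa using this.sub h
    interval_cases e
    · exact hlt hij ((Nat.prime_dvd_prime_iff_eq hp Nat.prime_two).mp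
        (by exact_mod_cast (by simpa using h₂ : (p : ℤ) ∣ 2)))
    · exact hp.not_dvd_one (by exact_mod_cast (by simpa using h₂ : (p : ℤ) ∣ 1))
  · have : ¬ (p : ℤ) ∣ 1 := by exact_mod_cast hp.not_dvd_one
    interval_cases e <;> interval_cases e' <;> simp_all

theorem isCDResidues_cdResidue {p q k : ℕ} (hp : p.Prime) (hq : q.Prime) (hpq : p ≠ q)
    (hk : k ≤ 1 ∨ p ≠ 2) : IsCDResidues (q * p ^ k) (cdResidue p q) := by
  rw [isCDResidues_iff]
  intro d d' hd hd' h₁ h₁' hne hdvd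
  rw [← pow_one q] at hd hd'
  obtain ⟨e, he, i, hi, rfl⟩ := exists_eq_pow_mul_pow_of_dvd hp hq hd
  obtain ⟨e', he', j, hj, rfl⟩ := exists_eq_pow_mul_pow_of_dvd hp hq hd'
  clear hd hd'
  wlog hij : i ≤ j generalizing e e' i j
  · rw [Nat.gcd_comm] at hdvd ⊢
    exact this e' he' j hj h₁' e he i hi h₁ hne.symm (dvd_sub_comm.mp hdvd) (by omega)
  obtain rfl | ⟨i, rfl⟩ : i = 0 ∨ ∃ i₀, i = i₀ + 1 := by cases i <;> simp
  · obtain rfl : e = 1 := by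
      interval_cases e
      · simp at h₁
      · rfl
    obtain ⟨j, rfl⟩ : ∃ j₀, j = j₀ + 1 := ⟨j - 1, by
      rcases Nat.eq_zero_or_pos j with rfl | hj₀
      · interval_cases e' <;> simp at h₁' hne
      · omega⟩
    interval_cases e'
    · simpa using ((Nat.coprime_primes hq hp).mpr hpq.symm).pow_right (j + 1)
    · exfalso
      rw [cdResidue_pow_mul_pow_succ hp hq hpq, pow_zero, mul_one, cdResidue_pow hp hq hpq,
        Nat.gcd_mul_right_right, pow_one] at hdvd
      have : q ∣ p ^ j := by exact_mod_cast (by simpa using hdvd : (q : ℤ) ∣ (p : ℤ) ^ j)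
      exact hpq ((Nat.prime_dvd_prime_iff_eq hq hp).mp (hq.dvd_of_dvd_pow this)).symm
  · exfalso
    obtain ⟨j, rfl⟩ : ∃ j₀, j = j₀ + 1 := ⟨j - 1, by omega⟩
    rw [cdResidue_pow_mul_pow_succ hp hq hpq, cdResidue_pow_mul_pow_succ hp hq hpq] at hdvd
    have hgcd :
        (p : ℤ) ^ (i + 1) ∣ (Nat.gcd (q ^ e * p ^ (i + 1)) (q ^ e' * p ^ (j + 1)) : ℤ) := by
      exact_mod_cast Nat.dvd_gcd (dvd_mul_left _ _) ((pow_dvd_pow p hij).mul_left _)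
    exact not_prime_pow_succ_dvd_two_sub_mul_pow_sub hp he he' (by omega)
      (fun _ => hk.resolve_left (by omega)) (fun hij hee => hne (by rw [hij, hee]))
      (hgcd.trans hdvd)

/-- Let `p` and `q` be distinct primes and `k ≥ 1`. Then `n = q * p^k` is
non-intersecting (there exist residues `a d`, one for each divisor `d > 1` of `n`, such
that `{a d mod d : d ∣ n, d > 1}` is a CD congruence set) if and only if
`k = 1` or `p > 2`. -/
theorem q_mul_prime_pow_nonintersecting_iff (p q : ℕ) (hp : p.Prime) (hq : q.Prime)
    (hpq : p ≠ q) (k : ℕ) (hk : 1 ≤ k) :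
    (∃ a : ℕ → ℤ, ∀ d d' : ℕ, d ∣ q * p ^ k → d' ∣ q * p ^ k → 1 < d → 1 < d' → d ≠ d' →
      (∃ x : ℤ, x ≡ a d [ZMOD (d : ℤ)] ∧ x ≡ a d' [ZMOD (d' : ℤ)]) →
      Nat.gcd d d' = 1) ↔ (k = 1 ∨ 2 < p) := by
  constructor
  · rintro ⟨a, ha⟩
    by_contra! h
    obtain rfl : p = 2 := le_antisymm h.2 hp.two_le
    have hk₂ : 2 ≤ k := by omega
    have h₄ : 4 ∣ q * 2 ^ k := (pow_dvd_pow 2 hk₂).mul_left q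
    have h₂q : 2 * q ∣ q * 2 ^ k := by
      rw [mul_comm 2]
      exact mul_dvd_mul_left q (dvd_pow_self 2 (by omega))
    exact not_isCDResidues_of_dvd (hq.odd_of_ne_two hpq.symm) hq.one_lt.ne' h₄ h₂q a ha
  · exact fun h => ⟨cdResidue p q, isCDResidues_cdResidue hp hq hpq (h.imp le_of_eq ne_of_gt)⟩
end

section
/- Let p and q be distinct primes with p = 2 and k ≥ 2, i.e., n = q·2^k. Then n is not non-intersecting: there is no choice of residues a_d for each divisor d > 1 of n making {a_d mod d : d | n, d > 1} a CD congruence set. -/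
/-!
Any two of the moduli `2`, `4` and `2q` divide `n = q * 2 ^ k` and have greatest common divisor
exactly `2`. Two congruences whose moduli have gcd `2` overlap as soon as their residues agree
mod `2` (Chinese remainder theorem), and of three residues two agree mod `2`. So two of the
congruences `a 2 mod 2`, `a 4 mod 4`, `a (2q) mod 2q` overlap although their moduli are not
coprime.
-/

theorem Int.exists_modEq_and_modEq_of_modEq_gcd {m n a b : ℤ} (h : a ≡ b [ZMOD m.gcd n]) :
    ∃ x, x ≡ a [ZMOD m] ∧ x ≡ b [ZMOD n] := by
  obtain ⟨t, ht⟩ := h.dvd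
  refine ⟨a + m * m.gcdA n * t, ?_, ?_⟩
  · exact Int.modEq_iff_dvd.mpr ⟨-(m.gcdA n * t), by ring⟩
  · exact Int.modEq_iff_dvd.mpr
      ⟨m.gcdB n * t, by linear_combination ht + t * Int.gcd_eq_gcd_ab m n⟩

theorem Int.modEq_two_of_three (a b c : ℤ) :
    a ≡ b [ZMOD 2] ∨ a ≡ c [ZMOD 2] ∨ b ≡ c [ZMOD 2] := by
  simp only [Int.ModEq]
  omega

theorem exists_overlap_of_gcd_eq_two {m₁ m₂ m₃ : ℕ} (h₁₂ : m₁.gcd m₂ = 2)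
    (h₁₃ : m₁.gcd m₃ = 2) (h₂₃ : m₂.gcd m₃ = 2) (a₁ a₂ a₃ : ℤ) :
    (∃ x, x ≡ a₁ [ZMOD m₁] ∧ x ≡ a₂ [ZMOD m₂]) ∨
      (∃ x, x ≡ a₁ [ZMOD m₁] ∧ x ≡ a₃ [ZMOD m₃]) ∨
      (∃ x, x ≡ a₂ [ZMOD m₂] ∧ x ≡ a₃ [ZMOD m₃]) := by
  have overlap {m m' : ℕ} (hm : m.gcd m' = 2) {a a' : ℤ} (h : a ≡ a' [ZMOD 2]) :
      ∃ x, x ≡ a [ZMOD m] ∧ x ≡ a' [ZMOD m'] :=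
    Int.exists_modEq_and_modEq_of_modEq_gcd (by simpa [Int.gcd_natCast_natCast, hm] using h)
  rcases Int.modEq_two_of_three a₁ a₂ a₃ with h | h | h
  · exact .inl (overlap h₁₂ h)
  · exact .inr (.inl (overlap h₁₃ h))
  · exact .inr (.inr (overlap h₂₃ h))

/-- Let `q` be an odd prime (i.e. a prime distinct from `2`) and `k ≥ 2`. Then
`n = q * 2^k` is not non-intersecting: there is no choice of residues `a d` for the
divisors `d > 1` of `n` making `{a d mod d : d ∣ n, d > 1}` a CD congruence set. -/
theorem q_mul_two_pow_not_nonintersecting (q : ℕ) (hq : q.Prime) (hq2 : q ≠ 2)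
    (k : ℕ) (hk : 2 ≤ k) :
    ¬ ∃ a : ℕ → ℤ, ∀ d d' : ℕ, d ∣ q * 2 ^ k → d' ∣ q * 2 ^ k → 1 < d → 1 < d' → d ≠ d' →
      (∃ x : ℤ, x ≡ a d [ZMOD (d : ℤ)] ∧ x ≡ a d' [ZMOD (d' : ℤ)]) →
      Nat.gcd d d' = 1 := by
  rintro ⟨a, hCD⟩
  have hq3 : 3 ≤ q := by have := hq.two_le; omega
  have h4 : 4 ∣ q * 2 ^ k := (pow_dvd_pow 2 hk).trans (dvd_mul_left _ _)
  have h2 : 2 ∣ q * 2 ^ k := (by norm_num : 2 ∣ 4).trans h4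
  have h2q : 2 * q ∣ q * 2 ^ k := by
    rw [mul_comm 2 q]; exact mul_dvd_mul_left q (dvd_pow_self 2 (by omega))
  have hcop : Nat.Coprime 2 q := (Nat.coprime_primes Nat.prime_two hq).mpr hq2.symm
  have hg24 : Nat.gcd 2 4 = 2 := by norm_num
  have hg22q : Nat.gcd 2 (2 * q) = 2 := Nat.gcd_mul_right_right q 2
  have hg42q : Nat.gcd 4 (2 * q) = 2 := by
    rw [show 4 = 2 * 2 from rfl, Nat.gcd_mul_left, hcop.gcd_eq_one]
  have no_overlap {d d' : ℕ} (hd : d ∣ q * 2 ^ k) (hd' : d' ∣ q * 2 ^ k) (h1 : 1 < d)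
      (h1' : 1 < d') (hne : d ≠ d') (hg : d.gcd d' = 2) :
      ¬ ∃ x : ℤ, x ≡ a d [ZMOD (d : ℤ)] ∧ x ≡ a d' [ZMOD (d' : ℤ)] := fun h => by
    simpa [hg] using hCD d d' hd hd' h1 h1' hne h
  rcases exists_overlap_of_gcd_eq_two hg24 hg22q hg42q (a 2) (a 4) (a (2 * q)) with h | h | h
  · exact no_overlap h2 h4 (by norm_num) (by norm_num) (by norm_num) hg24 h
  · exact no_overlap h2 h2q (by norm_num) (by omega) (by omega) hg22q h
  · exact no_overlap h4 h2q (by norm_num) (by omega) (by omega) hg42q h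
end

section
/- Let p and q be distinct primes, k ≥ 1, and n = q·p^k, and suppose k = 1 or p > 2. For every CD congruence set A = {a_d mod d : d | n, d > 1} whose moduli are exactly the divisors of n greater than 1, the number of residue classes modulo n covered by A equals p^k + q·(p^k − 1)/(p − 1); equivalently, the natural density of integers covered by A is 1/q + (p^k − 1)/(p^k (p − 1)). -/
set_option maxHeartbeats 1000000

lemma aux_count (d c m : ℕ) (hd : 0 < d) (hc : c < d) :
    ((Finset.range (d * m)).filter (fun r => r % d = c)).card = m := by
  have key : ((Finset.range (d * m)).filter (fun r => r % d = c)).card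
      = (Finset.range m).card := by
    apply Finset.card_nbij' (fun r => r / d) (fun t => c + d * t)
    · intro r hr
      simp only [Finset.mem_coe, Finset.mem_filter, Finset.mem_range] at hr ⊢
      exact Nat.div_lt_of_lt_mul hr.1
    · intro t ht
      simp only [Finset.mem_coe, Finset.mem_filter, Finset.mem_range] at ht ⊢
      constructor
      · calc c + d * t < d + d * t := by omega
          _ = d * (t + 1) := by ring
          _ ≤ d * m := Nat.mul_le_mul_left d (by omega)
      · simp [Nat.add_mul_mod_self_left, Nat.mod_eq_of_lt hc]
    · intro r hr
      simp only [Finset.mem_coe, Finset.mem_filter, Finset.mem_range] at hr ⊢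
      have := Nat.div_add_mod r d
      omega
    · intro t ht
      simp only [Finset.mem_coe, Finset.mem_range] at ht ⊢
      rw [Nat.add_mul_div_left _ _ hd, Nat.div_eq_of_lt hc]
      omega
  simpa using key

lemma aux_geom (ppp k : ℕ) (hp : 2 ≤ ppp) :
    (∑ j ∈ Finset.range k, ppp ^ j) * (ppp - 1) = ppp ^ k - 1 := by
  induction k with
  | zero => simp
  | succ k ih =>
    rw [Finset.sum_range_succ, add_mul, ih, pow_succ]
    have h1 : 1 ≤ ppp ^ k := Nat.one_le_pow _ _ (by omega)
    have h2 : ppp ^ k * (ppp - 1) = ppp ^ k * ppp - ppp ^ k := by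
      rw [Nat.mul_sub]; omega
    have h3 : ppp ^ k ≤ ppp ^ k * ppp := Nat.le_mul_of_pos_right _ (by omega)
    omega

lemma aux_divisors (p q k d : ℕ) (hp : p.Prime) (hq : q.Prime)
    (hd : d ∣ q * p ^ k) (hd1 : 1 < d) :
    d = q ∨ (∃ i, 1 ≤ i ∧ i ≤ k ∧ d = p ^ i) ∨ (∃ i, 1 ≤ i ∧ i ≤ k ∧ d = q * p ^ i) := by
  rw [Nat.dvd_mul] at hd
  obtain ⟨y, z, hy, hz, hyz⟩ := hd
  obtain ⟨i, hik, rfl⟩ := (Nat.dvd_prime_pow hp).mp hz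
  rcases (Nat.dvd_prime hq).mp hy with rfl | rfl
  · rcases Nat.eq_zero_or_pos i with rfl | hi
    · simp only [pow_zero, one_mul, mul_one] at hyz; omega
    · right; left; exact ⟨i, hi, hik, by rw [← hyz, one_mul]⟩
  · rcases Nat.eq_zero_or_pos i with rfl | hi
    · left; simp only [pow_zero, mul_one] at hyz; omega
    · right; right; exact ⟨i, hi, hik, hyz.symm⟩

def clsF (n d c : ℕ) : Finset ℕ := (Finset.range n).filter (fun r => r % d = c)

lemma aux_modeq_iff (d : ℕ) (hd : 0 < d) (b : ℤ) (r : ℕ) :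
    ((r : ℤ) ≡ b [ZMOD (d : ℤ)]) ↔ r % d = (b % (d : ℤ)).toNat := by
  have hdz : (d : ℤ) ≠ 0 := by exact_mod_cast hd.ne'
  have h1 : (r : ℤ) % d = ((r % d : ℕ) : ℤ) := by push_cast; ring
  have h2 : 0 ≤ b % (d : ℤ) := Int.emod_nonneg b hdz
  constructor
  · intro h
    have : ((r % d : ℕ) : ℤ) = b % d := by rw [← h1]; exact h
    omega
  · intro h
    show (r : ℤ) % d = b % d
    rw [h1, h]; omega

lemma aux_cls_card (n d c : ℕ) (hd : 0 < d) (hc : c < d) (hdn : d ∣ n) :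
    (clsF n d c).card = n / d := by
  obtain ⟨m, rfl⟩ := hdn
  rw [clsF, aux_count d c m hd hc, Nat.mul_div_cancel_left _ hd]

lemma aux_cls_inter (n d e c1 c2 : ℕ) (hd : 0 < d) (he : 0 < e)
    (hcop : Nat.Coprime d e) (hc1 : c1 < d) (hc2 : c2 < e) :
    ∃ w : ℕ, w < d * e ∧ clsF n d c1 ∩ clsF n e c2 = clsF n (d * e) w := by
  obtain ⟨w0, hw1, hw2⟩ := Nat.chineseRemainder hcop c1 c2
  refine ⟨w0 % (d * e), Nat.mod_lt _ (by positivity), ?_⟩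
  ext r
  simp only [clsF, Finset.mem_inter, Finset.mem_filter, Finset.mem_range]
  constructor
  · rintro ⟨⟨hr, h1⟩, ⟨_, h2⟩⟩
    refine ⟨hr, ?_⟩
    have hmd : r ≡ w0 [MOD d] := by
      have : r ≡ c1 [MOD d] := by unfold Nat.ModEq; rw [Nat.mod_eq_of_lt hc1]; exact h1
      exact this.trans hw1.symm
    have hme : r ≡ w0 [MOD e] := by
      have : r ≡ c2 [MOD e] := by unfold Nat.ModEq; rw [Nat.mod_eq_of_lt hc2]; exact h2
      exact this.trans hw2.symm
    have := (Nat.modEq_and_modEq_iff_modEq_mul hcop).mp ⟨hmd, hme⟩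
    unfold Nat.ModEq at this
    rw [this]
  · rintro ⟨hr, h⟩
    have hmde : r ≡ w0 [MOD d * e] := by
      unfold Nat.ModEq; rw [h]
    have hpair := (Nat.modEq_and_modEq_iff_modEq_mul hcop).mpr hmde
    have h1 : r % d = c1 := by
      have := hpair.1.trans hw1
      unfold Nat.ModEq at this; rw [this, Nat.mod_eq_of_lt hc1]
    have h2 : r % e = c2 := by
      have := hpair.2.trans hw2
      unfold Nat.ModEq at this; rw [this, Nat.mod_eq_of_lt hc2]
    exact ⟨⟨hr, h1⟩, ⟨hr, h2⟩⟩

/-- Let `p ≠ q` be primes, `k ≥ 1`, `n = q * p^k`, and suppose `k = 1` or `p > 2`.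
For every CD congruence set `{a d mod d : d ∣ n, d > 1}` whose moduli are the divisors of
`n` greater than `1`, the number of residue classes mod `n` covered equals
`p^k + q * (p^k - 1)/(p - 1)`; equivalently, the natural density of covered integers is
`1/q + (p^k - 1)/(p^k (p - 1))`. -/
theorem q_mul_prime_pow_CD_density (p q : ℕ) (hp : p.Prime) (hq : q.Prime) (hpq : p ≠ q)
    (k : ℕ) (hk : 1 ≤ k) (hcase : k = 1 ∨ 2 < p) (a : ℕ → ℤ)
    (hCD : ∀ d d' : ℕ, d ∣ q * p ^ k → d' ∣ q * p ^ k → 1 < d → 1 < d' → d ≠ d' →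
      (∃ x : ℤ, x ≡ a d [ZMOD (d : ℤ)] ∧ x ≡ a d' [ZMOD (d' : ℤ)]) →
      Nat.gcd d d' = 1) :
    {r : ℕ | r < q * p ^ k ∧
        ∃ d : ℕ, d ∣ q * p ^ k ∧ 1 < d ∧ (r : ℤ) ≡ a d [ZMOD (d : ℤ)]}.ncard
      = p ^ k + q * ((p ^ k - 1) / (p - 1)) ∧
    Filter.Tendsto
      (fun N : ℕ =>
        ({r : ℕ | r < N ∧
            ∃ d : ℕ, d ∣ q * p ^ k ∧ 1 < d ∧ (r : ℤ) ≡ a d [ZMOD (d : ℤ)]}.ncard : ℝ) / N)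
      Filter.atTop
      (nhds (1 / (q : ℝ) + ((p : ℝ) ^ k - 1) / ((p : ℝ) ^ k * ((p : ℝ) - 1)))) := by
  classical
  have hp2 : 2 ≤ p := hp.two_le
  have hq2 : 2 ≤ q := hq.two_le
  set n : ℕ := q * p ^ k with hn
  have hpk1 : 1 ≤ p ^ k := Nat.one_le_pow _ _ (by omega)
  have hn0 : 0 < n := by positivity
  set P : ℕ → Prop := fun r => ∃ d : ℕ, d ∣ n ∧ 1 < d ∧ (r : ℤ) ≡ a d [ZMOD (d : ℤ)]
    with hPdef
  set c : ℕ → ℕ := fun d => (a d % (d : ℤ)).toNat with hcdef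
  have hclt : ∀ d, 0 < d → c d < d := by
    intro d hd
    have h1 := Int.emod_lt_of_pos (a d) (by exact_mod_cast hd : (0:ℤ) < (d:ℤ))
    have h2 := Int.emod_nonneg (a d) (by exact_mod_cast hd.ne' : (d:ℤ) ≠ 0)
    simp only [hcdef]
    omega
  have hPiff : ∀ (d r : ℕ), 0 < d → (((r:ℤ) ≡ a d [ZMOD (d:ℤ)]) ↔ r % d = c d) :=
    fun d r hd => aux_modeq_iff d hd (a d) r
  -- disjointness from CD
  have hdisj : ∀ d d', d ∣ n → d' ∣ n → 1 < d → 1 < d' → d ≠ d' → Nat.gcd d d' ≠ 1 →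
      ∀ m, Disjoint (clsF m d (c d)) (clsF m d' (c d')) := by
    intro d d' h1 h2 h3 h4 h5 h6 m
    rw [Finset.disjoint_left]
    rintro r hr hr'
    simp only [clsF, Finset.mem_filter] at hr hr'
    exact h6 (hCD d d' h1 h2 h3 h4 h5
      ⟨(r:ℤ), (hPiff d r (by omega)).mpr hr.2, (hPiff d' r (by omega)).mpr hr'.2⟩)
  have hgcd : ∀ t d d' : ℕ, t ∣ d → t ∣ d' → 1 < t → Nat.gcd d d' ≠ 1 := by
    intro t d d' h1 h2 h3 h
    have := Nat.dvd_gcd h1 h2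
    rw [h] at this
    exact absurd (Nat.dvd_one.mp this) (by omega)
  -- divisibility facts
  have hq_dvd : q ∣ n := Dvd.intro _ rfl
  have hpi_dvd : ∀ i, 1 ≤ i → i ≤ k → p ^ i ∣ n :=
    fun i _ h2 => dvd_mul_of_dvd_right (pow_dvd_pow p h2) q
  have hqpi_dvd : ∀ i, 1 ≤ i → i ≤ k → q * p ^ i ∣ n :=
    fun i _ h2 => mul_dvd_mul_left q (pow_dvd_pow p h2)
  have hpi_gt : ∀ i, 1 ≤ i → 1 < p ^ i := fun i h1 => Nat.one_lt_pow (by omega) (by omega)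
  have hqpi_gt : ∀ i, 1 ≤ i → 1 < q * p ^ i := by
    intro i h1
    have := hpi_gt i h1
    calc 1 < q := by omega
      _ ≤ q * p ^ i := Nat.le_mul_of_pos_right _ (by omega)
  have hpi_ne_qpj : ∀ i j, 1 ≤ i → p ^ i ≠ q * p ^ j := by
    intro i j h1 h
    have hqp : q ∣ p ^ i := h ▸ Dvd.intro _ rfl
    exact hpq ((Nat.prime_dvd_prime_iff_eq hq hp).mp (hq.dvd_of_dvd_pow hqp)).symm
  -- the three families
  set Cq : Finset ℕ := clsF n q (c q) with hCq
  set Vp : Finset ℕ := (Finset.Icc 1 k).biUnion (fun i => clsF n (p ^ i) (c (p ^ i)))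
    with hVp
  set Vqp : Finset ℕ := (Finset.Icc 1 k).biUnion (fun i => clsF n (q * p ^ i) (c (q * p ^ i)))
    with hVqp
  have hT : ((Finset.range n).filter P) = Cq ∪ (Vp ∪ Vqp) := by
    ext r
    simp only [Finset.mem_filter, Finset.mem_union, Finset.mem_biUnion, Finset.mem_Icc,
      hCq, hVp, hVqp, clsF, Finset.mem_range, hPdef]
    constructor
    · rintro ⟨hr, d, hdn, hd1, hcong⟩
      have hmod := (hPiff d r (by omega)).mp hcong
      rcases aux_divisors p q k d hp hq hdn hd1 with rfl | ⟨i, hi1, hik, rfl⟩ |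
          ⟨i, hi1, hik, rfl⟩
      · exact Or.inl ⟨hr, hmod⟩
      · exact Or.inr (Or.inl ⟨i, ⟨hi1, hik⟩, hr, hmod⟩)
      · exact Or.inr (Or.inr ⟨i, ⟨hi1, hik⟩, hr, hmod⟩)
    · rintro (⟨hr, h⟩ | ⟨i, ⟨hi1, hik⟩, hr, h⟩ | ⟨i, ⟨hi1, hik⟩, hr, h⟩)
      · exact ⟨hr, q, hq_dvd, by omega, (hPiff q r (by omega)).mpr h⟩
      · exact ⟨hr, p ^ i, hpi_dvd i hi1 hik, hpi_gt i hi1,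
          (hPiff (p ^ i) r (by positivity)).mpr h⟩
      · exact ⟨hr, q * p ^ i, hqpi_dvd i hi1 hik, hqpi_gt i hi1,
          (hPiff (q * p ^ i) r (by positivity)).mpr h⟩
  -- cards of individual classes
  have hcardCq : Cq.card = p ^ k := by
    rw [hCq, aux_cls_card n q (c q) (by omega) (hclt q (by omega)) hq_dvd, hn,
      Nat.mul_div_cancel_left _ (by omega : 0 < q)]
  have hcard_pi : ∀ i, 1 ≤ i → i ≤ k → (clsF n (p ^ i) (c (p ^ i))).card = q * p ^ (k - i) := by
    intro i h1 h2
    have hki : k - i + i = k := by omega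
    have hrep : n = p ^ i * (q * p ^ (k - i)) := by
      rw [hn, mul_comm (p ^ i), mul_assoc, ← pow_add, hki]
    rw [aux_cls_card n _ _ (by positivity) (hclt _ (by positivity)) (hpi_dvd i h1 h2), hrep,
      Nat.mul_div_cancel_left _ (by positivity)]
  have hcard_qpi : ∀ i, 1 ≤ i → i ≤ k →
      (clsF n (q * p ^ i) (c (q * p ^ i))).card = p ^ (k - i) := by
    intro i h1 h2
    have hki : i + (k - i) = k := by omega
    have hrep : n = (q * p ^ i) * p ^ (k - i) := by
      rw [hn, mul_assoc, ← pow_add, hki]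
    rw [aux_cls_card n _ _ (by positivity) (hclt _ (by positivity)) (hqpi_dvd i h1 h2), hrep,
      Nat.mul_div_cancel_left _ (by positivity)]
  set S : ℕ := ∑ j ∈ Finset.range k, p ^ j with hSdef
  have hsumS : ∑ i ∈ Finset.Icc 1 k, p ^ (k - i) = S := by
    rw [hSdef]
    apply Finset.sum_nbij' (fun i => k - i) (fun j => k - j)
    · intro i hi; simp only [Finset.mem_Icc] at hi; simp only [Finset.mem_range]; omega
    · intro j hj; simp only [Finset.mem_range] at hj; simp only [Finset.mem_Icc]; omega
    · intro i hi; simp only [Finset.mem_Icc] at hi; omega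
    · intro j hj; simp only [Finset.mem_range] at hj; omega
    · intro i hi; rfl
  -- pairwise disjointness instances
  have hdisj_pp : ∀ i ∈ Finset.Icc 1 k, ∀ j ∈ Finset.Icc 1 k, i ≠ j →
      Disjoint (clsF n (p ^ i) (c (p ^ i))) (clsF n (p ^ j) (c (p ^ j))) := by
    intro i hi j hj hij
    simp only [Finset.mem_Icc] at hi hj
    exact hdisj _ _ (hpi_dvd i hi.1 hi.2) (hpi_dvd j hj.1 hj.2) (hpi_gt i hi.1)
      (hpi_gt j hj.1) (fun h => hij (Nat.pow_right_injective hp2 h))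
      (hgcd p _ _ (dvd_pow_self p (by omega)) (dvd_pow_self p (by omega)) (by omega)) n
  have hdisj_qpqp : ∀ i ∈ Finset.Icc 1 k, ∀ j ∈ Finset.Icc 1 k, i ≠ j →
      Disjoint (clsF n (q * p ^ i) (c (q * p ^ i))) (clsF n (q * p ^ j) (c (q * p ^ j))) := by
    intro i hi j hj hij
    simp only [Finset.mem_Icc] at hi hj
    refine hdisj _ _ (hqpi_dvd i hi.1 hi.2) (hqpi_dvd j hj.1 hj.2) (hqpi_gt i hi.1)
      (hqpi_gt j hj.1) ?_ (hgcd q _ _ (Dvd.intro _ rfl) (Dvd.intro _ rfl) (by omega)) n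
    intro h
    exact hij (Nat.pow_right_injective hp2 (Nat.eq_of_mul_eq_mul_left (by omega) h))
  have hdisj_p_qp : ∀ i ∈ Finset.Icc 1 k, ∀ j ∈ Finset.Icc 1 k,
      Disjoint (clsF n (p ^ i) (c (p ^ i))) (clsF n (q * p ^ j) (c (q * p ^ j))) := by
    intro i hi j hj
    simp only [Finset.mem_Icc] at hi hj
    exact hdisj _ _ (hpi_dvd i hi.1 hi.2) (hqpi_dvd j hj.1 hj.2) (hpi_gt i hi.1)
      (hqpi_gt j hj.1) (hpi_ne_qpj i j hi.1)
      (hgcd p _ _ (dvd_pow_self p (by omega))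
        (dvd_mul_of_dvd_right (dvd_pow_self p (by omega)) q) (by omega)) n
  have hdisj_q_qp : ∀ i ∈ Finset.Icc 1 k,
      Disjoint Cq (clsF n (q * p ^ i) (c (q * p ^ i))) := by
    intro i hi
    simp only [Finset.mem_Icc] at hi
    refine hdisj _ _ hq_dvd (hqpi_dvd i hi.1 hi.2) (by omega) (hqpi_gt i hi.1) ?_
      (hgcd q _ _ dvd_rfl (Dvd.intro _ rfl) (by omega)) n
    intro h
    have := hpi_gt i hi.1
    nlinarith [h]
  -- cards of unions
  have hcardVqp : Vqp.card = S := by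
    rw [hVqp, Finset.card_biUnion hdisj_qpqp, ← hsumS]
    exact Finset.sum_congr rfl fun i hi => by
      simp only [Finset.mem_Icc] at hi; exact hcard_qpi i hi.1 hi.2
  have hcardVp : Vp.card = q * S := by
    rw [hVp, Finset.card_biUnion hdisj_pp, ← hsumS, Finset.mul_sum]
    exact Finset.sum_congr rfl fun i hi => by
      simp only [Finset.mem_Icc] at hi; exact hcard_pi i hi.1 hi.2
  have hVpVqp : Disjoint Vp Vqp := by
    rw [hVp, hVqp, Finset.disjoint_biUnion_left]
    intro i hi
    rw [Finset.disjoint_biUnion_right]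
    intro j hj
    exact hdisj_p_qp i hi j hj
  have hCqVqp : Disjoint Cq Vqp := by
    rw [hVqp, Finset.disjoint_biUnion_right]
    exact hdisj_q_qp
  have hCqVp : Cq ∩ Vp = (Finset.Icc 1 k).biUnion
      (fun i => Cq ∩ clsF n (p ^ i) (c (p ^ i))) := by
    ext r
    simp only [Finset.mem_inter, Finset.mem_biUnion, hVp]
    tauto
  have hcard_inter_i : ∀ i ∈ Finset.Icc 1 k,
      (Cq ∩ clsF n (p ^ i) (c (p ^ i))).card = p ^ (k - i) := by
    intro i hi
    simp only [Finset.mem_Icc] at hi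
    obtain ⟨w, hw, hweq⟩ := aux_cls_inter n q (p ^ i) (c q) (c (p ^ i)) (by omega)
      (by positivity) (((Nat.coprime_primes hq hp).mpr (Ne.symm hpq)).pow_right i)
      (hclt q (by omega)) (hclt _ (by positivity))
    have hki : i + (k - i) = k := by omega
    have hrep : n = (q * p ^ i) * p ^ (k - i) := by
      rw [hn, mul_assoc, ← pow_add, hki]
    rw [hCq, hweq, aux_cls_card n _ _ (by positivity) hw (hqpi_dvd i hi.1 hi.2), hrep,
      Nat.mul_div_cancel_left _ (by positivity)]
  have hcardCqVp : (Cq ∩ Vp).card = S := by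
    rw [hCqVp, Finset.card_biUnion, ← hsumS]
    · exact Finset.sum_congr rfl hcard_inter_i
    · intro i hi j hj hij
      exact Finset.disjoint_of_subset_left Finset.inter_subset_right
        (Finset.disjoint_of_subset_right Finset.inter_subset_right (hdisj_pp i hi j hj hij))
  have hTcard : ((Finset.range n).filter P).card = p ^ k + q * S := by
    have h1 : (Cq ∪ (Vp ∪ Vqp)).card + (Cq ∩ (Vp ∪ Vqp)).card = Cq.card + (Vp ∪ Vqp).card :=
      Finset.card_union_add_card_inter _ _
    have h2 : (Vp ∪ Vqp).card = q * S + S := by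
      rw [Finset.card_union_of_disjoint hVpVqp, hcardVp, hcardVqp]
    have h3 : Cq ∩ (Vp ∪ Vqp) = Cq ∩ Vp := by
      rw [Finset.inter_union_distrib_left, Finset.disjoint_iff_inter_eq_empty.mp hCqVqp,
        Finset.union_empty]
    rw [h3, hcardCqVp, hcardCq, h2] at h1
    rw [hT]
    omega
  have hSdiv : (p ^ k - 1) / (p - 1) = S := by
    rw [← aux_geom p k hp2, Nat.mul_div_cancel _ (by omega : 0 < p - 1), hSdef]
  -- ncard to Finset card
  have hncard : ∀ N : ℕ,
      {r : ℕ | r < N ∧ ∃ d : ℕ, d ∣ n ∧ 1 < d ∧ (r : ℤ) ≡ a d [ZMOD (d : ℤ)]}.ncard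
        = ((Finset.range N).filter P).card := by
    intro N
    rw [← Set.ncard_coe_finset]
    congr 1
    ext r
    simp only [Finset.coe_filter, Finset.mem_range, Set.mem_setOf_eq, hPdef]
  constructor
  · rw [hncard n, hTcard, hSdiv]
  · -- density part
    set f : ℕ → ℕ := fun N => ((Finset.range N).filter P).card with hfdef
    -- periodicity
    have hPadd : ∀ s, P (s + n) ↔ P s := by
      intro s
      simp only [hPdef]
      constructor
      · rintro ⟨d, hdn, hd1, hcong⟩
        refine ⟨d, hdn, hd1, (hPiff d s (by omega)).mpr ?_⟩
        have h2 := (hPiff d (s + n) (by omega)).mp hcong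
        obtain ⟨m, hm⟩ := hdn
        rwa [hm, Nat.add_mul_mod_self_left] at h2
      · rintro ⟨d, hdn, hd1, hcong⟩
        refine ⟨d, hdn, hd1, (hPiff d (s + n) (by omega)).mpr ?_⟩
        obtain ⟨m, hm⟩ := hdn
        rw [hm, Nat.add_mul_mod_self_left]
        exact (hPiff d s (by omega)).mp hcong
    have hshift : ∀ N, f (N + n) = f N + f n := by
      intro N
      have hsplit : Finset.range (N + n) = Finset.range n ∪ Finset.Ico n (N + n) := by
        rw [Finset.range_eq_Ico, Finset.range_eq_Ico, Finset.Ico_union_Ico_eq_Ico (by omega) (by omega)]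
      have hdisj2 : Disjoint (Finset.range n) (Finset.Ico n (N + n)) := by
        rw [Finset.disjoint_left]
        intro x hx hx'
        simp only [Finset.mem_range] at hx
        simp only [Finset.mem_Ico] at hx'
        omega
      have hIco : ((Finset.Ico n (N + n)).filter P).card
          = ((Finset.range N).filter P).card := by
        apply Finset.card_nbij' (fun r => r - n) (fun s => s + n)
        · intro r hr
          simp only [Finset.mem_coe, Finset.mem_filter, Finset.mem_Ico, Finset.mem_range] at hr ⊢
          refine ⟨by omega, ?_⟩
          have heq : r - n + n = r := by omega
          rw [← heq] at hr
          exact (hPadd _).mp hr.2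
        · intro s hs
          simp only [Finset.mem_coe, Finset.mem_filter, Finset.mem_range, Finset.mem_Ico] at hs ⊢
          exact ⟨by omega, (hPadd s).mpr hs.2⟩
        · intro r hr
          simp only [Finset.mem_coe, Finset.mem_filter, Finset.mem_Ico] at hr ⊢
          omega
        · intro s _
          show s + n - n = s; omega
      show ((Finset.range (N + n)).filter P).card
          = ((Finset.range N).filter P).card + ((Finset.range n).filter P).card
      rw [hsplit, Finset.filter_union, Finset.card_union_of_disjoint
        (Finset.disjoint_filter_filter hdisj2), hIco]
      omega
    have hkey : ∀ (m s : ℕ), f (s + n * m) = f s + m * f n := by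
      intro m
      induction m with
      | zero => intro s; simp
      | succ m ih =>
        intro s
        have h1 : s + n * (m + 1) = (s + n * m) + n := by ring
        rw [h1, hshift, ih]
        ring
    have hfN : ∀ N, f N = f (N % n) + (N / n) * f n := by
      intro N
      conv_lhs => rw [← Nat.mod_add_div N n]
      exact hkey _ _
    have hfsmall : ∀ N, f N ≤ N := by
      intro N
      calc f N ≤ (Finset.range N).card := Finset.card_filter_le _ _
        _ = N := Finset.card_range N
    -- translate goal
    have hgoalfun : (fun N : ℕ =>
        ({r : ℕ | r < N ∧ ∃ d : ℕ, d ∣ n ∧ 1 < d ∧ (r : ℤ) ≡ a d [ZMOD (d : ℤ)]}.ncard : ℝ) / N)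
        = fun N : ℕ => (f N : ℝ) / N := by
      funext N
      rw [hncard N]
    rw [hgoalfun]
    -- the limit value
    have hp1R : (1:ℝ) < (p:ℝ) := by exact_mod_cast hp2
    have hqR : (0:ℝ) < (q:ℝ) := by positivity
    have hpkR : (0:ℝ) < (p:ℝ) ^ k := by positivity
    have hSr : (S:ℝ) * ((p:ℝ) - 1) = (p:ℝ) ^ k - 1 := by
      have h := aux_geom p k hp2
      have h2 : ((S * (p - 1) : ℕ) : ℝ) = ((p ^ k - 1 : ℕ) : ℝ) := by rw [hSdef, h]
      push_cast [Nat.cast_sub (by omega : 1 ≤ p), Nat.cast_sub hpk1] at h2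
      exact h2
    have hnR : ((n:ℕ) : ℝ) = (q:ℝ) * (p:ℝ) ^ k := by rw [hn]; push_cast; ring
    have hfnR : ((f n : ℕ) : ℝ) = (p:ℝ) ^ k + (q:ℝ) * (S:ℝ) := by
      have : f n = p ^ k + q * S := hTcard
      rw [this]; push_cast; ring
    have hLC : 1 / (q : ℝ) + ((p : ℝ) ^ k - 1) / ((p : ℝ) ^ k * ((p : ℝ) - 1))
        = ((f n : ℕ) : ℝ) / ((n:ℕ) : ℝ) := by
      have h1 : (q:ℝ) ≠ 0 := ne_of_gt hqR
      have h2 : (p:ℝ) ^ k ≠ 0 := ne_of_gt hpkR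
      have h3 : (p:ℝ) - 1 ≠ 0 := by nlinarith
      rw [hfnR, hnR, ← hSr]
      field_simp
    rw [hLC]
    -- squeeze
    have h0 : Filter.Tendsto (fun N : ℕ => (f N : ℝ) / N - (f n : ℝ) / n)
        Filter.atTop (nhds 0) := by
      apply squeeze_zero_norm' (a := fun N : ℕ => ((n:ℕ) : ℝ) / N)
      · filter_upwards [Filter.eventually_ge_atTop 1] with N hN1
        have hNR : (0:ℝ) < (N:ℝ) := by exact_mod_cast hN1
        have hnRpos : (0:ℝ) < ((n:ℕ):ℝ) := by exact_mod_cast hn0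
        have hdecomp : ((N % n : ℕ):ℝ) + ((n:ℕ):ℝ) * ((N / n : ℕ):ℝ) = (N:ℝ) := by
          exact_mod_cast Nat.mod_add_div N n
        have hfNr : ((f N : ℕ) : ℝ) = ((f (N % n) : ℕ):ℝ) + ((N / n : ℕ):ℝ) * ((f n : ℕ):ℝ) := by
          exact_mod_cast hfN N
        have hx0 : (0:ℝ) ≤ ((N % n : ℕ):ℝ) := by positivity
        have hxn : ((N % n : ℕ):ℝ) ≤ ((n:ℕ):ℝ) := by
          exact_mod_cast (Nat.mod_lt N hn0).le
        have hy0 : (0:ℝ) ≤ ((f (N % n) : ℕ):ℝ) := Nat.cast_nonneg _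
        have hyn : ((f (N % n) : ℕ):ℝ) ≤ ((n:ℕ):ℝ) := by
          exact_mod_cast le_trans (hfsmall (N % n)) (Nat.mod_lt N hn0).le
        have hC0 : (0:ℝ) ≤ ((f n : ℕ):ℝ) := Nat.cast_nonneg _
        have hCn : ((f n : ℕ):ℝ) ≤ ((n:ℕ):ℝ) := by exact_mod_cast hfsmall n
        have hnum : ((f N : ℕ):ℝ) * ((n:ℕ):ℝ) - (N:ℝ) * ((f n : ℕ):ℝ)
            = ((n:ℕ):ℝ) * ((f (N % n) : ℕ):ℝ) - ((f n : ℕ):ℝ) * ((N % n : ℕ):ℝ) := by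
          rw [hfNr]
          linear_combination ((f n : ℕ):ℝ) * hdecomp
        have hiden : (f N : ℝ) / N - (f n : ℝ) / n
            = (((n:ℕ):ℝ) * (f (N % n)) - ((f n : ℕ):ℝ) * ((N % n : ℕ):ℝ)) / (((n:ℕ):ℝ) * N) := by
          rw [div_sub_div _ _ (ne_of_gt hNR) (ne_of_gt hnRpos), hnum,
            mul_comm (N:ℝ) ((n:ℕ):ℝ)]
        rw [hiden, Real.norm_eq_abs, abs_div, abs_of_pos (by positivity : (0:ℝ) < ((n:ℕ):ℝ) * N)]
        have habs : |((n:ℕ):ℝ) * (f (N % n)) - ((f n : ℕ):ℝ) * ((N % n : ℕ):ℝ)|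
            ≤ ((n:ℕ):ℝ) * ((n:ℕ):ℝ) := by
          rw [abs_le]
          constructor <;> nlinarith
        calc |((n:ℕ):ℝ) * (f (N % n)) - ((f n : ℕ):ℝ) * ((N % n : ℕ):ℝ)| / (((n:ℕ):ℝ) * N)
            ≤ (((n:ℕ):ℝ) * ((n:ℕ):ℝ)) / (((n:ℕ):ℝ) * N) := by
              exact (div_le_div_iff_of_pos_right (by positivity)).mpr habs
          _ = ((n:ℕ):ℝ) / N := mul_div_mul_left _ _ (ne_of_gt hnRpos)
      · exact tendsto_const_div_atTop_nhds_zero_nat _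
    have h1 := h0.const_add ((f n : ℝ) / (n : ℕ))
    rw [add_zero] at h1
    refine h1.congr ?_
    intro N
    ring
end

section
/- Let n = p·q_1^{α_1}···q_s^{α_s} where p < q_1 < ... < q_s are primes, p is odd, α_i ≥ 1 for all i, and 0 ≤ s ≤ p − 1. Then the sum of the reciprocals of the divisors of n greater than 1 is strictly less than 1: ∑_{d | n, d > 1} 1/d < 1. -/
open ArithmeticFunction Finset
open scoped ArithmeticFunction.sigma

private lemma sigma_pp_mul (q a : ℕ) (hq : q.Prime) :
    (σ 1 (q ^ a) : ℚ) * ((q : ℚ) - 1) = (q : ℚ) ^ (a + 1) - 1 := by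
  rw [sigma_one_apply_prime_pow hq]
  push_cast
  exact geom_sum_mul (q : ℚ) (a + 1)

private lemma sigma_pp_ratio_lt (q a : ℕ) (hq : q.Prime) :
    (σ 1 (q ^ a) : ℚ) / ((q : ℚ) ^ a) < (q : ℚ) / ((q : ℚ) - 1) := by
  have hq1 : (1 : ℚ) < q := by exact_mod_cast hq.one_lt
  have hq0 : (0 : ℚ) < (q : ℚ) - 1 := by linarith
  have hpow : (0 : ℚ) < (q : ℚ) ^ a := by positivity
  rw [div_lt_div_iff₀ hpow hq0]
  have := sigma_pp_mul q a hq
  have hrw : (q : ℚ) * (q : ℚ) ^ a = (q : ℚ) ^ (a + 1) := by ring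
  rw [this, hrw]
  linarith

private lemma telescope (x : ℚ) (hx : 0 < x) (s : ℕ) :
    ∏ k ∈ Finset.range s, (x + 2 + k) / (x + 1 + k) = (x + 1 + s) / (x + 1) := by
  induction s with
  | zero => simp; rw [div_self (by positivity : x + 1 ≠ 0)]
  | succ m ih =>
    rw [Finset.prod_range_succ, ih]
    have h1 : x + 1 ≠ 0 := by positivity
    have h2 : x + 1 + (m : ℚ) ≠ 0 := by positivity
    push_cast
    field_simp
    ring

/-- Let `n = p * q 1 ^ α 1 * ⋯ * q s ^ α s` where `p < q 1 < ⋯ < q s` are primes,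
`p` is odd, `α i ≥ 1` for all `i`, and `0 ≤ s ≤ p - 1`. Then the sum of the reciprocals
of the divisors of `n` greater than `1` is strictly less than `1`. -/
theorem case1_odd_reciprocal_sum_lt_one (p s : ℕ) (hp : p.Prime) (hpodd : Odd p)
    (q : Fin s → ℕ) (hq : ∀ i, (q i).Prime) (hpq : ∀ i, p < q i) (hmono : StrictMono q)
    (α : Fin s → ℕ) (hα : ∀ i, 1 ≤ α i) (hs : s ≤ p - 1)
    (n : ℕ) (hn : n = p * ∏ i, q i ^ α i) :
    ∑ d ∈ n.divisors.erase 1, (1 : ℚ) / d < 1 := by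
  have hp3 : 3 ≤ p := by
    have h2 := hp.two_le
    rcases hpodd with ⟨k, hk⟩
    omega
  have hQpos : ∀ i, 0 < q i ^ α i := fun i => pow_pos (hq i).pos _
  have hn0 : 0 < n := by
    rw [hn]
    exact Nat.mul_pos hp.pos (Finset.prod_pos fun i _ => hQpos i)
  -- sigma factorization
  have hpairwise : (↑(Finset.univ : Finset (Fin s)) : Set (Fin s)).Pairwise
      (Function.onFun Nat.Coprime fun i => q i ^ α i) := by
    intro i _ j _ hij
    exact Nat.Coprime.pow _ _ ((Nat.coprime_primes (hq i) (hq j)).mpr (hmono.injective.ne hij))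
  have hcop : Nat.Coprime p (∏ i, q i ^ α i) := by
    apply Nat.Coprime.prod_right
    intro i _
    exact Nat.Coprime.pow_right _
      ((Nat.coprime_primes hp (hq i)).mpr (Nat.ne_of_lt (hpq i)))
  have hσp : σ 1 p = p + 1 := by
    have h := sigma_one_apply_prime_pow (p := p) (i := 1) hp
    simpa [Finset.sum_range_succ, Nat.add_comm] using h
  have hσn : σ 1 n = (p + 1) * ∏ i, σ 1 (q i ^ α i) := by
    rw [hn, isMultiplicative_sigma.map_mul_of_coprime hcop,
      isMultiplicative_sigma.map_prod _ Finset.univ hpairwise, hσp]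
  -- reciprocal sum = σ n / n
  have hsum : ∑ d ∈ n.divisors, (1 : ℚ) / d = (σ 1 n : ℚ) / n := by
    rw [sigma_one_apply]
    push_cast
    rw [Finset.sum_div, ← Nat.sum_div_divisors n (fun d => (1 : ℚ) / d)]
    apply Finset.sum_congr rfl
    intro d hd
    have hdvd := (Nat.mem_divisors.mp hd).1
    have hd0 : (d : ℚ) ≠ 0 := by
      have := Nat.pos_of_mem_divisors hd
      exact_mod_cast this.ne'
    rw [Nat.cast_div hdvd hd0, one_div_div]
  have h1mem : 1 ∈ n.divisors := Nat.one_mem_divisors.mpr hn0.ne'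
  rw [Finset.sum_erase_eq_sub h1mem, hsum]
  have hnQ : (0 : ℚ) < n := by exact_mod_cast hn0
  rw [Nat.cast_one, div_one]
  rw [sub_lt_iff_lt_add, div_lt_iff₀ hnQ]
  -- suffices σ n < 2 n
  suffices hfin : (σ 1 n : ℚ) < 2 * n by
    calc (σ 1 n : ℚ) < 2 * n := hfin
    _ = (1 + 1) * n := by ring
  -- lower bound for q i
  have hq_lb : ∀ i : Fin s, p + 2 + i.val ≤ q i := by
    have key : ∀ m : ℕ, ∀ i : Fin s, i.val = m → p + 2 + m ≤ q i := by
      intro m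
      induction m with
      | zero =>
        intro i _
        have hqi := hpq i
        have hne : q i ≠ p + 1 := by
          intro h
          have hq2 : q i ≠ 2 := by omega
          have hodd : Odd (q i) := (hq i).odd_of_ne_two hq2
          rw [h] at hodd
          rcases hpodd with ⟨k, hk⟩
          rcases hodd with ⟨l, hl⟩
          omega
        omega
      | succ m ih =>
        intro i hi
        have hm : m < s := by omega
        have hji : (⟨m, hm⟩ : Fin s) < i := by
          simp [Fin.lt_def, hi]
        have h1 := hmono hji
        have h2 := ih ⟨m, hm⟩ rfl
        omega
    intro i
    exact key i.val i rfl
  rcases Nat.eq_zero_or_pos s with hs0 | hspos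
  · subst hs0
    have hnp : n = p := by simpa using hn
    have hσ : σ 1 n = p + 1 := by simpa using hσn
    rw [hσ, hnp]
    push_cast
    have : (3 : ℚ) ≤ p := by exact_mod_cast hp3
    linarith
  -- main case s ≥ 1
  have hQQ : ∀ i : Fin s, (0 : ℚ) < (q i : ℚ) ^ α i := by
    intro i
    have : (1 : ℚ) < q i := by exact_mod_cast (hq i).one_lt
    positivity
  have hσpos : ∀ i : Fin s, (0 : ℚ) < (σ 1 (q i ^ α i) : ℚ) := by
    intro i
    have := sigma_pp_mul (q i) (α i) (hq i)
    have hq1 : (1 : ℚ) < q i := by exact_mod_cast (hq i).one_lt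
    have h1 : (1 : ℚ) < (q i : ℚ) ^ (α i + 1) := one_lt_pow₀ hq1 (Nat.succ_ne_zero _)
    nlinarith
  set f : Fin s → ℚ := fun i => (σ 1 (q i ^ α i) : ℚ) / ((q i : ℚ) ^ α i) with hf
  set g : Fin s → ℚ := fun i => ((p : ℚ) + 2 + i.val) / ((p : ℚ) + 1 + i.val) with hg
  have hflt : ∀ i ∈ (Finset.univ : Finset (Fin s)), f i < g i := by
    intro i _
    have h1 : f i < (q i : ℚ) / ((q i : ℚ) - 1) := sigma_pp_ratio_lt (q i) (α i) (hq i)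
    have h2 : ((q i : ℚ)) / ((q i : ℚ) - 1) ≤ g i := by
      have hq1 : (1 : ℚ) < q i := by exact_mod_cast (hq i).one_lt
      have hlb : ((p : ℚ) + 2 + i.val) ≤ q i := by exact_mod_cast hq_lb i
      have hd1 : (0 : ℚ) < (q i : ℚ) - 1 := by linarith
      have hd2 : (0 : ℚ) < (p : ℚ) + 1 + i.val := by positivity
      rw [hg, div_le_div_iff₀ hd1 hd2]
      nlinarith
    linarith
  have hfpos : ∀ i ∈ (Finset.univ : Finset (Fin s)), 0 < f i := by
    intro i _
    exact div_pos (hσpos i) (hQQ i)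
  have hne : (Finset.univ : Finset (Fin s)).Nonempty :=
    Finset.univ_nonempty_iff.mpr (Fin.pos_iff_nonempty.mp hspos)
  have hprodlt : ∏ i, f i < ∏ i, g i :=
    Finset.prod_lt_prod_of_nonempty hfpos hflt hne
  have hp0 : (0 : ℚ) < p := by exact_mod_cast hp.pos
  have hgprod : ∏ i, g i = ((p : ℚ) + 1 + s) / ((p : ℚ) + 1) := by
    rw [hg, Fin.prod_univ_eq_prod_range (fun k => ((p : ℚ) + 2 + k) / ((p : ℚ) + 1 + k)) s]
    exact telescope (p : ℚ) hp0 s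
  have hQprod : (0 : ℚ) < ∏ i, (q i : ℚ) ^ α i := Finset.prod_pos fun i _ => hQQ i
  have hsplit : (∏ i, (σ 1 (q i ^ α i) : ℚ)) = (∏ i, f i) * ∏ i, (q i : ℚ) ^ α i := by
    rw [← Finset.prod_mul_distrib]
    apply Finset.prod_congr rfl
    intro i _
    rw [hf]
    exact (div_mul_cancel₀ _ (hQQ i).ne').symm
  have hcastn : (n : ℚ) = (p : ℚ) * ∏ i, (q i : ℚ) ^ α i := by
    rw [hn]; push_cast; ring
  have hcastσ : (σ 1 n : ℚ) = ((p : ℚ) + 1) * ∏ i, (σ 1 (q i ^ α i) : ℚ) := by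
    rw [hσn]; push_cast; ring
  rw [hcastσ, hcastn, hsplit]
  have hsle : (s : ℚ) + 1 ≤ p := by
    have : s + 1 ≤ p := by omega
    exact_mod_cast this
  have hstep : (∏ i, f i) < ((p : ℚ) + 1 + s) / ((p : ℚ) + 1) := hgprod ▸ hprodlt
  have hp1 : (0 : ℚ) < (p : ℚ) + 1 := by linarith
  calc ((p : ℚ) + 1) * ((∏ i, f i) * ∏ i, (q i : ℚ) ^ α i)
      < ((p : ℚ) + 1) * ((((p : ℚ) + 1 + s) / ((p : ℚ) + 1)) * ∏ i, (q i : ℚ) ^ α i) := by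
        apply mul_lt_mul_of_pos_left _ hp1
        exact mul_lt_mul_of_pos_right hstep hQprod
    _ = ((p : ℚ) + 1 + s) * ∏ i, (q i : ℚ) ^ α i := by
        field_simp
    _ ≤ (2 * p) * ∏ i, (q i : ℚ) ^ α i := by
        apply mul_le_mul_of_nonneg_right _ hQprod.le
        linarith
    _ = 2 * ((p : ℚ) * ∏ i, (q i : ℚ) ^ α i) := by ring
end

section
/- Let n = p^{α_p}·q_1^{α_1}···q_s^{α_s} where p < q_1 < ... < q_s are primes, α_p ≥ 2, α_i ≥ 1 for all i, and 0 ≤ s ≤ p − 2. Then the sum of the reciprocals of the divisors of n greater than 1 is strictly less than 1: ∑_{d | n, d > 1} 1/d < 1. -/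
open Finset ArithmeticFunction
open scoped ArithmeticFunction.sigma Function

private lemma sigma_ratio_pos (r a : ℕ) :
    (0:ℚ) ≤ ((σ 1 (r ^ a) : ℕ) : ℚ) / ((r : ℚ) ^ a) := by positivity

private lemma sigma_ratio_lt (r a : ℕ) (hr : r.Prime) :
    ((σ 1 (r ^ a) : ℕ) : ℚ) / ((r : ℚ) ^ a) < (r : ℚ) / ((r : ℚ) - 1) := by
  have hr1 : (1:ℚ) < r := by exact_mod_cast hr.one_lt
  have hσ : ((σ 1 (r ^ a) : ℕ) : ℚ) = ∑ i ∈ range (a + 1), (r:ℚ) ^ i := by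
    rw [sigma_one_apply, Nat.sum_divisors_prime_pow hr]
    push_cast; rfl
  have hgeom : (∑ i ∈ range (a + 1), (r:ℚ) ^ i) * ((r:ℚ) - 1) = (r:ℚ) ^ (a+1) - 1 :=
    geom_sum_mul _ _
  rw [hσ, div_lt_div_iff₀ (by positivity) (by linarith)]
  calc (∑ i ∈ range (a + 1), (r:ℚ) ^ i) * ((r:ℚ) - 1) = (r:ℚ) ^ (a+1) - 1 := hgeom
    _ < (r:ℚ) ^ (a+1) := by linarith
    _ = (r:ℚ) * (r:ℚ) ^ a := by ring

private lemma ratio_mono_s11 {x y : ℚ} (hy : 1 ≤ y) (h : y + 1 ≤ x) :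
    x / (x - 1) ≤ (y + 1) / y := by
  rw [div_le_div_iff₀ (by linarith) (by linarith)]
  nlinarith

private lemma prod_telescope (p : ℕ) (hp : 1 ≤ p) (s : ℕ) :
    ∏ i : Fin s, (((p:ℚ) + 1 + (i:ℕ)) / ((p:ℚ) + (i:ℕ))) = ((p:ℚ) + s) / p := by
  have hp0 : (0:ℚ) < p := by exact_mod_cast hp
  induction s with
  | zero => simp [div_self hp0.ne']
  | succ s ih =>
    rw [Fin.prod_univ_castSucc]
    simp only [Fin.coe_castSucc, Fin.val_last]
    rw [ih]
    have hps : (0:ℚ) < (p:ℚ) + s := by positivity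
    field_simp
    push_cast
    ring

/-- Let `n = p ^ αp * q 1 ^ α 1 * ⋯ * q s ^ α s` where `p < q 1 < ⋯ < q s` are primes,
`αp ≥ 2`, `α i ≥ 1` for all `i`, and `0 ≤ s ≤ p - 2`. Then the sum of the reciprocals
of the divisors of `n` greater than `1` is strictly less than `1`. -/
theorem case2_reciprocal_sum_lt_one (p s : ℕ) (hp : p.Prime)
    (q : Fin s → ℕ) (hq : ∀ i, (q i).Prime) (hpq : ∀ i, p < q i) (hmono : StrictMono q)
    (αp : ℕ) (hαp : 2 ≤ αp) (α : Fin s → ℕ) (hα : ∀ i, 1 ≤ α i) (hs : s ≤ p - 2)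
    (n : ℕ) (hn : n = p ^ αp * ∏ i, q i ^ α i) :
    ∑ d ∈ n.divisors.erase 1, (1 : ℚ) / d < 1 := by
  have hn0 : 0 < n := by
    rw [hn]
    exact Nat.mul_pos (Nat.pow_pos hp.pos)
      (Finset.prod_pos fun i _ => Nat.pow_pos (hq i).pos)
  -- the sum of reciprocals of all divisors equals σ(n)/n
  have key : ∑ d ∈ n.divisors, (1:ℚ) / d = ((σ 1 n : ℕ) : ℚ) / n := by
    rw [sigma_one_apply]
    rw [← Nat.sum_div_divisors n (fun d => (1:ℚ)/d)]
    push_cast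
    rw [Finset.sum_div]
    apply Finset.sum_congr rfl
    intro d hd
    obtain ⟨hdvd, -⟩ := Nat.mem_divisors.mp hd
    have hd0 : d ≠ 0 := Nat.pos_of_mem_divisors hd |>.ne'
    rw [Nat.cast_div hdvd (by exact_mod_cast hd0), one_div_div]
  -- multiplicativity of sigma
  have hcop : Nat.Coprime (p ^ αp) (∏ i, q i ^ α i) :=
    Nat.Coprime.pow_left _ (Nat.Coprime.prod_right fun i _ =>
      ((Nat.coprime_primes hp (hq i)).mpr (hpq i).ne).pow_right _)
  have hpair : ((Finset.univ : Finset (Fin s)) : Set (Fin s)).Pairwise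
      (Nat.Coprime on fun i => q i ^ α i) := by
    intro i _ j _ hij
    exact Nat.Coprime.pow _ _ ((Nat.coprime_primes (hq i) (hq j)).mpr (hmono.injective.ne hij))
  have hσmul : σ 1 n = σ 1 (p ^ αp) * ∏ i, σ 1 (q i ^ α i) := by
    rw [hn, isMultiplicative_sigma.map_mul_of_coprime hcop,
      isMultiplicative_sigma.map_prod _ _ hpair]
  -- split the ratio
  set A : ℚ := ((σ 1 (p ^ αp) : ℕ) : ℚ) / ((p:ℚ) ^ αp) with hA_def
  set G : ℚ := ∏ i, ((σ 1 (q i ^ α i) : ℕ) : ℚ) / ((q i : ℚ) ^ α i) with hG_def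
  have hratio : ((σ 1 n : ℕ) : ℚ) / n = A * G := by
    rw [hσmul, hn]
    push_cast
    rw [← div_mul_div_comm, ← Finset.prod_div_distrib]
  -- bounds
  have hp1 : (1:ℚ) < p := by exact_mod_cast hp.one_lt
  have hA_lt : A < (p:ℚ) / ((p:ℚ) - 1) := sigma_ratio_lt p αp hp
  have hA0 : 0 ≤ A := sigma_ratio_pos p αp
  -- q i ≥ p + 1 + i
  have hqi : ∀ k (h : k < s), p + 1 + k ≤ q ⟨k, h⟩ := by
    intro k
    induction k with
    | zero => intro h; simpa using hpq ⟨0, h⟩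
    | succ k ih =>
      intro h
      have hk : k < s := Nat.lt_of_succ_lt h
      have h1 := ih hk
      have h2 : q ⟨k, hk⟩ < q ⟨k + 1, h⟩ := hmono (by simp [Fin.lt_def])
      omega
  have hGle : G ≤ ((p:ℚ) + s) / p := by
    rw [← prod_telescope p hp.one_le s, hG_def]
    apply Finset.prod_le_prod
    · intro i _; exact sigma_ratio_pos _ _
    · intro i _
      have h1 : ((σ 1 (q i ^ α i) : ℕ) : ℚ) / ((q i : ℚ) ^ α i)
          < (q i : ℚ) / ((q i : ℚ) - 1) := sigma_ratio_lt _ _ (hq i)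
      have h2 : (q i : ℚ) / ((q i : ℚ) - 1) ≤ ((p:ℚ) + (i:ℕ) + 1) / ((p:ℚ) + (i:ℕ)) := by
        apply ratio_mono_s11
        · have h1 : (1:ℚ) ≤ (p:ℚ) := by exact_mod_cast hp.one_le
          have h2 : (0:ℚ) ≤ ((i:ℕ):ℚ) := by positivity
          linarith
        · have := hqi i.1 i.2
          have : (p:ℚ) + 1 + (i:ℕ) ≤ (q ⟨i.1, i.2⟩ : ℚ) := by exact_mod_cast this
          rw [Fin.eta] at this
          linarith
      calc ((σ 1 (q i ^ α i) : ℕ) : ℚ) / ((q i : ℚ) ^ α i)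
          ≤ (q i : ℚ) / ((q i : ℚ) - 1) := le_of_lt h1
        _ ≤ ((p:ℚ) + (i:ℕ) + 1) / ((p:ℚ) + (i:ℕ)) := h2
        _ = ((p:ℚ) + 1 + (i:ℕ)) / ((p:ℚ) + (i:ℕ)) := by ring_nf
  have hGb_pos : (0:ℚ) < ((p:ℚ) + s) / p := by positivity
  have hsp : (s:ℚ) + 2 ≤ (p:ℚ) := by
    have : s + 2 ≤ p := by have := hp.two_le; omega
    exact_mod_cast this
  have hfinal : A * G < 2 := by
    calc A * G ≤ A * (((p:ℚ) + s) / p) := mul_le_mul_of_nonneg_left hGle hA0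
      _ < ((p:ℚ) / ((p:ℚ) - 1)) * (((p:ℚ) + s) / p) := mul_lt_mul_of_pos_right hA_lt hGb_pos
      _ ≤ 2 := by
          rw [div_mul_div_comm, div_le_iff₀ (by nlinarith)]
          nlinarith
  -- conclude
  have h1mem : 1 ∈ n.divisors := Nat.one_mem_divisors.mpr hn0.ne'
  rw [Finset.sum_erase_eq_sub h1mem, key, hratio]
  push_cast
  linarith
end

section
/- Let q be an odd prime, α ≥ 1, and n = 2·q^α. For every CD congruence set A = {a_d mod d : d | n, d > 1} whose moduli are exactly the divisors of n greater than 1, the number of residue classes modulo n covered by A equals q^α + 2·(q^α − 1)/(q − 1), which is strictly less than n; in particular A is not a covering system. -/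
/-!
The divisors of `2 q ^ α` above `1` are `2`, `q ^ j` and `2 q ^ j` for `1 ≤ j ≤ α`. All of them
but `2` share the factor `q`, so by the CD property their classes are pairwise disjoint, and the
class mod `2 q ^ j` also misses the class mod `2`. The covered residues therefore split disjointly
into the class mod `2` (`q ^ α` residues) and, for each `j`, the class mod `q ^ j` outside the class
mod `2` (a single class mod `2 q ^ j`, by CRT) and the class mod `2 q ^ j`, each with `q ^ (α - j)`
residues. This gives `q ^ α + 2 ∑_{i < α} q ^ i`, and `2 ∑_{i < α} q ^ i ≤ (q - 1) ∑_{i < α} q ^ i =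
q ^ α - 1` as `q ≥ 3`.
-/

open Finset

theorem Int.not_modEq_two_iff {x b : ℤ} : ¬x ≡ b [ZMOD 2] ↔ x ≡ b + 1 [ZMOD 2] := by
  simp only [Int.ModEq]
  omega

theorem Int.exists_natCast_modEq_iff {m : ℕ} (hm : m ≠ 0) (b : ℤ) :
    ∃ v : ℕ, ∀ r : ℕ, (r : ℤ) ≡ b [ZMOD m] ↔ r ≡ v [MOD m] := by
  refine ⟨(b % m).toNat, fun r => ?_⟩
  rw [← Int.natCast_modEq_iff, Int.toNat_of_nonneg (Int.emod_nonneg b (by exact_mod_cast hm))]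
  exact ⟨fun h => h.trans (Int.mod_modEq b m).symm, fun h => h.trans (Int.mod_modEq b m)⟩

theorem Nat.card_filter_range_modEq {m n : ℕ} (hmn : m ∣ n) (v : ℕ) :
    #{r ∈ range n | r ≡ v [MOD m]} = n / m := by
  rcases eq_or_ne n 0 with rfl | hn
  · simp
  rw [← Nat.count_eq_card_filter_range,
    Nat.count_modEq_card n (Nat.pos_of_ne_zero (ne_zero_of_dvd_ne_zero hn hmn))]
  simp [Nat.mod_eq_zero_of_dvd hmn]

theorem card_filter_range_intModEq {m n : ℕ} (hmn : m ∣ n) (b : ℤ) :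
    #{r ∈ range n | ((r : ℕ) : ℤ) ≡ b [ZMOD m]} = n / m := by
  rcases eq_or_ne n 0 with rfl | hn
  · simp
  obtain ⟨v, hv⟩ := Int.exists_natCast_modEq_iff (ne_zero_of_dvd_ne_zero hn hmn) b
  simp_rw [hv]
  exact Nat.card_filter_range_modEq hmn v

theorem card_filter_range_intModEq_and_intModEq {m₁ m₂ n : ℕ} (hm : m₁.Coprime m₂)
    (hmn : m₁ * m₂ ∣ n) (b₁ b₂ : ℤ) :
    #{r ∈ range n | ((r : ℕ) : ℤ) ≡ b₁ [ZMOD m₁] ∧ ((r : ℕ) : ℤ) ≡ b₂ [ZMOD m₂]} =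
      n / (m₁ * m₂) := by
  rcases eq_or_ne n 0 with rfl | hn
  · simp
  have hm₁₂ := ne_zero_of_dvd_ne_zero hn hmn
  obtain ⟨v₁, hv₁⟩ := Int.exists_natCast_modEq_iff (left_ne_zero_of_mul hm₁₂) b₁
  obtain ⟨v₂, hv₂⟩ := Int.exists_natCast_modEq_iff (right_ne_zero_of_mul hm₁₂) b₂
  obtain ⟨c, hc₁, hc₂⟩ := Nat.chineseRemainder hm v₁ v₂
  have hc : ∀ r : ℕ, r ≡ v₁ [MOD m₁] ∧ r ≡ v₂ [MOD m₂] ↔ r ≡ c [MOD m₁ * m₂] := fun r => by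
    rw [← Nat.modEq_and_modEq_iff_modEq_mul hm]
    unfold Nat.ModEq at *
    rw [hc₁, hc₂]
  simp_rw [hv₁, hv₂, hc]
  exact Nat.card_filter_range_modEq hmn c

theorem two_mul_geomSum_lt_pow {q : ℕ} (hq : 3 ≤ q) (α : ℕ) :
    2 * ∑ i ∈ range α, q ^ i < q ^ α := by
  obtain ⟨x, rfl⟩ : ∃ x, q = x + 1 := ⟨q - 1, by omega⟩
  have hgeom := geom_sum_mul_add x α
  calc 2 * ∑ i ∈ range α, (x + 1) ^ i ≤ (∑ i ∈ range α, (x + 1) ^ i) * x := by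
        rw [mul_comm]; gcongr; omega
    _ < (x + 1) ^ α := by omega

/-- The congruences `a d mod d`, one for each divisor `d > 1` of `n`, form a CD congruence
set. -/
def IsCoprimeDisjoint (n : ℕ) (a : ℕ → ℤ) : Prop :=
  ∀ d d' : ℕ, d ∣ n → d' ∣ n → 1 < d → 1 < d' → d ≠ d' →
    (∃ x : ℤ, x ≡ a d [ZMOD (d : ℤ)] ∧ x ≡ a d' [ZMOD (d' : ℤ)]) → Nat.gcd d d' = 1

theorem IsCoprimeDisjoint.not_modEq_and_modEq {n : ℕ} {a : ℕ → ℤ} (h : IsCoprimeDisjoint n a)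
    {d d' p : ℕ} (hd : d ∣ n) (hd' : d' ∣ n) (h1d : 1 < d) (h1d' : 1 < d') (hne : d ≠ d')
    (hp : p ≠ 1) (hpd : p ∣ d) (hpd' : p ∣ d') (x : ℤ) :
    ¬(x ≡ a d [ZMOD d] ∧ x ≡ a d' [ZMOD d']) :=
  fun hx => hp (Nat.eq_one_of_dvd_coprimes (h d d' hd hd' h1d h1d' hne ⟨x, hx⟩) hpd hpd')

def solutionsBelow (n : ℕ) (a : ℕ → ℤ) (d : ℕ) : Finset ℕ :=
  {r ∈ range n | ((r : ℕ) : ℤ) ≡ a d [ZMOD d]}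

section TwoMulPrimePow

variable {q α : ℕ}

theorem two_pow_mul_pow_succ_dvd {e j : ℕ} (he : e < 2) (hj : j < α) :
    2 ^ e * q ^ (j + 1) ∣ 2 * q ^ α :=
  mul_dvd_mul (by simpa using pow_dvd_pow 2 (Nat.le_of_lt_succ he)) (pow_dvd_pow q hj)

theorem one_lt_two_pow_mul_pow_succ (hq : 1 < q) (e j : ℕ) : 1 < 2 ^ e * q ^ (j + 1) :=
  one_lt_mul_of_le_of_lt Nat.one_le_two_pow (Nat.one_lt_pow j.succ_ne_zero hq)

theorem two_pow_mul_pow_succ_injOn (hq : q.Prime) (hq2 : q ≠ 2) :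
    Set.InjOn (fun je : ℕ × ℕ => 2 ^ je.2 * q ^ (je.1 + 1)) (range α ×ˢ range 2 : Finset _) := by
  rintro ⟨j, e⟩ hje ⟨j', e'⟩ hje' h
  simp only [mem_coe, mem_product, mem_range] at hje hje'
  obtain ⟨-, he⟩ := hje
  obtain ⟨-, he'⟩ := hje'
  have hodd : ∀ i, ¬Even (q ^ i) := fun i => Nat.not_even_iff_odd.2 (hq.odd_of_ne_two hq2).pow
  have hinj := Nat.pow_right_injective hq.two_le
  interval_cases e <;> interval_cases e' <;> simp only [pow_zero, pow_one, one_mul] at h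
  · simpa using hinj h
  · exact absurd (h ▸ even_two_mul _) (hodd _)
  · exact absurd (h ▸ even_two_mul _) (hodd _)
  · simpa using hinj (Nat.eq_of_mul_eq_mul_left two_pos h)

theorem exists_dvd_two_mul_prime_pow_modEq_iff (hq : q.Prime) (a : ℕ → ℤ) (x : ℤ) :
    (∃ d, d ∣ 2 * q ^ α ∧ 1 < d ∧ x ≡ a d [ZMOD d]) ↔
      x ≡ a 2 [ZMOD (2 : ℕ)] ∨ ∃ j < α, ∃ e < 2,
        x ≡ a (2 ^ e * q ^ (j + 1)) [ZMOD (2 ^ e * q ^ (j + 1) : ℕ)] ∧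
          ¬x ≡ a 2 [ZMOD (2 : ℕ)] := by
  constructor
  · rintro ⟨d, hd, h1d, hx⟩
    by_cases h2 : x ≡ a 2 [ZMOD (2 : ℕ)]
    · exact Or.inl h2
    obtain ⟨k, _, hk, hi, rfl⟩ := Nat.dvd_mul.1 hd
    obtain ⟨i, hiα, rfl⟩ := (Nat.dvd_prime_pow hq).1 hi
    obtain ⟨j, rfl⟩ : ∃ j, i = j + 1 := by
      refine Nat.exists_eq_add_one.2 (Nat.pos_of_ne_zero fun hi0 => ?_)
      subst hi0
      rcases (Nat.dvd_prime Nat.prime_two).1 hk with rfl | rfl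
      · simp at h1d
      · exact h2 (by simpa using hx)
    refine Or.inr ⟨j, hiα, ?_⟩
    rcases (Nat.dvd_prime Nat.prime_two).1 hk with rfl | rfl
    · exact ⟨0, two_pos, by simpa using hx, h2⟩
    · exact ⟨1, one_lt_two, by simpa using hx, h2⟩
  · rintro (h2 | ⟨j, hj, e, he, hx, -⟩)
    · exact ⟨2, dvd_mul_right 2 _, one_lt_two, h2⟩
    · exact ⟨_, two_pow_mul_pow_succ_dvd he hj, one_lt_two_pow_mul_pow_succ hq.one_lt e j, hx⟩

variable {a : ℕ → ℤ}

theorem card_solutionsBelow_two : #(solutionsBelow (2 * q ^ α) a 2) = q ^ α := by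
  rw [solutionsBelow, card_filter_range_intModEq (dvd_mul_right 2 _) (a 2),
    Nat.mul_div_cancel_left _ two_pos]

theorem card_solutionsBelow_sdiff_two (hq : q.Prime) (hq2 : q ≠ 2)
    (hCD : IsCoprimeDisjoint (2 * q ^ α) a) {j e : ℕ} (hj : j < α) (he : e < 2) :
    #(solutionsBelow (2 * q ^ α) a (2 ^ e * q ^ (j + 1)) \ solutionsBelow (2 * q ^ α) a 2) =
      q ^ (α - 1 - j) := by
  have hdiv : 2 * q ^ α / (2 * q ^ (j + 1)) = q ^ (α - 1 - j) := by
    obtain ⟨k, rfl⟩ := Nat.exists_eq_add_of_lt hj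
    rw [show j + k + 1 - 1 - j = k by omega, show j + k + 1 = j + 1 + k by omega, pow_add,
      ← mul_assoc, Nat.mul_div_cancel_left _ (by positivity [hq.pos])]
  interval_cases e
  · simp only [pow_zero, one_mul]
    have hcop : (q ^ (j + 1)).Coprime 2 :=
      (Nat.coprime_two_right.2 (hq.odd_of_ne_two hq2)).pow_left _
    have hsdiff : solutionsBelow (2 * q ^ α) a (q ^ (j + 1)) \ solutionsBelow (2 * q ^ α) a 2 =
        {r ∈ range (2 * q ^ α) | ((r : ℕ) : ℤ) ≡ a (q ^ (j + 1)) [ZMOD (q ^ (j + 1) : ℕ)] ∧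
          ((r : ℕ) : ℤ) ≡ a 2 + 1 [ZMOD (2 : ℕ)]} := by
      ext r
      simp only [solutionsBelow, mem_sdiff, mem_filter, Nat.cast_ofNat, ← Int.not_modEq_two_iff]
      tauto
    rw [hsdiff, card_filter_range_intModEq_and_intModEq hcop
      (by simpa [mul_comm] using two_pow_mul_pow_succ_dvd one_lt_two hj), Nat.mul_comm _ 2, hdiv]
  · have hdisj : Disjoint (solutionsBelow (2 * q ^ α) a (2 ^ 1 * q ^ (j + 1)))
        (solutionsBelow (2 * q ^ α) a 2) :=
      disjoint_filter.2 fun r _ h h₂ => hCD.not_modEq_and_modEq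
        (two_pow_mul_pow_succ_dvd one_lt_two hj) (dvd_mul_right 2 _)
        (one_lt_two_pow_mul_pow_succ hq.one_lt 1 j) one_lt_two
        (by simpa using (one_lt_two_pow_mul_pow_succ hq.one_lt 0 j).ne')
        (by norm_num : 2 ≠ 1) (dvd_mul_of_dvd_left (dvd_pow_self 2 one_ne_zero) _) dvd_rfl _
        ⟨h, h₂⟩
    rw [sdiff_eq_self_of_disjoint hdisj, solutionsBelow,
      card_filter_range_intModEq (two_pow_mul_pow_succ_dvd one_lt_two hj), pow_one, hdiv]

theorem ncard_covered_two_mul_prime_pow (hq : q.Prime) (hq2 : q ≠ 2)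
    (hCD : IsCoprimeDisjoint (2 * q ^ α) a) :
    {r : ℕ | r < 2 * q ^ α ∧ ∃ d, d ∣ 2 * q ^ α ∧ 1 < d ∧ (r : ℤ) ≡ a d [ZMOD d]}.ncard =
      q ^ α + 2 * ∑ i ∈ range α, q ^ i := by
  set S := solutionsBelow (2 * q ^ α) a
  -- `m` enumerates the divisors `> 1` of `2 * q ^ α` other than `2`
  set m : ℕ × ℕ → ℕ := fun je => 2 ^ je.2 * q ^ (je.1 + 1)
  have hdecomp : {r : ℕ | r < 2 * q ^ α ∧ ∃ d, d ∣ 2 * q ^ α ∧ 1 < d ∧ (r : ℤ) ≡ a d [ZMOD d]} =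
      ↑(S 2 ∪ (range α ×ˢ range 2).biUnion fun je => S (m je) \ S 2) := by
    ext r
    simp only [S, m, solutionsBelow, Set.mem_ofPred_eq, coe_union, coe_biUnion, coe_filter,
      Set.mem_union, Set.mem_iUnion, coe_sdiff, Set.mem_sdiff, mem_coe, mem_product, mem_range,
      exists_dvd_two_mul_prime_pow_modEq_iff hq, Prod.exists, exists_prop]
    aesop
  have hpairwise : ((range α ×ˢ range 2 : Finset _) : Set (ℕ × ℕ)).PairwiseDisjoint
      fun je => S (m je) \ S 2 := by
    intro je hje je' hje' hne
    simp only [coe_product, coe_range, Set.mem_prod, Set.mem_Iio] at hje hje'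
    refine Disjoint.mono sdiff_le sdiff_le (disjoint_filter.2 fun r _ h h' => ?_)
    exact hCD.not_modEq_and_modEq (two_pow_mul_pow_succ_dvd hje.2 hje.1)
      (two_pow_mul_pow_succ_dvd hje'.2 hje'.1) (one_lt_two_pow_mul_pow_succ hq.one_lt _ _)
      (one_lt_two_pow_mul_pow_succ hq.one_lt _ _)
      ((two_pow_mul_pow_succ_injOn hq hq2).ne (by simpa using hje) (by simpa using hje') hne)
      hq.ne_one (dvd_mul_of_dvd_right (dvd_pow_self q (Nat.succ_ne_zero _)) _)
      (dvd_mul_of_dvd_right (dvd_pow_self q (Nat.succ_ne_zero _)) _) _ ⟨h, h'⟩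
  rw [hdecomp, Set.ncard_coe_finset,
    card_union_of_disjoint ((disjoint_biUnion_right _ _ _).2 fun _ _ => disjoint_sdiff),
    card_biUnion hpairwise, card_solutionsBelow_two,
    sum_congr rfl fun je hje => card_solutionsBelow_sdiff_two hq hq2 hCD
      (mem_range.1 (mem_product.1 hje).1) (mem_range.1 (mem_product.1 hje).2),
    sum_product, ← sum_range_reflect (q ^ ·) α, mul_sum]
  simp [two_mul]

end TwoMulPrimePow

theorem two_q_pow_not_covering_general (q : ℕ) (hq : q.Prime) (hq2 : q ≠ 2)
    (α : ℕ) (a : ℕ → ℤ)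
    (hCD : ∀ d d' : ℕ, d ∣ 2 * q ^ α → d' ∣ 2 * q ^ α → 1 < d → 1 < d' → d ≠ d' →
      (∃ x : ℤ, x ≡ a d [ZMOD (d : ℤ)] ∧ x ≡ a d' [ZMOD (d' : ℤ)]) →
      Nat.gcd d d' = 1) :
    {r : ℕ | r < 2 * q ^ α ∧
        ∃ d : ℕ, d ∣ 2 * q ^ α ∧ 1 < d ∧ (r : ℤ) ≡ a d [ZMOD (d : ℤ)]}.ncard
      = q ^ α + 2 * ((q ^ α - 1) / (q - 1)) ∧
    q ^ α + 2 * ((q ^ α - 1) / (q - 1)) < 2 * q ^ α ∧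
    ¬ ∀ x : ℤ, ∃ d : ℕ, d ∣ 2 * q ^ α ∧ 1 < d ∧ x ≡ a d [ZMOD (d : ℤ)] := by
  rw [← Nat.geomSum_eq hq.two_le]
  have hcard := ncard_covered_two_mul_prime_pow hq hq2 hCD
  have hlt : q ^ α + 2 * ∑ i ∈ range α, q ^ i < 2 * q ^ α := by
    have := two_mul_geomSum_lt_pow (hq.two_le.lt_of_ne' hq2) α
    omega
  refine ⟨hcard, hlt, fun hcov => ?_⟩
  have hall : {r : ℕ | r < 2 * q ^ α ∧ ∃ d, d ∣ 2 * q ^ α ∧ 1 < d ∧ (r : ℤ) ≡ a d [ZMOD d]} =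
      ↑(range (2 * q ^ α)) := by
    ext r
    simp [hcov]
  rw [hall, Set.ncard_coe_finset, card_range] at hcard
  omega

/-- Let `q` be an odd prime, `α ≥ 1`, `n = 2 * q^α`. For every CD congruence set
`{a d mod d : d ∣ n, d > 1}` whose moduli are the divisors of `n` greater than `1`,
the number of residue classes mod `n` covered equals `q^α + 2*(q^α - 1)/(q - 1)`,
which is strictly less than `n`; in particular `A` is not a covering system. -/
theorem two_q_pow_not_covering (q : ℕ) (hq : q.Prime) (hq2 : q ≠ 2)
    (α : ℕ) (hα : 1 ≤ α) (a : ℕ → ℤ)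
    (hCD : ∀ d d' : ℕ, d ∣ 2 * q ^ α → d' ∣ 2 * q ^ α → 1 < d → 1 < d' → d ≠ d' →
      (∃ x : ℤ, x ≡ a d [ZMOD (d : ℤ)] ∧ x ≡ a d' [ZMOD (d' : ℤ)]) →
      Nat.gcd d d' = 1) :
    {r : ℕ | r < 2 * q ^ α ∧
        ∃ d : ℕ, d ∣ 2 * q ^ α ∧ 1 < d ∧ (r : ℤ) ≡ a d [ZMOD (d : ℤ)]}.ncard
      = q ^ α + 2 * ((q ^ α - 1) / (q - 1)) ∧
    q ^ α + 2 * ((q ^ α - 1) / (q - 1)) < 2 * q ^ α ∧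
    ¬ ∀ x : ℤ, ∃ d : ℕ, d ∣ 2 * q ^ α ∧ 1 < d ∧ x ≡ a d [ZMOD (d : ℤ)] :=
  two_q_pow_not_covering_general q hq hq2 α a hCD
end

section
/- Let n = p·q_1^{α_1}···q_s^{α_s} where p < q_1 < ... < q_s are primes, α_i ≥ 1 for all i, and 0 ≤ s ≤ p − 1 (case 1 of a non-intersecting n with n odd), or n = 2. Then any congruence set {a_d mod d : d | n, d > 1} whose moduli are exactly the divisors of n greater than 1 is not a covering system. -/
/-!
Suppose the classes `a_d mod d`, `d ∣ n`, `d > 1`, cover `ℤ`. Each class meets `[0, n)` in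
exactly `n / d` points, so `n ≤ ∑_{d ∣ n, d > 1} n / d = σ(n) - n`: `n` is not deficient.

Conversely `n = p ∏ q_i ^ α_i` is deficient. The abundancy index `σ(n) / n` is multiplicative,
equals `(p + 1) / p` at `p` and is `< q / (q - 1)` at every power of a prime `q`. Since `p` and
the `q_i` are odd, `q_i ≥ p + 2 + i`, so `∏ q_i / (q_i - 1)` is dominated by the telescoping
product `∏_{i < s} (p + 2 + i) / (p + 1 + i) = (p + 1 + s) / (p + 1)`, whence
`σ(n) / n < (p + 1 + s) / p ≤ 2`.
-/

open Finset Function ArithmeticFunction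
open scoped ArithmeticFunction.sigma

lemma div_sub_one_le_div_sub_one {K : Type*} [Field K] [LinearOrder K] [IsStrictOrderedRing K]
    {x y : K} (hy : 1 < y) (hyx : y ≤ x) : x / (x - 1) ≤ y / (y - 1) := by
  rw [div_le_div_iff₀ (by linarith) (by linarith)]
  linarith

lemma prod_range_add_one_div {K : Type*} [Field K] [LinearOrder K] [IsStrictOrderedRing K]
    {c : K} (hc : 0 < c) (s : ℕ) : ∏ i ∈ range s, (c + i + 1) / (c + i) = (c + s) / c := by
  induction s with
  | zero => simp [hc.ne']
  | succ s ih =>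
    have : c + s ≠ 0 := by positivity
    rw [prod_range_succ, ih]
    push_cast
    field_simp
    ring

lemma StrictMono.add_val_lt_apply {s m : ℕ} {q : Fin s → ℕ} (hq : StrictMono q)
    (hm : ∀ i, m < q i) (i : Fin s) : m + i < q i := by
  obtain ⟨i, hi⟩ := i
  induction i with
  | zero => exact hm _
  | succ i ih =>
    have hlt : q ⟨i, by omega⟩ < q ⟨i + 1, hi⟩ := hq (Nat.lt_succ_self i)
    have := ih (by omega)
    dsimp only at this ⊢
    omega

lemma prod_div_sub_one_le_of_strictMono {s m : ℕ} (hm : 0 < m) {q : Fin s → ℕ}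
    (hq : StrictMono q) (hmq : ∀ i, m < q i) :
    ∏ i, (q i : ℚ) / (q i - 1) ≤ (m + s) / m := calc
  ∏ i, (q i : ℚ) / (q i - 1) ≤ ∏ i : Fin s, ((m + i + 1 : ℚ) / (m + i)) := by
    refine prod_le_prod (fun i _ => ?_) fun i _ => ?_
    · have : (1 : ℚ) < q i := by exact_mod_cast lt_of_le_of_lt hm (hmq i)
      exact div_nonneg (by positivity) (by linarith)
    · have hqi : (m + i + 1 : ℚ) ≤ q i := by exact_mod_cast hq.add_val_lt_apply hmq i
      have hm1 : (1 : ℚ) ≤ m := by exact_mod_cast hm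
      simpa using div_sub_one_le_div_sub_one (by linarith [(i : ℕ).cast_nonneg (α := ℚ)]) hqi
  _ = (m + s) / m := by
    rw [Fin.prod_univ_eq_prod_range (fun i => (m + i + 1 : ℚ) / (m + i)),
      prod_range_add_one_div (by exact_mod_cast hm)]

namespace Nat

lemma card_filter_range_modEq_s17 {n d : ℕ} (hd : d ∣ n) (hd0 : d ≠ 0) (v : ℕ) :
    #{x ∈ range n | x ≡ v [MOD d]} = n / d := by
  rw [← count_eq_card_filter_range, count_modEq_card _ (pos_of_ne_zero hd0),
    mod_eq_zero_of_dvd hd]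
  simp

lemma modEq_toNat_emod_of_intModEq {x d : ℕ} {c : ℤ} (hd : d ≠ 0) (h : x ≡ c [ZMOD d]) :
    x ≡ (c % d).toNat [MOD d] := by
  rw [← Int.natCast_modEq_iff, Int.toNat_of_nonneg (Int.emod_nonneg _ (by exact_mod_cast hd))]
  exact h.trans (Int.mod_modEq c d).symm

lemma sum_div_divisors_erase_one (n : ℕ) :
    ∑ d ∈ n.divisors.erase 1, n / d = ∑ d ∈ n.properDivisors, d := by
  rcases eq_or_ne n 0 with rfl | hn
  · simp
  have h := add_sum_erase _ (fun d => n / d) (one_mem_divisors.mpr hn)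
  have h' : ∑ d ∈ n.divisors, n / d = ∑ d ∈ n.divisors, d := sum_div_divisors n id
  rw [h', sum_divisors_eq_sum_properDivisors_add_self, Nat.div_one] at h
  omega

theorem Deficient.not_covering {n : ℕ} (hn : n.Deficient) (a : ℕ → ℤ) :
    ¬ ∀ x : ℤ, ∃ d : ℕ, d ∣ n ∧ 1 < d ∧ x ≡ a d [ZMOD d] := by
  intro hcover
  let v (d : ℕ) : ℕ := (a d % d).toNat
  have hsub : range n ⊆
      (n.divisors.erase 1).biUnion fun d => {x ∈ range n | x ≡ v d [MOD d]} := by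
    intro x hx
    obtain ⟨d, hdn, hd, hxd⟩ := hcover x
    simp only [mem_biUnion, mem_filter, mem_erase, mem_divisors]
    exact ⟨d, ⟨hd.ne', hdn, hn.pos.ne'⟩, hx, modEq_toNat_emod_of_intModEq (by omega) hxd⟩
  have : n ≤ ∑ d ∈ n.properDivisors, d := calc
    n = #(range n) := (card_range n).symm
    _ ≤ ∑ d ∈ n.divisors.erase 1, #{x ∈ range n | x ≡ v d [MOD d]} :=
      (card_le_card hsub).trans card_biUnion_le
    _ = ∑ d ∈ n.divisors.erase 1, n / d := sum_congr rfl fun d hd =>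
      card_filter_range_modEq_s17 (dvd_of_mem_divisors (mem_of_mem_erase hd))
        (pos_of_mem_divisors (mem_of_mem_erase hd)).ne' _
    _ = ∑ d ∈ n.properDivisors, d := sum_div_divisors_erase_one n
  exact Nat.not_lt_of_ge this hn

lemma abundancyIndex_eq_pdiv (n : ℕ) :
    n.abundancyIndex =
      (σ 1 : ArithmeticFunction ℚ).pdiv (ArithmeticFunction.id : ArithmeticFunction ℚ) n := by
  simp [abundancyIndex, pdiv_apply, sigma_one_apply]

lemma isMultiplicative_sigma_pdiv_id :
    ((σ 1 : ArithmeticFunction ℚ).pdiv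
      (ArithmeticFunction.id : ArithmeticFunction ℚ)).IsMultiplicative :=
  isMultiplicative_sigma.natCast.pdiv isMultiplicative_id.natCast

lemma abundancyIndex_mul {m n : ℕ} (h : m.Coprime n) :
    (m * n).abundancyIndex = m.abundancyIndex * n.abundancyIndex := by
  simp only [abundancyIndex_eq_pdiv, isMultiplicative_sigma_pdiv_id.map_mul_of_coprime h]

lemma abundancyIndex_prod {ι : Type*} (s : Finset ι) (f : ι → ℕ)
    (hs : (s : Set ι).Pairwise (Coprime on f)) :
    (∏ i ∈ s, f i).abundancyIndex = ∏ i ∈ s, (f i).abundancyIndex := by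
  simp only [abundancyIndex_eq_pdiv, isMultiplicative_sigma_pdiv_id.map_prod f s hs]

lemma abundancyIndex_pos {n : ℕ} (hn : n ≠ 0) : 0 < n.abundancyIndex := by
  have : 0 < ∑ i ∈ n.divisors, i :=
    sum_pos (fun i hi => pos_of_mem_divisors hi) (nonempty_divisors.mpr hn)
  rw [abundancyIndex]
  exact _root_.div_pos (by exact_mod_cast this) (by positivity)

lemma Prime.abundancyIndex {p : ℕ} (hp : p.Prime) : p.abundancyIndex = (p + 1) / p := by
  rw [Nat.abundancyIndex, hp.sum_divisors]
  push_cast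
  ring

lemma Prime.abundancyIndex_pow_lt {q : ℕ} (hq : q.Prime) (k : ℕ) :
    (q ^ k).abundancyIndex < q / (q - 1) := by
  have hq1 : (1 : ℚ) < q := by exact_mod_cast hq.one_lt
  rw [Nat.abundancyIndex, sum_divisors_prime_pow hq]
  push_cast
  rw [geom_sum_eq hq1.ne', div_div, div_lt_div_iff₀ (by positivity) (by linarith), pow_succ]
  nlinarith [pow_pos (by linarith : (0 : ℚ) < q) k]

lemma deficient_iff_abundancyIndex_lt_two {n : ℕ} (hn : n ≠ 0) :
    n.Deficient ↔ n.abundancyIndex < 2 := by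
  rw [Deficient, Nat.abundancyIndex, div_lt_iff₀ (by positivity),
    sum_divisors_eq_sum_properDivisors_add_self]
  norm_cast
  omega

theorem deficient_prime_mul_prod_prime_pow {p s : ℕ} {q α : Fin s → ℕ} (hp : p.Prime)
    (hq : ∀ i, (q i).Prime) (hpq : ∀ i, p + 1 < q i) (hmono : StrictMono q) (hs : s < p) :
    (p * ∏ i, q i ^ α i).Deficient := by
  rcases s.eq_zero_or_pos with rfl | hs0
  · simpa using hp.deficient
  have : Nonempty (Fin s) := ⟨⟨0, hs0⟩⟩
  have hp0 : (0 : ℚ) < p := by exact_mod_cast hp.pos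
  have hcop : p.Coprime (∏ i, q i ^ α i) := Coprime.prod_right fun i _ =>
    ((coprime_primes hp (hq i)).mpr (by have := hpq i; omega)).pow_right _
  have hpair : ((univ : Finset (Fin s)) : Set (Fin s)).Pairwise (Coprime on fun i => q i ^ α i) :=
    fun i _ j _ hij => ((coprime_primes (hq i) (hq j)).mpr (hmono.injective.ne hij)).pow _ _
  rw [deficient_iff_abundancyIndex_lt_two
      (mul_ne_zero hp.ne_zero (prod_ne_zero_iff.mpr fun i _ => pow_ne_zero _ (hq i).ne_zero)),
    abundancyIndex_mul hcop, abundancyIndex_prod _ _ hpair, hp.abundancyIndex]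
  calc (p + 1) / p * ∏ i, (q i ^ α i).abundancyIndex
      < (p + 1) / p * ∏ i, (q i : ℚ) / (q i - 1) := by
        refine mul_lt_mul_of_pos_left ?_ (by positivity)
        exact prod_lt_prod_of_nonempty
          (fun i _ => abundancyIndex_pos (pow_ne_zero _ (hq i).ne_zero))
          (fun i _ => (hq i).abundancyIndex_pow_lt _) univ_nonempty
    _ ≤ (p + 1) / p * ((p + 1 + s) / (p + 1)) := by
        gcongr
        exact_mod_cast prod_div_sub_one_le_of_strictMono (m := p + 1) (by omega) hmono hpq
    _ ≤ 2 := by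
        have hsp : (s : ℚ) + 1 ≤ p := by exact_mod_cast hs
        rw [_root_.div_mul_div_comm, div_le_iff₀ (by positivity)]
        nlinarith

end Nat

/-- Let `n = p * q 1 ^ α 1 * ⋯ * q s ^ α s` with `p < q 1 < ⋯ < q s` primes, `α i ≥ 1`,
`0 ≤ s ≤ p - 1`, and `n` odd — or `n = 2`. Then no congruence set
`{a d mod d : d ∣ n, d > 1}` whose moduli are the divisors of `n` greater than `1`
is a covering system. -/
theorem case1_not_covering (n : ℕ)
    (h : (∃ (p s : ℕ) (q α : Fin s → ℕ),
        p.Prime ∧ Odd n ∧ (∀ i, (q i).Prime) ∧ (∀ i, p < q i) ∧ StrictMono q ∧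
        (∀ i, 1 ≤ α i) ∧ s ≤ p - 1 ∧ n = p * ∏ i, q i ^ α i) ∨ n = 2)
    (a : ℕ → ℤ) :
    ¬ ∀ x : ℤ, ∃ d : ℕ, d ∣ n ∧ 1 < d ∧ x ≡ a d [ZMOD (d : ℤ)] := by
  refine Nat.Deficient.not_covering ?_ a
  rcases h with ⟨p, s, q, α, hp, hodd, hq, hpq, hmono, -, hs, rfl⟩ | rfl
  · have hp_odd : Odd p := hodd.of_dvd_nat (dvd_mul_right p _)
    have hq_gap : ∀ i, p + 1 < q i := fun i => by
      have hq_odd : Odd (q i) := (hq i).odd_of_ne_two (by have := hp.two_le; have := hpq i; omega)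
      have hne : q i ≠ p + 1 := fun h => Nat.odd_add_one.mp (h ▸ hq_odd) hp_odd
      exact Nat.lt_of_le_of_ne (hpq i) hne.symm
    exact Nat.deficient_prime_mul_prod_prime_pow hp hq hq_gap hmono (by have := hp.two_le; omega)
  · exact Nat.prime_two.deficient
end

section
/- Let n = p^{α_p}·q_1^{α_1}···q_s^{α_s} where p < q_1 < ... < q_s are primes, α_p ≥ 2, α_i ≥ 1 for all i, and 0 ≤ s ≤ p − 2. Then any congruence set {a_d mod d : d | n, d > 1} whose moduli are exactly the divisors of n greater than 1 is not a covering system. -/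
open Finset

private lemma geom_mul (q : ℕ) (hq : 1 ≤ q) : ∀ k, (q - 1) * ∑ i ∈ range k, q ^ i = q ^ k - 1 := by
  intro k
  induction k with
  | zero => simp
  | succ k ih =>
    rw [sum_range_succ, Nat.mul_add, ih, pow_succ]
    have h1 : 1 ≤ q ^ k := Nat.one_le_pow _ _ hq
    have h2 : q ^ k ≤ q ^ k * q := Nat.le_mul_of_pos_right _ hq
    have : (q - 1) * q ^ k = q ^ k * q - q ^ k := by
      rw [Nat.sub_mul, one_mul, mul_comm]
    omega

/-- sum of divisors of a prime power -/
private lemma sd_pp {q : ℕ} (hq : q.Prime) (k : ℕ) :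
    (q - 1) * ∑ d ∈ (q ^ k).divisors, d = q ^ (k + 1) - 1 := by
  rw [Nat.sum_divisors_prime_pow hq]
  exact geom_mul q hq.one_lt.le _

private lemma mono_bound {s p : ℕ} (q : Fin s → ℕ) (hpq : ∀ i, p < q i) (hmono : StrictMono q) :
    ∀ v (hv : v < s), p + v < q ⟨v, hv⟩ := by
  intro v
  induction v with
  | zero => intro hv; simpa using hpq ⟨0, hv⟩
  | succ v ih =>
    intro hv
    have h1 := ih (by omega)
    have h2 : q ⟨v, by omega⟩ < q ⟨v + 1, hv⟩ := hmono (by simp [Fin.lt_def])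
    omega

private lemma sigma_lt (p : ℕ) (hp : p.Prime) :
    ∀ (s : ℕ) (q : Fin s → ℕ), (∀ i, (q i).Prime) → (∀ i, p < q i) → StrictMono q →
    ∀ (αp : ℕ), 1 ≤ αp → ∀ (α : Fin s → ℕ),
    (p - 1) * ∑ d ∈ (p ^ αp * ∏ i, q i ^ α i).divisors, d <
      (p + s) * (p ^ αp * ∏ i, q i ^ α i) := by
  intro s
  induction s with
  | zero =>
    intro q _ _ _ αp hαp α
    simp only [Finset.univ_eq_empty, Finset.prod_empty, mul_one, Nat.add_zero]
    rw [sd_pp hp αp]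
    have h1 : 1 ≤ p ^ (αp + 1) := Nat.one_le_pow _ _ hp.pos
    have h2 : p ^ (αp + 1) = p * p ^ αp := by rw [pow_succ, mul_comm]
    omega
  | succ s ih =>
    intro q hq hpq hmono αp hαp α
    have hcastmono : StrictMono (fun i : Fin s => q i.castSucc) :=
      fun i j h => hmono (by simp only [Fin.castSucc_lt_castSucc_iff]; exact h)
    set Q := q (Fin.last s) with hQ
    set A := α (Fin.last s) with hA
    have hQp : Q.Prime := hq _
    have hQgt : p + s < Q := by
      have := mono_bound q hpq hmono s (by omega)
      exact this
    rw [Fin.prod_univ_castSucc, ← mul_assoc, ← mul_assoc]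
    set N := p ^ αp * ∏ i : Fin s, q i.castSucc ^ α i.castSucc with hN
    have hNpos : 0 < N := by
      apply Nat.mul_pos (Nat.pow_pos hp.pos)
      exact Finset.prod_pos fun i _ => Nat.pow_pos (hq _).pos
    have hcop : N.Coprime (Q ^ A) := by
      apply Nat.Coprime.pow_right
      apply Nat.Coprime.mul
      · exact ((Nat.coprime_primes hp hQp).mpr (by have := hpq (Fin.last s); omega)).pow_left _
      · apply Nat.Coprime.prod_left
        intro i _
        have hne : q i.castSucc ≠ Q := ne_of_lt (hmono (Fin.castSucc_lt_last i))
        exact ((Nat.coprime_primes (hq _) hQp).mpr hne).pow_left _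
    rw [hcop.sum_divisors_mul]
    set SN := ∑ d ∈ N.divisors, d with hSN
    set SQ := ∑ d ∈ (Q ^ A).divisors, d with hSQ
    have hSQpos : 0 < SQ := by
      apply Finset.sum_pos (fun d hd => Nat.pos_of_mem_divisors hd)
      exact ⟨1, Nat.one_mem_divisors.mpr (pow_ne_zero _ hQp.pos.ne')⟩
    have ihlt : (p - 1) * SN < (p + s) * N := ih _ (fun i => hq _) (fun i => hpq _) hcastmono αp hαp _
    have key : (p + s) * SQ ≤ (p + s + 1) * Q ^ A := by
      have hc : (Q - 1) * ((p + s) * SQ) ≤ (Q - 1) * ((p + s + 1) * Q ^ A) := by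
        rw [show (Q-1) * ((p+s) * SQ) = (p+s) * ((Q-1) * SQ) by ring, sd_pp hQp A]
        rw [show (Q-1) * ((p+s+1) * Q ^ A) = (p+s+1) * ((Q-1) * Q ^ A) by ring]
        have hx1 : 1 ≤ Q ^ A := Nat.one_le_pow _ _ hQp.pos
        have hxy : (p + s + 1) * Q ^ A ≤ Q ^ (A + 1) := by
          rw [pow_succ, mul_comm (Q ^ A) Q]
          exact Nat.mul_le_mul_right _ (by omega)
        have he : (Q - 1) * Q ^ A = Q ^ (A + 1) - Q ^ A := by
          rw [Nat.sub_mul, one_mul, pow_succ, mul_comm]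
        rw [he]
        set m := p + s
        set x := Q ^ A
        set y := Q ^ (A + 1)
        have hyx : x ≤ y := le_trans (by nlinarith) hxy
        zify [hx1, hyx, show 1 ≤ y from le_trans hx1 hyx]
        nlinarith
      exact Nat.le_of_mul_le_mul_left hc (by have := hQp.one_lt; omega)
    calc (p - 1) * (SN * SQ) = ((p - 1) * SN) * SQ := by ring
      _ < ((p + s) * N) * SQ := by exact Nat.mul_lt_mul_of_lt_of_le ihlt le_rfl hSQpos
      _ = N * ((p + s) * SQ) := by ring
      _ ≤ N * ((p + s + 1) * Q ^ A) := Nat.mul_le_mul_left _ key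
      _ = (p + (s + 1)) * N * Q ^ A := by ring

/-- Let `n = p ^ αp * q 1 ^ α 1 * ⋯ * q s ^ α s` with `p < q 1 < ⋯ < q s` primes,
`αp ≥ 2`, `α i ≥ 1`, and `0 ≤ s ≤ p - 2`. Then no congruence set
`{a d mod d : d ∣ n, d > 1}` whose moduli are the divisors of `n` greater than `1`
is a covering system. -/
theorem case2_not_covering (p s : ℕ) (hp : p.Prime)
    (q : Fin s → ℕ) (hq : ∀ i, (q i).Prime) (hpq : ∀ i, p < q i) (hmono : StrictMono q)
    (αp : ℕ) (hαp : 2 ≤ αp) (α : Fin s → ℕ) (hα : ∀ i, 1 ≤ α i) (hs : s ≤ p - 2)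
    (n : ℕ) (hn : n = p ^ αp * ∏ i, q i ^ α i) (a : ℕ → ℤ) :
    ¬ ∀ x : ℤ, ∃ d : ℕ, d ∣ n ∧ 1 < d ∧ x ≡ a d [ZMOD (d : ℤ)] := by
  intro H
  have hp2 := hp.two_le
  have hnpos : 0 < n := by
    rw [hn]
    exact Nat.mul_pos (Nat.pow_pos hp.pos)
      (Finset.prod_pos fun i _ => Nat.pow_pos (hq i).pos)
  set D := n.divisors.erase 1 with hD
  have cover : Finset.range n ⊆
      D.biUnion (fun d => (Finset.range n).filter (fun x => x ≡ ((a d % d).toNat) [MOD d])) := by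
    intro x hx
    obtain ⟨d, hdvd, hd1, hmod⟩ := H (x : ℤ)
    have hd0 : 0 < d := by omega
    refine Finset.mem_biUnion.mpr ⟨d, ?_, ?_⟩
    · exact Finset.mem_erase.mpr ⟨by omega, Nat.mem_divisors.mpr ⟨hdvd, hnpos.ne'⟩⟩
    · refine Finset.mem_filter.mpr ⟨hx, ?_⟩
      have hint : (x : ℤ) % (d : ℤ) = a d % d := hmod
      have hdz : (d : ℤ) ≠ 0 := by exact_mod_cast hd0.ne'
      have hnn : (0 : ℤ) ≤ a d % d := Int.emod_nonneg _ hdz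
      have hlt : a d % d < (d : ℤ) := Int.emod_lt_of_pos _ (by exact_mod_cast hd0)
      have h1 : ((x % d : ℕ) : ℤ) = a d % d := by
        push_cast
        exact hint
      have h2 : ((a d % d).toNat : ℤ) = a d % d := Int.toNat_of_nonneg hnn
      have h3 : (x % d : ℕ) = (a d % d).toNat := by exact_mod_cast h1.trans h2.symm
      have h4 : (a d % d).toNat < d := by
        have : ((a d % d).toNat : ℤ) < (d : ℤ) := h2 ▸ hlt
        exact_mod_cast this
      show x % d = (a d % d).toNat % d
      rw [Nat.mod_eq_of_lt h4]
      exact h3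
  have hcard : n ≤ ∑ d ∈ D, n / d := by
    calc n = (Finset.range n).card := (Finset.card_range n).symm
      _ ≤ (D.biUnion fun d =>
            (Finset.range n).filter (fun x => x ≡ ((a d % d).toNat) [MOD d])).card :=
          Finset.card_le_card cover
      _ ≤ ∑ d ∈ D, ((Finset.range n).filter
            (fun x => x ≡ ((a d % d).toNat) [MOD d])).card := Finset.card_biUnion_le
      _ ≤ ∑ d ∈ D, n / d := by
          apply Finset.sum_le_sum
          intro d hd
          obtain ⟨hne1, hdiv⟩ := Finset.mem_erase.mp hd
          obtain ⟨hdvd, -⟩ := Nat.mem_divisors.mp hdiv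
          have hd0 : 0 < d := Nat.pos_of_mem_divisors hdiv
          rw [← Nat.count_eq_card_filter_range, Nat.count_modEq_card _ hd0]
          have hmod0 : n % d = 0 := Nat.mod_eq_zero_of_dvd hdvd
          simp [hmod0]
  have h1div : (1 : ℕ) ∈ n.divisors := Nat.one_mem_divisors.mpr hnpos.ne'
  have hsum : n + ∑ d ∈ D, n / d = ∑ d ∈ n.divisors, d := by
    have h := Finset.add_sum_erase n.divisors (fun d => n / d) h1div
    have h2 : ∑ d ∈ n.divisors, n / d = ∑ d ∈ n.divisors, d := by
      have := Nat.sum_div_divisors n id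
      simpa using this
    simpa [h2] using h
  have h2n : 2 * n ≤ ∑ d ∈ n.divisors, d := by omega
  have hσ : (p - 1) * ∑ d ∈ n.divisors, d < (p + s) * n := by
    rw [hn]
    exact sigma_lt p hp s q hq hpq hmono αp (by omega) α
  have hps : p + s ≤ 2 * (p - 1) := by omega
  have hA : (p - 1) * (2 * n) ≤ (p - 1) * ∑ d ∈ n.divisors, d :=
    Nat.mul_le_mul_left _ h2n
  have hB : (p + s) * n ≤ (2 * (p - 1)) * n := Nat.mul_le_mul_right _ hps
  have : (p - 1) * (2 * n) < (2 * (p - 1)) * n := lt_of_le_of_lt hA (lt_of_lt_of_le hσ hB)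
  have : (p - 1) * (2 * n) = (2 * (p - 1)) * n := by ring
  omega
end
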